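/- arXiv:2204.02535 — 5 statements merged into one kernel-verified Lean document; each statement's English description precedes it below -/
import Mathlib

section
/- For every k ≥ 1, the generating function for the number d_k(n) of k-elongated partition diamonds of n satisfies Σ_{n≥0} d_k(n) qⁿ = (q²;q²)_∞^k / (q;q)_∞^{3k+1}. -/
/-- A `k`-elongated partition diamond, encoded 1-indexed as a finitely supported function
`π : ℕ →₀ ℕ` (so trailing zero building blocks are identified).  For each building block
`i ≥ 0` (with `b = i(2k+1)`), the chain condition
`π_{b+1} ⪰ (π_{b+2}, π_{b+3}) ⪰ ⋯ ⪰ (π_{b+2k}, π_{b+2k+1}) ⪰ π_{b+2k+2}` holds, where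
`(a₁,…,aₘ) ⪰ (b₁,…,bₙ)` means `min aᵢ ≥ max bⱼ`. -/
def IsDiamond (k : ℕ) (π : ℕ →₀ ℕ) : Prop :=
  π 0 = 0 ∧
  ∀ i : ℕ,
    (π (i * (2 * k + 1) + 1) ≥
      max (π (i * (2 * k + 1) + 2)) (π (i * (2 * k + 1) + 3))) ∧
    (∀ j, 1 ≤ j → j < k →
      min (π (i * (2 * k + 1) + 2 * j)) (π (i * (2 * k + 1) + 2 * j + 1)) ≥
        max (π (i * (2 * k + 1) + 2 * j + 2)) (π (i * (2 * k + 1) + 2 * j + 3))) ∧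
    min (π (i * (2 * k + 1) + 2 * k)) (π (i * (2 * k + 1) + 2 * k + 1)) ≥
      π ((i + 1) * (2 * k + 1) + 1)

/-- The weight of a diamond: the sum of its entries at positions
`1, 2k+2, 4k+3, …`, i.e. positions `≡ 1 (mod 2k+1)`. -/
def diamondWeight (k : ℕ) (π : ℕ →₀ ℕ) : ℕ :=
  ∑ m ∈ π.support, if 1 ≤ m ∧ (m - 1) % (2 * k + 1) = 0 then π m else 0

/-- The number of `k`-elongated partition diamonds of `n`. -/
noncomputable def diamondCount (k n : ℕ) : ℕ :=
  Nat.card {π : ℕ →₀ ℕ // IsDiamond k π ∧ diamondWeight k π = n}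

/-!
Call `π (i * (2 * k + 1) + 1)` the `i`-th anchor of a diamond. The chain condition makes the
anchors decrease and squeezes every entry of block `i` between anchors `i + 1` and `i`, so the
weight is the sum of the anchors. If anchor `t + 1` vanishes, subtracting the `t`-th anchor `m`
from every entry up to it and erasing the pairs of block `t` leaves a diamond whose anchor `t`
vanishes; this is a bijection onto pairs (chain of `k` pairs bounded by `m`, smaller diamond) and
it lowers the weight by `(t + 1) m`. Hence the diamonds whose anchor `t` vanishes have generating
function `∏_{1 ≤ i ≤ t} G_k(q^i)`, where `G_k(x) = Σ_m #{chains of k pairs bounded by m} x^m`.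
Removing the first pair `(x, y)` of a chain leaves a chain bounded by `min x y`, and exactly
`2 r + 1` pairs bounded by `m` have minimum `m - r`; so `G_{j+1} = G_j (1 + x) / (1 - x)^2`,
`G_k = (1 + x)^k / (1 - x)^(2k+1)`, and `G_k(x) (1 - x)^(3k+1) = (1 - x^2)^k`.
-/

open PowerSeries Finset

section WeightedCount

variable {α β : Type*}

-- `Nat.card` of an infinite fibre is `0`, so the product formula below needs finite fibres.
noncomputable def weightGenFun (w : α → ℕ) : PowerSeries ℤ :=
  PowerSeries.mk fun n => (Nat.card {a // w a = n} : ℤ)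

def fiberCongr {wα : α → ℕ} {wβ : β → ℕ} (e : α ≃ β) (h : ∀ a, wβ (e a) = wα a) (n : ℕ) :
    {a // wα a = n} ≃ {b // wβ b = n} :=
  e.subtypeEquiv fun a => by rw [h]

theorem weightGenFun_congr {wα : α → ℕ} {wβ : β → ℕ} (e : α ≃ β) (h : ∀ a, wβ (e a) = wα a) :
    weightGenFun wβ = weightGenFun wα := by
  ext n
  simp only [weightGenFun, coeff_mk]
  exact congrArg _ (Nat.card_congr (fiberCongr e h n)).symm

theorem weightGenFun_eq_one [Subsingleton α] {w : α → ℕ} (a : α) (h : w a = 0) :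
    weightGenFun w = 1 := by
  ext n
  simp only [weightGenFun, coeff_mk, coeff_one]
  split_ifs with hn
  · subst hn
    simp only [Nat.cast_eq_one, Nat.card_eq_one_iff_unique]
    exact ⟨inferInstance, ⟨⟨a, h⟩⟩⟩
  · have : IsEmpty {a // w a = n} := ⟨fun b => hn (by rw [← b.2, Subsingleton.elim b.1 a, h])⟩
    simp

def fiberProdEquiv (wα : α → ℕ) (wβ : β → ℕ) (n : ℕ) :
    {p : α × β // wα p.1 + wβ p.2 = n} ≃
      Σ ij : antidiagonal n, {a // wα a = ij.1.1} × {b // wβ b = ij.1.2} where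
  toFun p := ⟨⟨(wα p.1.1, wβ p.1.2), mem_antidiagonal.2 p.2⟩, ⟨p.1.1, rfl⟩, ⟨p.1.2, rfl⟩⟩
  invFun x := ⟨(x.2.1, x.2.2), by rw [x.2.1.2, x.2.2.2]; exact mem_antidiagonal.1 x.1.2⟩
  left_inv p := rfl
  right_inv := by
    rintro ⟨⟨⟨i, j⟩, hij⟩, ⟨a, ha⟩, ⟨b, hb⟩⟩
    dsimp only at ha hb
    subst ha hb
    rfl

theorem finite_fiber_prod {wα : α → ℕ} {wβ : β → ℕ} (hα : ∀ n, Finite {a // wα a = n})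
    (hβ : ∀ n, Finite {b // wβ b = n}) (n : ℕ) :
    Finite {p : α × β // wα p.1 + wβ p.2 = n} :=
  .of_equiv _ (fiberProdEquiv wα wβ n).symm

theorem weightGenFun_prod {wα : α → ℕ} {wβ : β → ℕ} (hα : ∀ n, Finite {a // wα a = n})
    (hβ : ∀ n, Finite {b // wβ b = n}) :
    weightGenFun (fun p : α × β => wα p.1 + wβ p.2) = weightGenFun wα * weightGenFun wβ := by
  ext n
  rw [coeff_mul]
  simp only [weightGenFun, coeff_mk]
  rw [Nat.card_congr (fiberProdEquiv wα wβ n), Nat.card_sigma]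
  push_cast [Nat.card_prod]
  exact sum_coe_sort (antidiagonal n) fun ij =>
    (Nat.card {a // wα a = ij.1} : ℤ) * Nat.card {b // wβ b = ij.2}

variable {γ : ℕ → Type*}

def fiberSigmaMulEquiv {i : ℕ} (hi : i ≠ 0) (m : ℕ) :
    {x : Σ m, γ m // i * x.1 = i * m} ≃ γ m :=
  (Equiv.subtypeEquivRight fun x => by simp [hi]).trans (Equiv.sigmaSubtype m)

theorem isEmpty_fiber_sigma_mul {i n : ℕ} (h : ¬ i ∣ n) : IsEmpty {x : Σ m, γ m // i * x.1 = n} :=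
  ⟨fun x => h ⟨x.1.1, x.2.symm⟩⟩

theorem finite_fiber_sigma_mul [∀ m, Finite (γ m)] {i : ℕ} (hi : i ≠ 0) (n : ℕ) :
    Finite {x : Σ m, γ m // i * x.1 = n} := by
  by_cases h : i ∣ n
  · obtain ⟨m, rfl⟩ := h
    exact .of_equiv _ (fiberSigmaMulEquiv hi m).symm
  · have := isEmpty_fiber_sigma_mul (γ := γ) h
    infer_instance

theorem weightGenFun_sigma_mul {i : ℕ} (hi : i ≠ 0) :
    weightGenFun (fun x : Σ m, γ m => i * x.1) =
      expand i hi (PowerSeries.mk fun m => (Nat.card (γ m) : ℤ)) := by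
  ext n
  simp only [weightGenFun, coeff_mk, coeff_expand]
  split_ifs with h
  · obtain ⟨m, rfl⟩ := h
    rw [Nat.card_congr (fiberSigmaMulEquiv hi m), Nat.mul_div_cancel_left _ (Nat.pos_of_ne_zero hi)]
  · have := isEmpty_fiber_sigma_mul (γ := γ) h
    simp

end WeightedCount

def IsPairChain {k : ℕ} (m : ℕ) (c : Fin k → ℕ × ℕ) : Prop :=
  (∀ h : 0 < k, max (c ⟨0, h⟩).1 (c ⟨0, h⟩).2 ≤ m) ∧
    ∀ j (h : j + 1 < k),
      max (c ⟨j + 1, h⟩).1 (c ⟨j + 1, h⟩).2 ≤ min (c ⟨j, by omega⟩).1 (c ⟨j, by omega⟩).2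

abbrev PairChain (k m : ℕ) : Type := {c : Fin k → ℕ × ℕ // IsPairChain m c}

theorem isPairChain_succ_iff {j m : ℕ} {c : Fin (j + 1) → ℕ × ℕ} :
    IsPairChain m c ↔ max (c 0).1 (c 0).2 ≤ m ∧ IsPairChain (min (c 0).1 (c 0).2) (Fin.tail c) := by
  constructor
  · rintro ⟨h0, hs⟩
    exact ⟨h0 j.succ_pos, fun _ => hs 0 (by omega), fun i h => hs (i + 1) (by omega)⟩
  · rintro ⟨hp, h0, hs⟩
    refine ⟨fun _ => hp, fun i h => ?_⟩
    cases i with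
    | zero => exact h0 (by omega)
    | succ i => exact hs i (by omega)

def pairChainSuccEquiv (j m : ℕ) :
    PairChain (j + 1) m ≃
      Σ p : (range (m + 1) ×ˢ range (m + 1) : Finset (ℕ × ℕ)), PairChain j (min p.1.1 p.1.2) where
  toFun c :=
    have h := isPairChain_succ_iff.1 c.2
    ⟨⟨c.1 0, by simp only [mem_product, mem_range, max_le_iff] at h ⊢; omega⟩, Fin.tail c.1, h.2⟩
  invFun x := ⟨Fin.cons x.1.1 x.2.1, isPairChain_succ_iff.2
    ⟨by simpa [Nat.lt_succ_iff] using mem_product.1 x.1.2, x.2.2⟩⟩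
  left_inv c := Subtype.ext (Fin.cons_self_tail c.1)
  right_inv _ := rfl

instance finite_pairChain (k m : ℕ) : Finite (PairChain k m) := by
  induction k generalizing m with
  | zero => infer_instance
  | succ k ih =>
    have := ih
    exact .of_equiv _ (pairChainSuccEquiv k m).symm

theorem card_pairChain_succ (j m : ℕ) :
    Nat.card (PairChain (j + 1) m) =
      ∑ p ∈ range (m + 1) ×ˢ range (m + 1), Nat.card (PairChain j (min p.1 p.2)) := by
  rw [Nat.card_congr (pairChainSuccEquiv j m), Nat.card_sigma,
    sum_coe_sort (range (m + 1) ×ˢ range (m + 1)) fun p => Nat.card (PairChain j (min p.1 p.2))]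

theorem sum_range_product_min {M : Type*} [AddCommMonoid M] (g : ℕ → M) (m : ℕ) :
    ∑ p ∈ range (m + 1) ×ˢ range (m + 1), g (min p.1 p.2) =
      ∑ q ∈ antidiagonal m, (2 * q.2 + 1) • g q.1 := by
  simp only [sum_product]
  induction m with
  | zero => simp
  | succ m ih =>
    have hrow : ∑ x ∈ range (m + 1), ∑ y ∈ range (m + 2), g (min x y) =
        ∑ x ∈ range (m + 1), ∑ y ∈ range (m + 1), g (min x y) + ∑ x ∈ range (m + 1), g x := by
      rw [← sum_add_distrib]
      refine sum_congr rfl fun x hx => ?_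
      rw [sum_range_succ, min_eq_left (by simp at hx; omega)]
    have hcol : ∑ y ∈ range (m + 2), g (min (m + 1) y) = ∑ y ∈ range (m + 1), g y + g (m + 1) := by
      rw [sum_range_succ, min_self]
      exact congrArg (· + _) (sum_congr rfl fun y hy => by rw [min_eq_right (by simp at hy; omega)])
    have hstep : ∀ q : ℕ × ℕ, (2 * (q.2 + 1) + 1) • g q.1 = (2 * q.2 + 1) • g q.1 + 2 • g q.1 :=
      fun q => by rw [← add_smul]; ring_nf
    have hdiag : ∑ q ∈ antidiagonal m, g q.1 = ∑ x ∈ range (m + 1), g x :=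
      Nat.sum_antidiagonal_eq_sum_range_succ_mk (fun q => g q.1) m
    rw [sum_range_succ _ (m + 1), hrow, hcol, ih, Nat.sum_antidiagonal_succ']
    simp only [hstep, sum_add_distrib, ← smul_sum, hdiag]
    abel

noncomputable def chainSeries (k : ℕ) : PowerSeries ℤ :=
  PowerSeries.mk fun m => (Nat.card (PairChain k m) : ℤ)

theorem chainSeries_zero : chainSeries 0 = PowerSeries.mk 1 := by
  ext m
  simp only [chainSeries, coeff_mk, Pi.one_apply, Nat.cast_eq_one, Nat.card_eq_one_iff_unique]
  exact ⟨inferInstance, ⟨⟨Fin.elim0, fun h => by omega, fun j h => by omega⟩⟩⟩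

theorem chainSeries_succ (j : ℕ) :
    chainSeries (j + 1) = chainSeries j * PowerSeries.mk fun r => (2 * r + 1 : ℤ) := by
  ext m
  simp only [chainSeries, coeff_mul, coeff_mk, card_pairChain_succ]
  push_cast
  rw [sum_range_product_min (fun s => (Nat.card (PairChain j s) : ℤ))]
  exact sum_congr rfl fun q _ => by push_cast [nsmul_eq_mul]; ring

theorem mk_two_mul_add_one_mul_sq :
    PowerSeries.mk (fun r => (2 * r + 1 : ℤ)) * (1 - X) ^ 2 = 1 + X := by
  ext n
  rcases n with _ | _ | n <;>
    simp [sq, mul_sub, sub_mul, coeff_succ_mul_X, ← mul_assoc, coeff_one, coeff_X]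
  ring

theorem chainSeries_mul_one_sub_pow (j : ℕ) :
    chainSeries j * (1 - X) ^ (2 * j + 1) = (1 + X) ^ j := by
  induction j with
  | zero => simpa [chainSeries_zero] using mk_one_mul_one_sub_eq_one ℤ
  | succ j ih =>
    rw [chainSeries_succ, pow_succ (1 + X), ← ih, ← mk_two_mul_add_one_mul_sq]
    ring

theorem expand_chainSeries_mul {i : ℕ} (hi : i ≠ 0) (k : ℕ) :
    expand i hi (chainSeries k) * (1 - X ^ i) ^ (3 * k + 1) = (1 - X ^ (2 * i)) ^ k := by
  have h : chainSeries k * (1 - X) ^ (3 * k + 1) = (1 - X ^ 2) ^ k := by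
    rw [show 3 * k + 1 = (2 * k + 1) + k by ring, pow_add, ← mul_assoc,
      chainSeries_mul_one_sub_pow, ← mul_pow]
    ring
  simpa [pow_mul'] using congrArg (expand i hi) h

-- The chain condition of a single block, read through `f r = π (i * (2 * k + 1) + r)`.
def IsBlock (k : ℕ) (f : ℕ → ℕ) : Prop :=
  f 1 ≥ max (f 2) (f 3) ∧
    (∀ j, 1 ≤ j → j < k →
      min (f (2 * j)) (f (2 * j + 1)) ≥ max (f (2 * j + 2)) (f (2 * j + 3))) ∧
    min (f (2 * k)) (f (2 * k + 1)) ≥ f (2 * k + 2)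

def blockPairs (k : ℕ) (f : ℕ → ℕ) : Fin k → ℕ × ℕ :=
  fun j => (f (2 * j + 2), f (2 * j + 3))

namespace IsBlock

variable {k m : ℕ} {f g : ℕ → ℕ}

theorem add_const_iff : IsBlock k (fun r => f r + m) ↔ IsBlock k f := by
  simp only [IsBlock, ge_iff_le, max_add_add_right, min_add_add_right, add_le_add_iff_right]

theorem congr (hk : 1 ≤ k) (h : Set.EqOn f g (Set.Icc 1 (2 * k + 2))) (hf : IsBlock k f) :
    IsBlock k g := by
  have e : ∀ r, 1 ≤ r → r ≤ 2 * k + 2 → g r = f r := fun r h1 h2 => (h ⟨h1, h2⟩).symm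
  obtain ⟨h1, h2, h3⟩ := hf
  refine ⟨?_, fun j hj hjk => ?_, ?_⟩
  · rwa [e 1 le_rfl (by omega), e 2 (by omega) (by omega), e 3 (by omega) (by omega)]
  · rw [e (2 * j) (by omega) (by omega), e (2 * j + 1) (by omega) (by omega),
      e (2 * j + 2) (by omega) (by omega), e (2 * j + 3) (by omega) (by omega)]
    exact h2 j hj hjk
  · rwa [e (2 * k) (by omega) (by omega), e (2 * k + 1) (by omega) (by omega),
      e (2 * k + 2) (by omega) le_rfl]

theorem of_eq_zero (hk : 1 ≤ k) (h : ∀ r, 2 ≤ r → r ≤ 2 * k + 2 → f r = 0) : IsBlock k f := by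
  refine ⟨?_, fun j hj hjk => ?_, ?_⟩
  · simp [h 2 le_rfl (by omega), h 3 (by omega) (by omega)]
  · simp [h (2 * j + 2) (by omega) (by omega), h (2 * j + 3) (by omega) (by omega)]
  · simp [h (2 * k + 2) (by omega) le_rfl]

theorem iff_isPairChain (hk : 1 ≤ k) :
    IsBlock k f ↔
      IsPairChain (f 1) (blockPairs k f) ∧ f (2 * k + 2) ≤ min (f (2 * k)) (f (2 * k + 1)) := by
  simp only [IsBlock, IsPairChain, blockPairs, ge_iff_le]
  constructor
  · rintro ⟨h1, h2, h3⟩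
    refine ⟨⟨fun _ => h1, fun j hj => ?_⟩, h3⟩
    simpa [mul_add, add_assoc] using h2 (j + 1) (by omega) hj
  · rintro ⟨⟨h1, h2⟩, h3⟩
    refine ⟨h1 (by omega), fun j hj hjk => ?_, h3⟩
    obtain ⟨j, rfl⟩ : ∃ j', j = j' + 1 := ⟨j - 1, by omega⟩
    simpa [mul_add, add_assoc] using h2 j hjk

theorem le_first (hf : IsBlock k f) {r : ℕ} (h1 : 1 ≤ r) (h2 : r ≤ 2 * k + 1) :
    f r ≤ f 1 := by
  obtain ⟨hf1, hf2, -⟩ := hf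
  have pair_le : ∀ j, 1 ≤ j → j ≤ k → max (f (2 * j)) (f (2 * j + 1)) ≤ f 1 := by
    intro j hj hjk
    induction j with
    | zero => omega
    | succ j ih =>
      rcases Nat.eq_zero_or_pos j with rfl | hj0
      · exact hf1
      · exact (hf2 j hj0 (by omega)).trans (min_le_max.trans (ih hj0 (by omega)))
  obtain ⟨j, rfl | rfl⟩ := Nat.even_or_odd' r
  · exact (le_max_left _ _).trans (pair_le j (by omega) (by omega))
  · rcases Nat.eq_zero_or_pos j with rfl | hj0
    · exact le_rfl
    · exact (le_max_right _ _).trans (pair_le j hj0 (by omega))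

theorem last_le (hk : 1 ≤ k) (hf : IsBlock k f) {r : ℕ} (h1 : 1 ≤ r) (h2 : r ≤ 2 * k + 1) :
    f (2 * k + 2) ≤ f r := by
  have le_pair : ∀ d j, j + d = k → 1 ≤ j → f (2 * k + 2) ≤ min (f (2 * j)) (f (2 * j + 1)) := by
    intro d
    induction d with
    | zero => intro j hj _; subst hj; exact hf.2.2
    | succ d ih =>
      intro j hj hj1
      exact (ih (j + 1) (by omega) (by omega)).trans (min_le_max.trans (hf.2.1 j hj1 (by omega)))
  obtain ⟨j, rfl | rfl⟩ := Nat.even_or_odd' r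
  · exact (le_pair (k - j) j (by omega) (by omega)).trans (min_le_left _ _)
  · rcases Nat.eq_zero_or_pos j with rfl | hj0
    · exact (le_pair (k - 1) 1 (by omega) le_rfl).trans
        ((min_le_left _ _).trans (hf.le_first (r := 2) (by omega) (by omega)))
    · exact (le_pair (k - j) j (by omega) hj0).trans (min_le_right _ _)

end IsBlock

theorem isDiamond_iff {k : ℕ} {π : ℕ →₀ ℕ} :
    IsDiamond k π ↔ π 0 = 0 ∧ ∀ i, IsBlock k fun r => π (i * (2 * k + 1) + r) := by
  simp only [IsDiamond, IsBlock, add_mul, one_mul, add_assoc]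

theorem exists_eq_mul_add_of_pos {K p : ℕ} (hK : 0 < K) (hp : 1 ≤ p) :
    ∃ i r, 1 ≤ r ∧ r ≤ K ∧ p = i * K + r :=
  ⟨(p - 1) / K, (p - 1) % K + 1, by omega, by have := Nat.mod_lt (p - 1) hK; omega,
    by have := Nat.div_add_mod' (p - 1) K; omega⟩

def anchorPos (k : ℕ) : ℕ ↪ ℕ :=
  ⟨fun i => i * (2 * k + 1) + 1, fun a b h => by simpa using h⟩

@[simp]
theorem anchorPos_apply (k i : ℕ) : anchorPos k i = i * (2 * k + 1) + 1 := rfl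

theorem sum_anchor_le_diamondWeight (k : ℕ) (π : ℕ →₀ ℕ) (T : ℕ) :
    ∑ i ∈ range T, π (i * (2 * k + 1) + 1) ≤ diamondWeight k π := by
  calc ∑ i ∈ range T, π (anchorPos k i)
      = ∑ p ∈ ((range T).map (anchorPos k)).filter (π · ≠ 0), π p := by
        rw [sum_filter_ne_zero, sum_map]
    _ ≤ ∑ p ∈ π.support.filter (fun p => 1 ≤ p ∧ (p - 1) % (2 * k + 1) = 0), π p := by
      refine sum_le_sum_of_subset fun p hp => ?_
      simp only [mem_filter, mem_map, Finsupp.mem_support_iff] at hp ⊢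
      obtain ⟨⟨i, -, rfl⟩, hp⟩ := hp
      exact ⟨hp, by simp⟩
    _ = diamondWeight k π := by rw [sum_filter]; rfl

namespace IsDiamond

variable {k : ℕ} {π : ℕ →₀ ℕ}

theorem isBlock (hd : IsDiamond k π) (i : ℕ) : IsBlock k fun r => π (i * (2 * k + 1) + r) :=
  (isDiamond_iff.1 hd).2 i

theorem anchor_antitone (hk : 1 ≤ k) (hd : IsDiamond k π) :
    Antitone fun i => π (i * (2 * k + 1) + 1) := by
  refine antitone_nat_of_succ_le fun i => ?_
  have := (hd.isBlock i).last_le hk le_rfl (by omega)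
  rwa [show i * (2 * k + 1) + (2 * k + 2) = (i + 1) * (2 * k + 1) + 1 by ring] at this

theorem apply_le_anchor (hk : 1 ≤ k) (hd : IsDiamond k π) {T p : ℕ} (h : T * (2 * k + 1) + 1 ≤ p) :
    π p ≤ π (T * (2 * k + 1) + 1) := by
  obtain ⟨i, r, hr1, hrK, rfl⟩ :=
    exists_eq_mul_add_of_pos (by omega : 0 < 2 * k + 1) (by omega : 1 ≤ p)
  have hTi : T < i + 1 := Nat.lt_of_mul_lt_mul_right (a := 2 * k + 1) <| by
    rw [add_one_mul]; omega
  exact ((hd.isBlock i).le_first hr1 hrK).trans (hd.anchor_antitone hk (Nat.lt_succ_iff.1 hTi))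

theorem eq_zero_of_anchor_eq_zero (hk : 1 ≤ k) (hd : IsDiamond k π) {T p : ℕ}
    (hT : π (T * (2 * k + 1) + 1) = 0) (h : T * (2 * k + 1) + 1 ≤ p) : π p = 0 :=
  Nat.le_zero.1 (hT ▸ hd.apply_le_anchor hk h)

theorem anchor_le_apply (hk : 1 ≤ k) (hd : IsDiamond k π) {t p : ℕ} (h1 : 1 ≤ p)
    (h2 : p ≤ t * (2 * k + 1) + 1) : π (t * (2 * k + 1) + 1) ≤ π p := by
  obtain ⟨i, r, hr1, hrK, rfl⟩ := exists_eq_mul_add_of_pos (by omega : 0 < 2 * k + 1) h1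
  rcases lt_or_ge i t with hit | hti
  · have := (hd.isBlock i).last_le hk hr1 hrK
    rw [show i * (2 * k + 1) + (2 * k + 2) = (i + 1) * (2 * k + 1) + 1 by ring] at this
    exact (hd.anchor_antitone hk hit).trans this
  · have := Nat.mul_le_mul_right (2 * k + 1) hti
    obtain rfl : r = 1 := by omega
    rw [show i * (2 * k + 1) = t * (2 * k + 1) by omega]

theorem diamondWeight_eq_sum_anchor (hk : 1 ≤ k) (hd : IsDiamond k π) {T : ℕ}
    (hT : π (T * (2 * k + 1) + 1) = 0) :
    diamondWeight k π = ∑ i ∈ range T, π (i * (2 * k + 1) + 1) := by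
  refine le_antisymm ?_ (sum_anchor_le_diamondWeight k π T)
  calc diamondWeight k π
      = ∑ p ∈ π.support.filter (fun p => 1 ≤ p ∧ (p - 1) % (2 * k + 1) = 0), π p := by
        rw [sum_filter]; rfl
    _ ≤ ∑ p ∈ (range T).map (anchorPos k), π p := by
      refine sum_le_sum_of_subset fun p hp => ?_
      obtain ⟨hp0, hp1, hpK⟩ := by simpa using hp
      obtain ⟨i, hi⟩ := Nat.dvd_of_mod_eq_zero hpK
      have hi' := Nat.mul_comm (2 * k + 1) i
      refine mem_map.2 ⟨i, mem_range.2 ?_, by simp only [anchorPos_apply]; omega⟩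
      by_contra hiT
      have := Nat.mul_le_mul_right (2 * k + 1) (not_lt.1 hiT)
      exact hp0 (hd.eq_zero_of_anchor_eq_zero hk hT (by omega))
    _ = ∑ i ∈ range T, π (i * (2 * k + 1) + 1) := sum_map _ _ _

theorem anchor_eq_zero_of_diamondWeight_le (hk : 1 ≤ k) (hd : IsDiamond k π) {T : ℕ}
    (h : diamondWeight k π ≤ T) : π (T * (2 * k + 1) + 1) = 0 := by
  by_contra h0
  have hpos : ∀ i ∈ range (T + 1), 1 ≤ π (i * (2 * k + 1) + 1) := fun i hi =>
    (Nat.one_le_iff_ne_zero.2 h0).trans (hd.anchor_antitone hk (Nat.lt_succ_iff.1 (mem_range.1 hi)))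
  have := (card_nsmul_le_sum _ _ 1 hpos).trans (sum_anchor_le_diamondWeight k π (T + 1))
  simp at this
  omega

end IsDiamond

def pairEntry {k : ℕ} (c : Fin k → ℕ × ℕ) (r : ℕ) : ℕ :=
  if h : r / 2 < k then if r % 2 = 0 then (c ⟨r / 2, h⟩).1 else (c ⟨r / 2, h⟩).2 else 0

section PairEntry

variable {k : ℕ}

theorem pairEntry_two_mul (c : Fin k → ℕ × ℕ) (j : Fin k) : pairEntry c (2 * j) = (c j).1 := by
  simp [pairEntry]

theorem pairEntry_two_mul_add_one (c : Fin k → ℕ × ℕ) (j : Fin k) :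
    pairEntry c (2 * j + 1) = (c j).2 := by
  simp [pairEntry, Nat.add_div]

theorem pairEntry_of_le (c : Fin k → ℕ × ℕ) {r : ℕ} (h : 2 * k ≤ r) : pairEntry c r = 0 :=
  dif_neg (by omega)

theorem pairEntry_blockPairs (f : ℕ → ℕ) {r : ℕ} (h : r < 2 * k) :
    pairEntry (blockPairs k f) r = f (r + 2) := by
  rw [pairEntry, dif_pos (by omega)]
  split_ifs <;> simp only [blockPairs] <;> congr 1 <;> omega

end PairEntry

-- Adding `frame k t m c` to a diamond whose anchor `t` vanishes raises every entry up to that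
-- anchor by `m` and puts the chain `c` into block `t`.
noncomputable def frame (k t m : ℕ) (c : Fin k → ℕ × ℕ) : ℕ →₀ ℕ :=
  Finsupp.onFinset (range ((t + 1) * (2 * k + 1) + 1))
    (fun p => if p = 0 then 0 else if p ≤ t * (2 * k + 1) + 1 then m
      else pairEntry c (p - (t * (2 * k + 1) + 2)))
    (fun p hp => by
      rw [mem_range]
      by_contra h
      rw [add_one_mul] at h
      exact hp (by rw [if_neg (by omega), if_neg (by omega), pairEntry_of_le _ (by omega)]))

section Frame

variable {k t m : ℕ} {c : Fin k → ℕ × ℕ}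

theorem frame_apply_zero : frame k t m c 0 = 0 := rfl

theorem frame_apply_of_le {p : ℕ} (h1 : 1 ≤ p) (h2 : p ≤ t * (2 * k + 1) + 1) :
    frame k t m c p = m := by
  simp only [frame, Finsupp.onFinset_apply, if_neg (by omega : p ≠ 0), if_pos h2]

theorem frame_apply_of_lt {p : ℕ} (h : t * (2 * k + 1) + 1 < p) :
    frame k t m c p = pairEntry c (p - (t * (2 * k + 1) + 2)) := by
  simp only [frame, Finsupp.onFinset_apply, if_neg (by omega : p ≠ 0),
    if_neg (show ¬ p ≤ t * (2 * k + 1) + 1 by omega)]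

end Frame

namespace IsDiamond

variable {k t m : ℕ} {π : ℕ →₀ ℕ} {c : Fin k → ℕ × ℕ}

theorem isPairChain_blockPairs (hk : 1 ≤ k) (hd : IsDiamond k π) (t : ℕ) :
    IsPairChain (π (t * (2 * k + 1) + 1)) (blockPairs k fun r => π (t * (2 * k + 1) + r)) :=
  ((IsBlock.iff_isPairChain hk).1 (hd.isBlock t)).1

theorem add_frame_apply_of_gt (hk : 1 ≤ k) (hd : IsDiamond k π)
    (h0 : π (t * (2 * k + 1) + 1) = 0) {p : ℕ} (h : t * (2 * k + 1) + 1 < p) :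
    (π + frame k t m c) p = pairEntry c (p - (t * (2 * k + 1) + 2)) := by
  rw [Finsupp.add_apply, hd.eq_zero_of_anchor_eq_zero hk h0 h.le, frame_apply_of_lt h, zero_add]

theorem blockPairs_add_frame (hk : 1 ≤ k) (hd : IsDiamond k π)
    (h0 : π (t * (2 * k + 1) + 1) = 0) :
    blockPairs k (fun r => (π + frame k t m c) (t * (2 * k + 1) + r)) = c := by
  funext j
  simp only [blockPairs]
  rw [add_frame_apply_of_gt hk hd h0 (by omega), add_frame_apply_of_gt hk hd h0 (by omega),
    show t * (2 * k + 1) + (2 * j + 2) - (t * (2 * k + 1) + 2) = 2 * j by omega,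
    show t * (2 * k + 1) + (2 * j + 3) - (t * (2 * k + 1) + 2) = 2 * j + 1 by omega,
    pairEntry_two_mul, pairEntry_two_mul_add_one]

theorem add_frame_apply_anchor_succ (hk : 1 ≤ k) (hd : IsDiamond k π)
    (h0 : π (t * (2 * k + 1) + 1) = 0) :
    (π + frame k t m c) ((t + 1) * (2 * k + 1) + 1) = 0 := by
  rw [add_frame_apply_of_gt hk hd h0 (by rw [add_one_mul]; omega),
    pairEntry_of_le _ (by rw [add_one_mul]; omega)]

theorem isDiamond_add_frame (hk : 1 ≤ k) (hd : IsDiamond k π)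
    (h0 : π (t * (2 * k + 1) + 1) = 0) (hc : IsPairChain m c) :
    IsDiamond k (π + frame k t m c) := by
  refine isDiamond_iff.2 ⟨by simp [frame_apply_zero, hd.1], fun i => ?_⟩
  rcases lt_trichotomy i t with hit | rfl | hti
  · have hle := Nat.mul_le_mul_right (2 * k + 1) (show i + 1 ≤ t from hit)
    rw [add_one_mul] at hle
    refine ((IsBlock.add_const_iff (m := m)).2 (hd.isBlock i)).congr hk fun r ⟨h1, h2⟩ => ?_
    simp only [Finsupp.add_apply]
    rw [frame_apply_of_le (by omega) (by omega)]
  · refine (IsBlock.iff_isPairChain hk).2 ⟨?_, ?_⟩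
    · rwa [blockPairs_add_frame hk hd h0, Finsupp.add_apply, h0,
        frame_apply_of_le (by omega) le_rfl, zero_add]
    · rw [add_frame_apply_of_gt hk hd h0 (by omega), pairEntry_of_le _ (by omega)]
      exact Nat.zero_le _
  · have hle := Nat.mul_le_mul_right (2 * k + 1) (show t + 1 ≤ i from hti)
    rw [add_one_mul] at hle
    exact IsBlock.of_eq_zero hk fun r h1 h2 => by
      rw [add_frame_apply_of_gt hk hd h0 (by omega), pairEntry_of_le _ (by omega)]

theorem diamondWeight_add_frame (hk : 1 ≤ k) (hd : IsDiamond k π)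
    (h0 : π (t * (2 * k + 1) + 1) = 0) (hc : IsPairChain m c) :
    diamondWeight k (π + frame k t m c) = (t + 1) * m + diamondWeight k π := by
  have hanchor : ∀ i ∈ range t,
      (π + frame k t m c) (i * (2 * k + 1) + 1) = π (i * (2 * k + 1) + 1) + m := fun i hi => by
    have := Nat.mul_le_mul_right (2 * k + 1) (mem_range.1 hi).le
    rw [Finsupp.add_apply, frame_apply_of_le (by omega) (by omega)]
  rw [(hd.isDiamond_add_frame hk h0 hc).diamondWeight_eq_sum_anchor hk
      (add_frame_apply_anchor_succ hk hd h0),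
    hd.diamondWeight_eq_sum_anchor hk h0, sum_range_succ, sum_congr rfl hanchor, sum_add_distrib,
    sum_const, card_range, smul_eq_mul, Finsupp.add_apply, h0, frame_apply_of_le (by omega) le_rfl]
  ring

theorem frame_blockPairs_apply_of_gt (hk : 1 ≤ k) (hd : IsDiamond k π)
    (hT : π ((t + 1) * (2 * k + 1) + 1) = 0) {p : ℕ} (h : t * (2 * k + 1) + 1 < p) :
    frame k t m (blockPairs k fun r => π (t * (2 * k + 1) + r)) p = π p := by
  rw [frame_apply_of_lt h]
  by_cases hp : p - (t * (2 * k + 1) + 2) < 2 * k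
  · rw [pairEntry_blockPairs _ hp]
    congr 1
    omega
  · rw [pairEntry_of_le _ (by omega),
      hd.eq_zero_of_anchor_eq_zero hk hT (by rw [add_one_mul]; omega)]

theorem frame_blockPairs_le (hk : 1 ≤ k) (hd : IsDiamond k π)
    (hT : π ((t + 1) * (2 * k + 1) + 1) = 0) :
    frame k t (π (t * (2 * k + 1) + 1)) (blockPairs k fun r => π (t * (2 * k + 1) + r)) ≤ π := by
  intro p
  rcases Nat.eq_zero_or_pos p with rfl | hp
  · exact frame_apply_zero.trans_le (Nat.zero_le _)
  rcases le_or_gt p (t * (2 * k + 1) + 1) with hpt | hpt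
  · rw [frame_apply_of_le hp hpt]
    exact hd.anchor_le_apply hk hp hpt
  · exact (hd.frame_blockPairs_apply_of_gt hk hT hpt).le

theorem isDiamond_sub_frame (hk : 1 ≤ k) (hd : IsDiamond k π)
    (hT : π ((t + 1) * (2 * k + 1) + 1) = 0) :
    IsDiamond k (π - frame k t (π (t * (2 * k + 1) + 1))
      (blockPairs k fun r => π (t * (2 * k + 1) + r))) := by
  refine isDiamond_iff.2 ⟨by simp [hd.1], fun i => ?_⟩
  rcases lt_or_ge i t with hit | hti
  · have hle := Nat.mul_le_mul_right (2 * k + 1) (show i + 1 ≤ t from hit)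
    rw [add_one_mul] at hle
    refine (IsBlock.add_const_iff (m := π (t * (2 * k + 1) + 1))).1
      ((hd.isBlock i).congr hk fun r ⟨h1, h2⟩ => ?_)
    simp only [Finsupp.tsub_apply]
    rw [frame_apply_of_le (by omega) (by omega),
      Nat.sub_add_cancel (hd.anchor_le_apply hk (by omega) (by omega))]
  · have hle := Nat.mul_le_mul_right (2 * k + 1) hti
    exact IsBlock.of_eq_zero hk fun r h1 h2 => by
      rw [Finsupp.tsub_apply, hd.frame_blockPairs_apply_of_gt hk hT (by omega), tsub_self]

end IsDiamond

abbrev DiamondBelow (k t : ℕ) : Type :=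
  {π : ℕ →₀ ℕ // IsDiamond k π ∧ π (t * (2 * k + 1) + 1) = 0}

noncomputable def diamondBelowSuccEquiv {k : ℕ} (hk : 1 ≤ k) (t : ℕ) :
    (Σ m, PairChain k m) × DiamondBelow k t ≃ DiamondBelow k (t + 1) where
  toFun x := ⟨x.2.1 + frame k t x.1.1 x.1.2.1, x.2.2.1.isDiamond_add_frame hk x.2.2.2 x.1.2.2,
    x.2.2.1.add_frame_apply_anchor_succ hk x.2.2.2⟩
  invFun π := (⟨_, _, π.2.1.isPairChain_blockPairs hk t⟩,
    ⟨_, π.2.1.isDiamond_sub_frame hk π.2.2, by simp [frame_apply_of_le]⟩)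
  left_inv := by
    rintro ⟨⟨m, c, hc⟩, π, hd, h0⟩
    have hm : (π + frame k t m c) (t * (2 * k + 1) + 1) = m := by
      rw [Finsupp.add_apply, h0, frame_apply_of_le (by omega) le_rfl, zero_add]
    have hc' := hd.blockPairs_add_frame hk h0 (m := m) (c := c)
    refine Prod.ext (Sigma.subtype_ext hm hc') (Subtype.ext ?_)
    simp only [hm, hc', add_tsub_cancel_right]
  right_inv := by
    rintro ⟨π, hd, hT⟩
    exact Subtype.ext (tsub_add_cancel_of_le (hd.frame_blockPairs_le hk hT))

theorem diamondWeight_diamondBelowSuccEquiv {k : ℕ} (hk : 1 ≤ k) (t : ℕ)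
    (x : (Σ m, PairChain k m) × DiamondBelow k t) :
    diamondWeight k (diamondBelowSuccEquiv hk t x).1 = (t + 1) * x.1.1 + diamondWeight k x.2.1 :=
  x.2.2.1.diamondWeight_add_frame hk x.2.2.2 x.1.2.2

theorem subsingleton_diamondBelow_zero {k : ℕ} (hk : 1 ≤ k) : Subsingleton (DiamondBelow k 0) := by
  suffices h : ∀ π : DiamondBelow k 0, π.1 = 0 from
    ⟨fun a b => Subtype.ext ((h a).trans (h b).symm)⟩
  rintro ⟨π, hd, h0⟩
  ext (_ | p)
  · exact hd.1
  · exact hd.eq_zero_of_anchor_eq_zero hk h0 (by omega)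

theorem isDiamond_zero (k : ℕ) : IsDiamond k 0 := by
  simp [IsDiamond]

noncomputable def diamondSeries (k t : ℕ) : PowerSeries ℤ :=
  weightGenFun fun π : DiamondBelow k t => diamondWeight k π.1

theorem finite_fiber_diamondBelow {k : ℕ} (hk : 1 ≤ k) (t n : ℕ) :
    Finite {π : DiamondBelow k t // diamondWeight k π.1 = n} := by
  induction t generalizing n with
  | zero =>
    have := subsingleton_diamondBelow_zero hk
    infer_instance
  | succ t ih =>
    have := finite_fiber_prod (finite_fiber_sigma_mul (γ := PairChain k) t.succ_ne_zero) ih n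
    exact .of_equiv _ (fiberCongr _ (diamondWeight_diamondBelowSuccEquiv hk t) n)

theorem diamondSeries_zero {k : ℕ} (hk : 1 ≤ k) : diamondSeries k 0 = 1 :=
  have := subsingleton_diamondBelow_zero hk
  weightGenFun_eq_one (⟨0, isDiamond_zero k, rfl⟩ : DiamondBelow k 0) (by simp [diamondWeight])

theorem diamondSeries_succ {k : ℕ} (hk : 1 ≤ k) (t : ℕ) :
    diamondSeries k (t + 1) =
      expand (t + 1) t.succ_ne_zero (chainSeries k) * diamondSeries k t := by
  rw [diamondSeries, weightGenFun_congr _ (diamondWeight_diamondBelowSuccEquiv hk t),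
    weightGenFun_prod (finite_fiber_sigma_mul t.succ_ne_zero) (finite_fiber_diamondBelow hk t),
    weightGenFun_sigma_mul]
  rfl

theorem diamondSeries_eq_prod {k : ℕ} (hk : 1 ≤ k) (t : ℕ) :
    diamondSeries k t = ∏ i ∈ range t, expand (i + 1) i.succ_ne_zero (chainSeries k) := by
  induction t with
  | zero => exact diamondSeries_zero hk
  | succ t ih => rw [diamondSeries_succ hk, ih, prod_range_succ, mul_comm]

theorem coeff_diamondSeries {k : ℕ} (hk : 1 ≤ k) {n T : ℕ} (h : n < T) :
    coeff n (diamondSeries k T) = diamondCount k n := by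
  simp only [diamondSeries, weightGenFun, coeff_mk, diamondCount]
  congr 1
  exact Nat.card_congr
    { toFun := fun π => ⟨π.1.1, π.1.2.1, π.2⟩
      invFun := fun π => ⟨⟨π.1, π.2.1,
        π.2.1.anchor_eq_zero_of_diamondWeight_le hk (π.2.2.le.trans h.le)⟩, π.2.2⟩ }

open PowerSeries in
/-- The identity multiplied out and read coefficientwise: truncating the infinite products at
`n + 1` factors does not affect the `n`-th coefficient. -/
theorem diamond_gf (k : ℕ) (hk : 1 ≤ k) (n : ℕ) :
    coeff (R := ℤ) n ((PowerSeries.mk fun m => (diamondCount k m : ℤ)) *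
        ∏ i ∈ Finset.range (n + 1), (1 - (X : PowerSeries ℤ) ^ (i + 1)) ^ (3 * k + 1)) =
      coeff (R := ℤ) n (∏ i ∈ Finset.range (n + 1),
        (1 - (X : PowerSeries ℤ) ^ (2 * (i + 1))) ^ k) := by
  have htrunc : trunc (n + 1) (PowerSeries.mk fun m => (diamondCount k m : ℤ)) =
      trunc (n + 1) (diamondSeries k (n + 1)) := by
    ext m
    simp only [coeff_trunc, coeff_mk]
    split_ifs with hm
    · exact (coeff_diamondSeries hk hm).symm
    · rfl
  rw [← coeff_coe_trunc_of_lt n.lt_succ_self, ← trunc_trunc_mul, htrunc, trunc_trunc_mul,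
    coeff_coe_trunc_of_lt n.lt_succ_self, diamondSeries_eq_prod hk, ← prod_mul_distrib]
  exact congrArg _ (prod_congr rfl fun i _ => expand_chainSeries_mul _ k)
end

section
/- For integers n, k, t, r with 1 ≤ r ≤ 2k+1, the number of (2k+1)-tuples (α¹, …, α^{2k+1}) of total weight n, where the even-indexed αⁱ are overpartitions and the odd-indexed αⁱ are ordinary partitions, with max_i ℓ(αⁱ) = t and r the largest index i with ℓ(αⁱ) = t, equals the number of k-elongated partition diamonds of n with length t and exactly (t−1)(2k+1)+r nonzero entries. -/
/-- An overpartition, encoded as a list of (part, overlined?) pairs: parts are positive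
and weakly decreasing, and only the final occurrence of a part value may be overlined. -/
def IsOverpartition (l : List (ℕ × Bool)) : Prop :=
  (l.map Prod.fst).Pairwise (· ≥ ·) ∧ (∀ x ∈ l, 0 < x.1) ∧
  ∀ i, i + 1 < l.length → (l.getD i (0, false)).2 = true →
    (l.getD (i + 1) (0, false)).1 < (l.getD i (0, false)).1

open Finset

section NatSeq

variable {f g : ℕ → ℕ}

theorem sum_Ico_sub_succ_of_antitone (hf : Antitone f) {a b : ℕ} (hab : a ≤ b) :
    ∑ j ∈ Ico a b, (f j - f (j + 1)) = f a - f b := by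
  induction b, hab using Nat.le_induction with
  | base => simp
  | succ b hab ih =>
    rw [sum_Ico_succ_top hab, ih]
    have := hf hab
    have := hf (Nat.le_add_right b 1)
    omega

theorem Antitone.eq_of_sub_succ_eq (hf : Antitone f) (hg : Antitone g) {N : ℕ}
    (hfN : ∀ p, N ≤ p → f p = 0) (hgN : ∀ p, N ≤ p → g p = 0)
    (h : ∀ p < N, f p - f (p + 1) = g p - g (p + 1)) : f = g := by
  funext p
  rcases lt_or_ge p N with hp | hp
  · have hf' := sum_Ico_sub_succ_of_antitone hf hp.le
    have hg' := sum_Ico_sub_succ_of_antitone hg hp.le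
    rw [hfN N le_rfl, Nat.sub_zero] at hf'
    rw [hgN N le_rfl, Nat.sub_zero] at hg'
    rw [← hf', ← hg']
    exact sum_congr rfl fun j hj => h j (mem_Ico.mp hj).2
  · rw [hfN p hp, hgN p hp]

theorem Antitone.ne_zero_iff_lt_card_filter (hf : Antitone f) {N : ℕ}
    (hN : ∀ p, N ≤ p → f p = 0) (p : ℕ) : f p ≠ 0 ↔ p < #{q ∈ range N | f q ≠ 0} := by
  constructor
  · intro hp
    have hpN : p < N := by
      by_contra h
      exact hp (hN p (not_lt.mp h))
    have hsub : range (p + 1) ⊆ {q ∈ range N | f q ≠ 0} := fun q hq => by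
      have hqp : q ≤ p := Nat.lt_succ_iff.mp (mem_range.mp hq)
      have := hf hqp
      simp only [mem_filter, mem_range]
      exact ⟨by omega, by omega⟩
    simpa using card_le_card hsub
  · intro hp h0
    have hsub : {q ∈ range N | f q ≠ 0} ⊆ range p := fun q hq => by
      simp only [mem_filter] at hq
      by_contra hqp
      have := hf (not_lt.mp (mt mem_range.mpr hqp))
      omega
    simpa using (card_le_card hsub).trans_lt' hp

theorem Antitone.ne_zero_iff_lt (hf : Antitone f) {m : ℕ} (hm : f m = 0) (hm' : f (m - 1) ≠ 0)
    (p : ℕ) : f p ≠ 0 ↔ p < m := by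
  constructor
  · intro hp
    by_contra h
    have := hf (not_lt.mp h)
    omega
  · intro hp
    have := hf (Nat.le_sub_one_of_lt hp)
    omega

theorem card_filter_ne_zero_of_iff {m N : ℕ} (h : ∀ p, f p ≠ 0 ↔ p < m) (hmN : m ≤ N) :
    #{p ∈ range N | f p ≠ 0} = m := by
  have : {p ∈ range N | f p ≠ 0} = range m := by
    ext p
    simp only [mem_filter, mem_range, h]
    omega
  rw [this, card_range]

end NatSeq

theorem sum_range_mul {M : Type*} [AddCommMonoid M] (g : ℕ → M) (t K : ℕ) :
    ∑ p ∈ range (t * K), g p = ∑ i ∈ range t, ∑ s ∈ range K, g (i * K + s) := by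
  induction t with
  | zero => simp
  | succ t ih => rw [sum_range_succ, ← ih, Nat.succ_mul, sum_range_add]

theorem sum_range_two_mul_add_one {M : Type*} [AddCommMonoid M] (g : ℕ → M) (k : ℕ) :
    ∑ s ∈ range (2 * k + 1), g s = g 0 + ∑ j ∈ range k, (g (2 * j + 1) + g (2 * j + 2)) := by
  induction k with
  | zero => simp
  | succ k ih =>
    rw [show 2 * (k + 1) + 1 = 2 * k + 1 + 1 + 1 by ring, sum_range_succ, sum_range_succ, ih,
      sum_range_succ, add_assoc, add_assoc]

theorem mul_add_div_of_lt {i K s : ℕ} (hs : s < K) : (i * K + s) / K = i := by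
  rw [add_comm, Nat.add_mul_div_right _ _ (by omega), Nat.div_eq_of_lt hs, zero_add]

theorem sum_ite_lt_succ_add {M : Type*} [AddCommMonoid M] {K : ℕ} (F G : Fin K → M)
    (s : Fin K) :
    (∑ q : Fin K, if (q : ℕ) < s + 1 then F q else G q) + G s
      = (∑ q : Fin K, if (q : ℕ) < s then F q else G q) + F s := by
  rw [← sum_erase_add _ _ (mem_univ s), ← sum_erase_add _ _ (mem_univ s),
    if_pos (Nat.lt_succ_self _), if_neg (lt_irrefl _), add_assoc, add_assoc, add_comm (G s)]
  congr 1
  refine sum_congr rfl fun q hq => ?_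
  have : (q : ℕ) ≠ s := Fin.val_ne_of_ne (ne_of_mem_erase hq)
  by_cases h : (q : ℕ) < s
  · rw [if_pos (by omega), if_pos h]
  · rw [if_neg (by omega), if_neg h]

section PartSeq

def part (l : List (ℕ × Bool)) (i : ℕ) : ℕ := (l.getD i (0, false)).1

def mark (l : List (ℕ × Bool)) (i : ℕ) : Bool := (l.getD i (0, false)).2

variable {l : List (ℕ × Bool)} {i t : ℕ}

theorem part_of_length_le (h : l.length ≤ i) : part l i = 0 := by
  rw [part, List.getD_eq_default _ _ h]

theorem mark_of_length_le (h : l.length ≤ i) : mark l i = false := by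
  rw [mark, List.getD_eq_default _ _ h]

theorem mark_eq_false (h : ∀ x ∈ l, x.2 = false) (i : ℕ) : mark l i = false := by
  rcases lt_or_ge i l.length with hi | hi
  · rw [mark, List.getD_eq_getElem _ _ hi]
    exact h _ (List.getElem_mem hi)
  · exact mark_of_length_le hi

theorem part_ne_zero_iff (hpos : ∀ x ∈ l, 0 < x.1) : part l i ≠ 0 ↔ i < l.length := by
  rcases lt_or_ge i l.length with h | h
  · simpa [part, List.getD_eq_getElem _ _ h, h] using (hpos _ (List.getElem_mem h)).ne'
  · simp [part_of_length_le h, h]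

theorem IsOverpartition.antitone_part (hl : IsOverpartition l) : Antitone (part l) := by
  refine antitone_nat_of_succ_le fun i => ?_
  rcases lt_or_ge (i + 1) l.length with h | h
  · have := List.pairwise_iff_getElem.mp hl.1 i (i + 1) (by simp; omega) (by simpa using h)
      (Nat.lt_succ_self i)
    simp only [part, List.getD_eq_getElem _ _ h, List.getD_eq_getElem _ _ (Nat.lt_of_succ_lt h)]
    simpa using this
  · rw [part_of_length_le h]
    exact Nat.zero_le _

theorem IsOverpartition.part_succ_lt_of_mark (hl : IsOverpartition l) (h : mark l i = true) :
    part l (i + 1) < part l i := by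
  have hi : i < l.length := by
    by_contra hi
    rw [mark_of_length_le (not_lt.mp hi)] at h
    exact Bool.false_ne_true h
  rcases lt_or_ge (i + 1) l.length with h' | h'
  · exact hl.2.2 i h' h
  · rw [part_of_length_le h']
    exact Nat.pos_of_ne_zero ((part_ne_zero_iff hl.2.1).mpr hi)

theorem sum_range_part (h : l.length ≤ t) : ∑ i ∈ range t, part l i = (l.map Prod.fst).sum := by
  induction l generalizing t with
  | nil => simp [part]
  | cons a l ih =>
    obtain ⟨t, rfl⟩ : ∃ t', t = t' + 1 := ⟨t - 1, by simp at h; omega⟩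
    rw [sum_range_succ']
    simp only [part, List.getD_cons_succ, List.getD_cons_zero] at ih ⊢
    rw [ih (by simpa using h)]
    simp [add_comm]

theorem map_range_length_part_mark (l : List (ℕ × Bool)) :
    (List.range l.length).map (fun i => (part l i, mark l i)) = l := by
  refine List.ext_getElem (by simp) fun i _ h => ?_
  simp [part, mark, List.getElem?_eq_getElem h]

end PartSeq

section ListOfSeq

def listOfSeq (t : ℕ) (A : ℕ → ℕ) (c : ℕ → Bool) : List (ℕ × Bool) :=
  (List.range #{i ∈ range t | A i ≠ 0}).map fun i => (A i, c i)

variable {t : ℕ} {A : ℕ → ℕ} {c : ℕ → Bool}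

theorem length_listOfSeq : (listOfSeq t A c).length = #{i ∈ range t | A i ≠ 0} := by
  simp [listOfSeq]

theorem length_listOfSeq_le : (listOfSeq t A c).length ≤ t :=
  length_listOfSeq.trans_le ((card_filter_le _ _).trans (card_range t).le)

theorem getD_listOfSeq {i : ℕ} (h : i < #{i ∈ range t | A i ≠ 0}) :
    (listOfSeq t A c).getD i (0, false) = (A i, c i) := by
  rw [listOfSeq, List.getD_eq_getElem _ _ (by simpa only [List.length_map, List.length_range])]
  simp

theorem listOfSeq_part_mark {l : List (ℕ × Bool)} (hl : IsOverpartition l) (hlt : l.length ≤ t) :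
    listOfSeq t (part l) (mark l) = l := by
  have hcard : #{i ∈ range t | part l i ≠ 0} = l.length :=
    card_filter_ne_zero_of_iff (fun _ => part_ne_zero_iff hl.2.1) hlt
  rw [listOfSeq, hcard, map_range_length_part_mark]

variable (hA : Antitone A) (ht : ∀ i, t ≤ i → A i = 0)
include hA ht

theorem part_listOfSeq (i : ℕ) : part (listOfSeq t A c) i = A i := by
  rcases lt_or_ge i #{i ∈ range t | A i ≠ 0} with h | h
  · rw [part, getD_listOfSeq h]
  · rw [part_of_length_le (length_listOfSeq.trans_le h)]
    by_contra h0
    exact absurd ((hA.ne_zero_iff_lt_card_filter ht i).mp (Ne.symm h0)) (not_lt.mpr h)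

theorem mark_listOfSeq (i : ℕ) : mark (listOfSeq t A c) i = (decide (A i ≠ 0) && c i) := by
  rcases lt_or_ge i #{i ∈ range t | A i ≠ 0} with h | h
  · rw [mark, getD_listOfSeq h, decide_eq_true ((hA.ne_zero_iff_lt_card_filter ht i).mpr h)]
    rfl
  · rw [mark_of_length_le (length_listOfSeq.trans_le h),
      decide_eq_false (mt (hA.ne_zero_iff_lt_card_filter ht i).mp (not_lt.mpr h))]
    rfl

theorem length_listOfSeq_eq_iff (h1 : 1 ≤ t) : (listOfSeq t A c).length = t ↔ A (t - 1) ≠ 0 := by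
  rw [length_listOfSeq, hA.ne_zero_iff_lt_card_filter ht]
  have : #{i ∈ range t | A i ≠ 0} ≤ t := (card_filter_le _ _).trans (card_range t).le
  omega

theorem isOverpartition_listOfSeq (hc : ∀ i, c i = true → A (i + 1) < A i) :
    IsOverpartition (listOfSeq t A c) := by
  have hlen := @length_listOfSeq t A c
  refine ⟨?_, ?_, fun i hi hm => ?_⟩
  · simp only [listOfSeq, List.map_map, Function.comp_def, List.pairwise_map]
    exact List.pairwise_lt_range.imp fun hij => hA hij.le
  · simp only [listOfSeq, List.mem_map, List.mem_range]
    rintro _ ⟨i, hi, rfl⟩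
    exact Nat.pos_of_ne_zero ((hA.ne_zero_iff_lt_card_filter ht i).mpr hi)
  · rw [getD_listOfSeq (by omega)] at hm ⊢
    rw [getD_listOfSeq (by omega)]
    exact hc i hm

theorem sum_map_fst_listOfSeq : ((listOfSeq t A c).map Prod.fst).sum = ∑ i ∈ range t, A i := by
  rw [← sum_range_part length_listOfSeq_le]
  exact sum_congr rfl fun i _ => part_listOfSeq hA ht i

end ListOfSeq

section Interleave

variable {K t : ℕ}

def interleave (K : ℕ) (A : Fin K → ℕ → ℕ) (p : ℕ) : ℕ :=
  ∑ q : Fin K, if (q : ℕ) < p % K then A q (p / K + 1) else A q (p / K)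

def deinterleave (K t : ℕ) (x : ℕ → ℕ) (q i : ℕ) : ℕ :=
  ∑ m ∈ Ico i t, (x (m * K + q) - x (m * K + q + 1))

theorem interleave_mul_add (A : Fin K → ℕ → ℕ) (i : ℕ) {s : ℕ} (hs : s < K) :
    interleave K A (i * K + s) = ∑ q : Fin K, if (q : ℕ) < s then A q (i + 1) else A q i := by
  rw [interleave, Nat.mul_add_mod_of_lt hs, mul_add_div_of_lt hs]

theorem interleave_mul (A : Fin K → ℕ → ℕ) (hK : 0 < K) (i : ℕ) :
    interleave K A (i * K) = ∑ q : Fin K, A q i := by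
  simpa using interleave_mul_add A i hK

theorem interleave_mul_add_add (A : Fin K → ℕ → ℕ) (i : ℕ) (s : Fin K) :
    interleave K A (i * K + s) + A s (i + 1) = interleave K A (i * K + s + 1) + A s i := by
  have key := sum_ite_lt_succ_add (fun q => A q (i + 1)) (fun q => A q i) s
  rw [interleave_mul_add A i s.isLt]
  rcases lt_or_eq_of_le (Nat.succ_le_of_lt s.isLt) with h | h
  · rw [add_assoc, interleave_mul_add A i h]
    exact key.symm
  · have h' : (s : ℕ) + 1 = K := h
    rw [add_assoc, show i * K + (s + 1) = (i + 1) * K + 0 by rw [Nat.succ_mul, h', Nat.add_zero],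
      interleave_mul_add A (i + 1) (by omega)]
    simp only [Nat.not_lt_zero, if_false]
    rw [← key]
    congr 1
    exact sum_congr rfl fun q _ => by rw [if_pos (by omega)]

theorem interleave_antitone {A : Fin K → ℕ → ℕ} (hA : ∀ q, Antitone (A q)) :
    Antitone (interleave K A) := by
  refine antitone_nat_of_succ_le fun p => ?_
  rcases Nat.eq_zero_or_pos K with rfl | hK
  · simp [interleave]
  have hp := Nat.div_add_mod' p K
  have h := interleave_mul_add_add A (p / K) ⟨p % K, Nat.mod_lt p hK⟩
  have := hA ⟨p % K, Nat.mod_lt p hK⟩ (Nat.le_add_right (p / K) 1)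
  simp only [hp] at h
  omega

theorem interleave_of_le {A : Fin K → ℕ → ℕ} (hA : ∀ q i, t ≤ i → A q i = 0) {p : ℕ}
    (hp : t * K ≤ p) : interleave K A p = 0 := by
  rcases Nat.eq_zero_or_pos K with rfl | hK
  · simp [interleave]
  have ht : t ≤ p / K := (Nat.le_div_iff_mul_le hK).mpr hp
  refine sum_eq_zero fun q _ => ?_
  split_ifs
  · exact hA q _ (by omega)
  · exact hA q _ ht

theorem sum_range_interleave_mul (A : Fin K → ℕ → ℕ) (hK : 0 < K) :
    ∑ i ∈ range t, interleave K A (i * K) = ∑ q : Fin K, ∑ i ∈ range t, A q i := by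
  simp_rw [interleave_mul A hK]
  exact sum_comm

theorem deinterleave_antitone (x : ℕ → ℕ) (q : ℕ) : Antitone (deinterleave K t x q) :=
  fun _ _ hij => sum_le_sum_of_subset (Ico_subset_Ico_left hij)

theorem deinterleave_of_le (x : ℕ → ℕ) (q : ℕ) {i : ℕ} (h : t ≤ i) :
    deinterleave K t x q i = 0 := by
  rw [deinterleave, Ico_eq_empty (by omega), sum_empty]

theorem deinterleave_eq_add (x : ℕ → ℕ) (q : ℕ) {i : ℕ} (h : i < t) :
    deinterleave K t x q i = (x (i * K + q) - x (i * K + q + 1)) + deinterleave K t x q (i + 1) :=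
  sum_eq_sum_Ico_succ_bot h _

theorem deinterleave_sub_one (x : ℕ → ℕ) (q : ℕ) (ht : 1 ≤ t) :
    deinterleave K t x q (t - 1) = x ((t - 1) * K + q) - x ((t - 1) * K + q + 1) := by
  rw [deinterleave_eq_add x q (by omega), deinterleave_of_le x q (by omega), add_zero]

theorem deinterleave_ne_zero {x : ℕ → ℕ} (hx : ∀ p, t * K ≤ p → x p = 0) {q i : ℕ}
    (h : x (i * K + q + 1) < x (i * K + q)) : deinterleave K t x q i ≠ 0 := by
  rcases lt_or_ge i t with hi | hi
  · rw [deinterleave_eq_add x q hi]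
    omega
  · rw [hx _ (le_trans (Nat.mul_le_mul_right K hi) (Nat.le_add_right _ q))] at h
    omega

theorem deinterleave_interleave {A : Fin K → ℕ → ℕ} (hA : ∀ q, Antitone (A q))
    (hAt : ∀ q i, t ≤ i → A q i = 0) (q : Fin K) (i : ℕ) :
    deinterleave K t (interleave K A) q i = A q i := by
  rcases lt_or_ge i t with hi | hi
  · have hstep : ∀ m, interleave K A (m * K + q) - interleave K A (m * K + q + 1)
        = A q m - A q (m + 1) := fun m => by
      have := interleave_mul_add_add A m q
      have := hA q (Nat.le_add_right m 1)
      omega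
    rw [deinterleave, sum_congr rfl fun m _ => hstep m,
      sum_Ico_sub_succ_of_antitone (hA q) hi.le, hAt q t le_rfl, Nat.sub_zero]
  · rw [deinterleave_of_le _ _ hi, hAt q i hi]

theorem interleave_deinterleave {x : ℕ → ℕ} (hx : Antitone x) (hxt : ∀ p, t * K ≤ p → x p = 0) :
    interleave K (fun q => deinterleave K t x q) = x := by
  refine (interleave_antitone fun q => deinterleave_antitone x q).eq_of_sub_succ_eq hx
    (fun p hp => interleave_of_le (fun q i hi => deinterleave_of_le x q hi) hp) hxt
    fun p hp => ?_
  have hK : 0 < K := Nat.pos_of_ne_zero (by rintro rfl; simp at hp)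
  have hpK := Nat.div_add_mod' p K
  have hi : p / K < t := (Nat.div_lt_iff_lt_mul hK).mpr hp
  have h := interleave_mul_add_add (fun q : Fin K => deinterleave K t x q) (p / K)
    ⟨p % K, Nat.mod_lt p hK⟩
  have hD := deinterleave_eq_add (K := K) x (p % K) hi
  have hDA := deinterleave_antitone (K := K) (t := t) x (p % K) (Nat.le_add_right (p / K) 1)
  have := hx (Nat.le_add_right p 1)
  simp only [hpK] at h hD
  omega

end Interleave

theorem sub_one_mul_add {t : ℕ} (ht : 1 ≤ t) (K : ℕ) : (t - 1) * K + K = t * K := by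
  rw [← Nat.succ_mul, Nat.succ_eq_add_one, Nat.sub_add_cancel ht]

structure IsMarkedSeq (n k t r : ℕ) (x : ℕ → ℕ) (b : ℕ → Bool) : Prop where
  antitone : Antitone x
  ne_zero_iff : ∀ p, x p ≠ 0 ↔ p < (t - 1) * (2 * k + 1) + r
  sum_mul_eq : ∑ i ∈ range t, x (i * (2 * k + 1)) = n
  mark_imp : ∀ p, b p = true → p % (2 * k + 1) % 2 = 1 ∧ x (p + 1) < x p

theorem IsMarkedSeq.eq_zero_of_le {n k t r : ℕ} {x : ℕ → ℕ} {b : ℕ → Bool}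
    (h : IsMarkedSeq n k t r x b) (ht : 1 ≤ t) (hr : r ≤ 2 * k + 1) {p : ℕ}
    (hp : t * (2 * k + 1) ≤ p) : x p = 0 := by
  by_contra h0
  have := (h.ne_zero_iff p).mp h0
  have := sub_one_mul_add ht (2 * k + 1)
  omega

theorem IsMarkedSeq.eq_zero_iff {n k t r : ℕ} {x : ℕ → ℕ} {b : ℕ → Bool}
    (h : IsMarkedSeq n k t r x b) (p : ℕ) : x p = 0 ↔ (t - 1) * (2 * k + 1) + r ≤ p := by
  rw [← not_lt, ← h.ne_zero_iff, not_not]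

section Tuple

variable {n k t r : ℕ}

def IsRefinedTuple (n k t r : ℕ) (α : Fin (2 * k + 1) → List (ℕ × Bool)) : Prop :=
  (∀ i, IsOverpartition (α i)) ∧
  (∀ i : Fin (2 * k + 1), i.val % 2 = 0 → ∀ x ∈ α i, x.2 = false) ∧
  (∀ i : Fin (2 * k + 1), (α i).length ≤ t) ∧
  (∀ i : Fin (2 * k + 1), i.val = r - 1 → (α i).length = t) ∧
  (∀ i : Fin (2 * k + 1), r ≤ i.val → (α i).length < t) ∧
  ∑ i, ((α i).map Prod.fst).sum = n

def tupleToSeq (k : ℕ) (α : Fin (2 * k + 1) → List (ℕ × Bool)) : (ℕ → ℕ) × (ℕ → Bool) :=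
  (interleave (2 * k + 1) (fun q => part (α q)),
    fun p => mark (α (Fin.ofNat _ p)) (p / (2 * k + 1)))

def seqToTuple (k t : ℕ) (x : ℕ → ℕ) (b : ℕ → Bool) : Fin (2 * k + 1) → List (ℕ × Bool) :=
  fun q => listOfSeq t (deinterleave (2 * k + 1) t x q) fun i => b (i * (2 * k + 1) + q)

theorem Fin.ofNat_mul_add {K : ℕ} [NeZero K] (i : ℕ) (q : Fin K) : Fin.ofNat K (i * K + q) = q :=
  Fin.ext (by rw [Fin.val_ofNat, Nat.mul_add_mod_of_lt q.isLt])

theorem isMarkedSeq_tupleToSeq (ht : 1 ≤ t) (hr1 : 1 ≤ r) (hr2 : r ≤ 2 * k + 1)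
    {α : Fin (2 * k + 1) → List (ℕ × Bool)} (h : IsRefinedTuple n k t r α) :
    IsMarkedSeq n k t r (tupleToSeq k α).1 (tupleToSeq k α).2 := by
  obtain ⟨hov, hev, hlen, hlenr, hlenr', hsum⟩ := h
  have hA q := (hov q).antitone_part
  have hAt q i (hi : t ≤ i) : part (α q) i = 0 := part_of_length_le ((hlen q).trans hi)
  have hx := interleave_antitone hA
  refine ⟨hx, hx.ne_zero_iff_lt ?_ ?_, ?_, fun p hb => ?_⟩
  · rcases lt_or_eq_of_le hr2 with hr | rfl
    · rw [interleave_mul_add _ _ hr]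
      refine sum_eq_zero fun q _ => ?_
      split_ifs with hq
      · exact hAt q _ (by omega)
      · exact part_of_length_le (Nat.le_sub_one_of_lt (hlenr' q (not_lt.mp hq)))
    · rw [sub_one_mul_add ht]
      exact interleave_of_le hAt le_rfl
  · have hr' : r - 1 < 2 * k + 1 := by omega
    rw [show (t - 1) * (2 * k + 1) + r - 1 = (t - 1) * (2 * k + 1) + (r - 1) by omega,
      interleave_mul_add _ _ hr']
    intro h0
    have := (sum_eq_zero_iff.mp h0) ⟨r - 1, hr'⟩ (mem_univ _)
    rw [if_neg (lt_irrefl _)] at this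
    exact (part_ne_zero_iff (hov _).2.1).mpr (by rw [hlenr _ rfl]; omega) this
  · rw [tupleToSeq, sum_range_interleave_mul _ (by omega), ← hsum]
    exact sum_congr rfl fun q _ => sum_range_part (hlen q)
  · set q : Fin (2 * k + 1) := Fin.ofNat _ p
    have hq : (q : ℕ) = p % (2 * k + 1) := Fin.val_ofNat _ p
    have hp := Nat.div_add_mod' p (2 * k + 1)
    simp only [tupleToSeq] at hb ⊢
    refine ⟨?_, ?_⟩
    · by_contra hodd
      rw [mark_eq_false (hev q (by omega))] at hb
      exact Bool.false_ne_true hb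
    · have hlt := (hov q).part_succ_lt_of_mark hb
      have key := interleave_mul_add_add (fun q => part (α q)) (p / (2 * k + 1)) q
      rw [hq, hp] at key
      omega

theorem isRefinedTuple_seqToTuple (ht : 1 ≤ t) (hr1 : 1 ≤ r) (hr2 : r ≤ 2 * k + 1)
    {x : ℕ → ℕ} {b : ℕ → Bool} (h : IsMarkedSeq n k t r x b) :
    IsRefinedTuple n k t r (seqToTuple k t x b) := by
  have hx0 {p} := h.eq_zero_of_le ht hr2 (p := p)
  have hD q := deinterleave_antitone (K := 2 * k + 1) (t := t) x q
  have hDt q i := deinterleave_of_le (K := 2 * k + 1) (t := t) x q (i := i)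
  have hlen q c := length_listOfSeq_eq_iff (c := c) (hD q) (hDt q) ht
  refine ⟨fun q => isOverpartition_listOfSeq (hD q) (hDt q) fun i hb => ?_,
    fun q hq y hy => ?_, fun q => length_listOfSeq_le, fun q hq => (hlen q _).mpr ?_,
    fun q hq => length_listOfSeq_le.lt_of_ne fun hq' => (hlen q _).mp hq' ?_, ?_⟩
  · have hlt := (h.mark_imp _ hb).2
    have hi : i < t := by
      by_contra hi
      rw [hx0 (le_trans (Nat.mul_le_mul_right _ (not_lt.mp hi)) (Nat.le_add_right _ _))] at hlt
      omega
    rw [deinterleave_eq_add x q hi]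
    omega
  · simp only [seqToTuple, listOfSeq, List.mem_map] at hy
    obtain ⟨i, -, rfl⟩ := hy
    by_contra hb
    have := (h.mark_imp _ (Bool.not_eq_false _ ▸ hb)).1
    rw [Nat.mul_add_mod_of_lt q.isLt] at this
    omega
  · have h1 := (h.ne_zero_iff ((t - 1) * (2 * k + 1) + q)).mpr (by omega)
    have h2 := (h.eq_zero_iff ((t - 1) * (2 * k + 1) + q + 1)).mpr (by omega)
    rw [deinterleave_sub_one x q ht]
    omega
  · rw [deinterleave_sub_one x q ht, (h.eq_zero_iff _).mpr (by omega), Nat.zero_sub]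
  · simp only [seqToTuple, sum_map_fst_listOfSeq (hD _) (hDt _)]
    rw [← sum_range_interleave_mul (fun q => deinterleave (2 * k + 1) t x q) (by omega),
      interleave_deinterleave h.antitone fun p => hx0]
    exact h.sum_mul_eq

theorem seqToTuple_tupleToSeq {α : Fin (2 * k + 1) → List (ℕ × Bool)}
    (h : IsRefinedTuple n k t r α) : seqToTuple k t (tupleToSeq k α).1 (tupleToSeq k α).2 = α := by
  funext q
  have hD : deinterleave (2 * k + 1) t (tupleToSeq k α).1 q = part (α q) :=
    funext <| deinterleave_interleave (fun q => (h.1 q).antitone_part)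
      (fun q i hi => part_of_length_le ((h.2.2.1 q).trans hi)) q
  have hb : (fun i => (tupleToSeq k α).2 (i * (2 * k + 1) + q)) = mark (α q) := by
    funext i
    simp only [tupleToSeq, Fin.ofNat_mul_add, mul_add_div_of_lt q.isLt]
  rw [seqToTuple, hD, hb, listOfSeq_part_mark (h.1 q) (h.2.2.1 q)]

theorem tupleToSeq_seqToTuple (ht : 1 ≤ t) (hr2 : r ≤ 2 * k + 1) {x : ℕ → ℕ} {b : ℕ → Bool}
    (h : IsMarkedSeq n k t r x b) : tupleToSeq k (seqToTuple k t x b) = (x, b) := by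
  have hx0 {p} := h.eq_zero_of_le ht hr2 (p := p)
  have hD q := deinterleave_antitone (K := 2 * k + 1) (t := t) x q
  have hDt q i := deinterleave_of_le (K := 2 * k + 1) (t := t) x q (i := i)
  have hpart q c : part (listOfSeq t (deinterleave (2 * k + 1) t x q) c) =
      deinterleave (2 * k + 1) t x q := funext (part_listOfSeq (hD q) (hDt q))
  refine Prod.ext ?_ (funext fun p => ?_)
  · simp only [tupleToSeq, seqToTuple, hpart]
    exact interleave_deinterleave h.antitone fun p => hx0
  · have hp := Nat.div_add_mod' p (2 * k + 1)
    simp only [tupleToSeq, seqToTuple, mark_listOfSeq (hD _) (hDt _), Fin.val_ofNat, hp]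
    cases hb : b p
    · simp
    · have hlt := (h.mark_imp p hb).2
      rw [← hp] at hlt
      simp [deinterleave_ne_zero (fun p => hx0) hlt]

def refinedTupleEquiv (ht : 1 ≤ t) (hr1 : 1 ≤ r) (hr2 : r ≤ 2 * k + 1) :
    {α // IsRefinedTuple n k t r α} ≃ {xb : (ℕ → ℕ) × (ℕ → Bool) // IsMarkedSeq n k t r xb.1 xb.2}
    where
  toFun α := ⟨tupleToSeq k α, isMarkedSeq_tupleToSeq ht hr1 hr2 α.2⟩
  invFun xb := ⟨seqToTuple k t xb.1.1 xb.1.2, isRefinedTuple_seqToTuple ht hr1 hr2 xb.2⟩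
  left_inv α := Subtype.ext (seqToTuple_tupleToSeq α.2)
  right_inv xb := Subtype.ext (tupleToSeq_seqToTuple ht hr2 xb.2)

end Tuple

section PairSort

variable {k : ℕ}

/-- Sorts decreasingly the pairs `(y (i(2k+1) + 2j + 1), y (i(2k+1) + 2j + 2))`, `j < k`; for
`y m = π (m + 1)` these are the pairs `(π_{b+2j+2}, π_{b+2j+3})` of the building blocks. -/
def sortPairs (k : ℕ) (y : ℕ → ℕ) (p : ℕ) : ℕ :=
  if p % (2 * k + 1) = 0 then y p
  else if p % (2 * k + 1) % 2 = 1 then max (y p) (y (p + 1))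
  else min (y (p - 1)) (y p)

def pairMarks (k : ℕ) (y : ℕ → ℕ) (p : ℕ) : Bool :=
  decide (p % (2 * k + 1) % 2 = 1 ∧ y p < y (p + 1))

def unsortPairs (k : ℕ) (x : ℕ → ℕ) (b : ℕ → Bool) (p : ℕ) : ℕ :=
  if p % (2 * k + 1) = 0 then x p
  else if p % (2 * k + 1) % 2 = 1 then (if b p then x (p + 1) else x p)
  else if b (p - 1) then x (p - 1) else x p

theorem succ_mod_of_odd {p : ℕ} (h : p % (2 * k + 1) % 2 = 1) :
    (p + 1) % (2 * k + 1) = p % (2 * k + 1) + 1 := by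
  have hp := Nat.div_add_mod' p (2 * k + 1)
  have := Nat.mod_lt p (by omega : 0 < 2 * k + 1)
  rw [show p + 1 = p / (2 * k + 1) * (2 * k + 1) + (p % (2 * k + 1) + 1) by omega,
    Nat.mul_add_mod_of_lt (by omega)]

theorem mod_trichotomy (p : ℕ) :
    p % (2 * k + 1) = 0 ∨ p % (2 * k + 1) % 2 = 1 ∨
      ∃ p', p = p' + 1 ∧ p' % (2 * k + 1) % 2 = 1 := by
  by_cases h0 : p % (2 * k + 1) = 0
  · exact Or.inl h0
  by_cases h1 : p % (2 * k + 1) % 2 = 1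
  · exact Or.inr (Or.inl h1)
  have hp := Nat.div_add_mod' p (2 * k + 1)
  have := Nat.mod_lt p (by omega : 0 < 2 * k + 1)
  refine Or.inr (Or.inr ⟨p - 1, by omega, ?_⟩)
  rw [show p - 1 = p / (2 * k + 1) * (2 * k + 1) + (p % (2 * k + 1) - 1) by omega,
    Nat.mul_add_mod_of_lt (by omega)]
  omega

theorem mul_le_of_mul_le_succ_of_odd {t p : ℕ} (hp : t * (2 * k + 1) ≤ p + 1)
    (h : p % (2 * k + 1) % 2 = 1) :
    t * (2 * k + 1) ≤ p := by
  by_contra hlt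
  have := succ_mod_of_odd h
  rw [show p + 1 = t * (2 * k + 1) by omega, Nat.mul_mod_left] at this
  omega

variable {y x : ℕ → ℕ} {b : ℕ → Bool} {p : ℕ}

theorem sortPairs_of_mod_eq_zero (h : p % (2 * k + 1) = 0) : sortPairs k y p = y p := by
  rw [sortPairs, if_pos h]

theorem sortPairs_of_odd (h : p % (2 * k + 1) % 2 = 1) :
    sortPairs k y p = max (y p) (y (p + 1)) := by
  rw [sortPairs, if_neg (by omega), if_pos h]

theorem sortPairs_succ_of_odd (h : p % (2 * k + 1) % 2 = 1) :
    sortPairs k y (p + 1) = min (y p) (y (p + 1)) := by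
  rw [sortPairs, succ_mod_of_odd h, if_neg (by omega), if_neg (by omega), Nat.add_sub_cancel]

theorem sortPairs_mul (y : ℕ → ℕ) (i : ℕ) :
    sortPairs k y (i * (2 * k + 1)) = y (i * (2 * k + 1)) :=
  sortPairs_of_mod_eq_zero (Nat.mul_mod_left _ _)

theorem unsortPairs_of_mod_eq_zero (h : p % (2 * k + 1) = 0) : unsortPairs k x b p = x p := by
  rw [unsortPairs, if_pos h]

theorem unsortPairs_of_odd (h : p % (2 * k + 1) % 2 = 1) :
    unsortPairs k x b p = if b p then x (p + 1) else x p := by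
  rw [unsortPairs, if_neg (by omega), if_pos h]

theorem unsortPairs_succ_of_odd (h : p % (2 * k + 1) % 2 = 1) :
    unsortPairs k x b (p + 1) = if b p then x p else x (p + 1) := by
  rw [unsortPairs, succ_mod_of_odd h, if_neg (by omega), if_neg (by omega), Nat.add_sub_cancel]

theorem sortPairs_unsortPairs (hx : Antitone x) : sortPairs k (unsortPairs k x b) = x := by
  funext p
  rcases mod_trichotomy (k := k) p with h | h | ⟨p, rfl, h⟩
  · rw [sortPairs_of_mod_eq_zero h, unsortPairs_of_mod_eq_zero h]
  · rw [sortPairs_of_odd h, unsortPairs_of_odd h, unsortPairs_succ_of_odd h]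
    have := hx (Nat.le_add_right p 1)
    cases b p <;> simp [this]
  · rw [sortPairs_succ_of_odd h, unsortPairs_of_odd h, unsortPairs_succ_of_odd h]
    have := hx (Nat.le_add_right p 1)
    cases b p <;> simp [this]

theorem unsortPairs_sortPairs (y : ℕ → ℕ) : unsortPairs k (sortPairs k y) (pairMarks k y) = y := by
  funext p
  rcases mod_trichotomy (k := k) p with h | h | ⟨p, rfl, h⟩
  · rw [unsortPairs_of_mod_eq_zero h, sortPairs_of_mod_eq_zero h]
  · rw [unsortPairs_of_odd h, sortPairs_succ_of_odd h, sortPairs_of_odd h]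
    by_cases hlt : y p < y (p + 1) <;> simp [pairMarks, h, hlt] <;> omega
  · rw [unsortPairs_succ_of_odd h, sortPairs_succ_of_odd h, sortPairs_of_odd h]
    by_cases hlt : y p < y (p + 1) <;> simp [pairMarks, h, hlt] <;> omega

theorem pairMarks_unsortPairs (hx : Antitone x)
    (hb : ∀ p, b p = true → p % (2 * k + 1) % 2 = 1 ∧ x (p + 1) < x p) :
    pairMarks k (unsortPairs k x b) = b := by
  funext p
  by_cases h : p % (2 * k + 1) % 2 = 1
  · rw [pairMarks, unsortPairs_of_odd h, unsortPairs_succ_of_odd h]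
    have := hx (Nat.le_add_right p 1)
    cases hbp : b p
    · simp [h]
      omega
    · simp [h, (hb p hbp).2]
  · cases hbp : b p
    · simp [pairMarks, h]
    · exact absurd (hb p hbp).1 h

variable {t : ℕ}

theorem sortPairs_of_le (hy : ∀ p, t * (2 * k + 1) ≤ p → y p = 0)
    (hp : t * (2 * k + 1) ≤ p) : sortPairs k y p = 0 := by
  rcases mod_trichotomy (k := k) p with h | h | ⟨p, rfl, h⟩
  · rw [sortPairs_of_mod_eq_zero h, hy p hp]
  · rw [sortPairs_of_odd h, hy p hp, hy (p + 1) (by omega), max_self]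
  · rw [sortPairs_succ_of_odd h, hy p (mul_le_of_mul_le_succ_of_odd hp h), hy (p + 1) hp, min_self]

theorem unsortPairs_of_le (hx : ∀ p, t * (2 * k + 1) ≤ p → x p = 0)
    (hp : t * (2 * k + 1) ≤ p) : unsortPairs k x b p = 0 := by
  rcases mod_trichotomy (k := k) p with h | h | ⟨p, rfl, h⟩
  · rw [unsortPairs_of_mod_eq_zero h, hx p hp]
  · rw [unsortPairs_of_odd h, hx p hp, hx (p + 1) (by omega), ite_self]
  · rw [unsortPairs_succ_of_odd h, hx p (mul_le_of_mul_le_succ_of_odd hp h), hx (p + 1) hp,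
      ite_self]

theorem sortPairs_mul_add_odd (y : ℕ → ℕ) (i : ℕ) {j : ℕ} (hj : j < k) :
    sortPairs k y (i * (2 * k + 1) + 2 * j + 1)
      = max (y (i * (2 * k + 1) + 2 * j + 1)) (y (i * (2 * k + 1) + 2 * j + 2)) :=
  sortPairs_of_odd (by
    show (i * (2 * k + 1) + (2 * j + 1)) % (2 * k + 1) % 2 = 1
    rw [Nat.mul_add_mod_of_lt (by omega)]
    omega)

theorem sortPairs_mul_add_even (y : ℕ → ℕ) (i : ℕ) {j : ℕ} (hj : j < k) :
    sortPairs k y (i * (2 * k + 1) + 2 * j + 2)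
      = min (y (i * (2 * k + 1) + 2 * j + 1)) (y (i * (2 * k + 1) + 2 * j + 2)) :=
  sortPairs_succ_of_odd (by
    show (i * (2 * k + 1) + (2 * j + 1)) % (2 * k + 1) % 2 = 1
    rw [Nat.mul_add_mod_of_lt (by omega)]
    omega)

theorem ite_ne_zero_max_add_min (a c : ℕ) :
    ((if max a c ≠ 0 then 1 else 0) + if min a c ≠ 0 then 1 else 0)
      = ((if a ≠ 0 then 1 else 0) + if c ≠ 0 then 1 else 0 : ℕ) := by
  rcases le_total a c with h | h
  · rw [max_eq_right h, min_eq_left h, add_comm]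
  · rw [max_eq_left h, min_eq_right h]

theorem card_filter_sortPairs (y : ℕ → ℕ) (t : ℕ) :
    #{p ∈ range (t * (2 * k + 1)) | sortPairs k y p ≠ 0}
      = #{p ∈ range (t * (2 * k + 1)) | y p ≠ 0} := by
  simp only [card_filter, sum_range_mul _ t, sum_range_two_mul_add_one, ← add_assoc]
  refine sum_congr rfl fun i _ => ?_
  rw [add_zero, sortPairs_mul]
  congr 1
  refine sum_congr rfl fun j hj => ?_
  rw [sortPairs_mul_add_odd y i (mem_range.mp hj), sortPairs_mul_add_even y i (mem_range.mp hj)]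
  exact ite_ne_zero_max_add_min _ _

end PairSort

section Diamond

variable {n k t r : ℕ}

theorem isDiamond_iff_s15 (hk : 1 ≤ k) (π : ℕ →₀ ℕ) :
    IsDiamond k π ↔ π 0 = 0 ∧ Antitone (sortPairs k fun p => π (p + 1)) := by
  set S := sortPairs k fun p => π (p + 1)
  have head i : S (i * (2 * k + 1)) = π (i * (2 * k + 1) + 1) := sortPairs_mul _ i
  have fst i j (hj : j < k) : S (i * (2 * k + 1) + 2 * j + 1)
      = max (π (i * (2 * k + 1) + 2 * j + 2)) (π (i * (2 * k + 1) + 2 * j + 3)) :=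
    sortPairs_mul_add_odd _ i hj
  have snd i j (hj1 : 1 ≤ j) (hj : j ≤ k) : S (i * (2 * k + 1) + 2 * j)
      = min (π (i * (2 * k + 1) + 2 * j)) (π (i * (2 * k + 1) + 2 * j + 1)) := by
    have := sortPairs_mul_add_even (k := k) (fun p => π (p + 1)) i (j := j - 1) (by omega)
    rwa [show i * (2 * k + 1) + 2 * (j - 1) + 2 = i * (2 * k + 1) + 2 * j by omega] at this
  have fst0 i : S (i * (2 * k + 1) + 1)
      = max (π (i * (2 * k + 1) + 2)) (π (i * (2 * k + 1) + 3)) := fst i 0 (by omega)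
  have head' i : S (i * (2 * k + 1) + 2 * k + 1) = π ((i + 1) * (2 * k + 1) + 1) := by
    rw [show i * (2 * k + 1) + 2 * k + 1 = (i + 1) * (2 * k + 1) by ring]
    exact head (i + 1)
  constructor
  · rintro ⟨h0, hD⟩
    refine ⟨h0, antitone_nat_of_succ_le fun p => ?_⟩
    obtain ⟨ha, hb, hc⟩ := hD (p / (2 * k + 1))
    have hp := Nat.div_add_mod' p (2 * k + 1)
    have hs := Nat.mod_lt p (by omega : 0 < 2 * k + 1)
    set i := p / (2 * k + 1)
    obtain ⟨j, hj | hj⟩ := Nat.even_or_odd' (p % (2 * k + 1))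
    · rcases Nat.eq_zero_or_pos j with rfl | hj0
      · rw [← hp, hj]
        simp only [Nat.mul_zero, Nat.add_zero]
        rw [fst0, head]
        exact ha
      rcases lt_or_eq_of_le (show j ≤ k by omega) with hjk | hjk
      · rw [← hp, hj, fst i j hjk, snd i j hj0 hjk.le]
        exact hb j hj0 hjk
      · rw [← hp, hj, hjk, snd i k hk le_rfl, head']
        exact hc
    · rw [← hp, hj, ← add_assoc, fst i j (by omega), show i * (2 * k + 1) + 2 * j + 1 + 1
        = i * (2 * k + 1) + 2 * (j + 1) by ring, snd i (j + 1) (by omega) (by omega)]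
      exact min_le_max
  · rintro ⟨h0, hS⟩
    refine ⟨h0, fun i => ⟨?_, fun j hj1 hjk => ?_, ?_⟩⟩
    · have := hS (Nat.le_add_right (i * (2 * k + 1)) 1)
      rwa [fst0, head] at this
    · have := hS (Nat.le_add_right (i * (2 * k + 1) + 2 * j) 1)
      rwa [fst i j hjk, snd i j hj1 hjk.le] at this
    · have := hS (Nat.le_add_right (i * (2 * k + 1) + 2 * k) 1)
      rwa [head', snd i k hk le_rfl] at this

noncomputable def finsuppOfSeq (N : ℕ) (y : ℕ → ℕ) : ℕ →₀ ℕ :=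
  Finsupp.onFinset (Icc 1 N) (fun m => if m ∈ Icc 1 N then y (m - 1) else 0)
    fun _ hm => by_contra fun h => hm (if_neg h)

theorem finsuppOfSeq_zero (N : ℕ) (y : ℕ → ℕ) : finsuppOfSeq N y 0 = 0 := by
  simp [finsuppOfSeq]

theorem finsuppOfSeq_succ {N : ℕ} {y : ℕ → ℕ} (hy : ∀ p, N ≤ p → y p = 0) (p : ℕ) :
    finsuppOfSeq N y (p + 1) = y p := by
  rw [finsuppOfSeq, Finsupp.onFinset_apply]
  split_ifs with h
  · rfl
  · rw [hy p (by simp at h; omega)]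

theorem le_of_mem_support_finsuppOfSeq {N : ℕ} {y : ℕ → ℕ} {m : ℕ}
    (hm : m ∈ (finsuppOfSeq N y).support) : m ≤ N :=
  (mem_Icc.mp (Finsupp.support_onFinset_subset hm)).2

section Support

variable {π : ℕ →₀ ℕ} {N : ℕ} (h0 : π 0 = 0) (hN : ∀ m ∈ π.support, m ≤ N)

include hN in
theorem apply_eq_zero_of_lt {m : ℕ} (hm : N < m) : π m = 0 :=
  Finsupp.notMem_support_iff.mp fun h => absurd (hN m h) (not_le.mpr hm)

include h0 hN in
theorem finsuppOfSeq_apply_succ : finsuppOfSeq N (fun p => π (p + 1)) = π := by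
  ext m
  rcases m with _ | p
  · rw [finsuppOfSeq_zero, h0]
  · exact finsuppOfSeq_succ (fun p hp => apply_eq_zero_of_lt hN (by omega)) p

include h0 hN in
theorem card_support_eq_card_filter : π.support.card = #{p ∈ range N | π (p + 1) ≠ 0} := by
  refine (card_bij (fun p _ => p + 1) (fun p hp => ?_) (fun _ _ _ _ => Nat.succ_inj.mp)
    fun m hm => ⟨m - 1, ?_⟩).symm
  · exact Finsupp.mem_support_iff.mpr (mem_filter.mp hp).2
  · have := hN m hm
    have hm0 : m ≠ 0 := by rintro rfl; exact Finsupp.mem_support_iff.mp hm h0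
    refine ⟨mem_filter.mpr ⟨mem_range.mpr (by omega), ?_⟩, by omega⟩
    rw [Nat.sub_add_cancel (Nat.pos_of_ne_zero hm0)]
    exact Finsupp.mem_support_iff.mp hm

end Support

theorem diamondWeight_eq {π : ℕ →₀ ℕ} (hN : ∀ m ∈ π.support, m ≤ t * (2 * k + 1)) :
    diamondWeight k π = ∑ i ∈ range t, π (i * (2 * k + 1) + 1) := by
  rw [diamondWeight, sum_subset (s₂ := range (t * (2 * k + 1) + 1))
    (fun m hm => mem_range.mpr (Nat.lt_succ_of_le (hN m hm)))
    fun m _ hm => by rw [Finsupp.notMem_support_iff.mp hm, ite_self],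
    sum_range_succ', if_neg (by omega), add_zero, sum_range_mul]
  refine sum_congr rfl fun i _ => ?_
  rw [sum_eq_single_of_mem 0 (mem_range.mpr (by omega)) fun s hs hs0 => if_neg ?_]
  · rw [if_pos ⟨by omega, by simp⟩, add_zero]
  · rw [Nat.add_sub_cancel, Nat.mul_add_mod_of_lt (mem_range.mp hs)]
    omega

def IsRefinedDiamond (n k t r : ℕ) (π : ℕ →₀ ℕ) : Prop :=
  IsDiamond k π ∧ diamondWeight k π = n ∧ (∀ m ∈ π.support, m ≤ t * (2 * k + 1)) ∧
    π.support.card = (t - 1) * (2 * k + 1) + r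

def diamondToSeq (k : ℕ) (π : ℕ →₀ ℕ) : (ℕ → ℕ) × (ℕ → Bool) :=
  (sortPairs k fun p => π (p + 1), pairMarks k fun p => π (p + 1))

noncomputable def seqToDiamond (k t : ℕ) (x : ℕ → ℕ) (b : ℕ → Bool) : ℕ →₀ ℕ :=
  finsuppOfSeq (t * (2 * k + 1)) (unsortPairs k x b)

theorem isMarkedSeq_diamondToSeq (hk : 1 ≤ k) {π : ℕ →₀ ℕ} (h : IsRefinedDiamond n k t r π) :
    IsMarkedSeq n k t r (diamondToSeq k π).1 (diamondToSeq k π).2 := by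
  obtain ⟨hD, hw, hN, hcard⟩ := h
  obtain ⟨h0, hS⟩ := (isDiamond_iff_s15 hk π).mp hD
  dsimp only [diamondToSeq]
  have hy (p) (hp : t * (2 * k + 1) ≤ p) : π (p + 1) = 0 := apply_eq_zero_of_lt hN (by omega)
  refine ⟨hS, fun p => ?_, ?_, fun p hb => ?_⟩
  · rw [hS.ne_zero_iff_lt_card_filter (fun p => sortPairs_of_le hy), card_filter_sortPairs,
      ← card_support_eq_card_filter h0 hN, hcard]
  · rw [← hw, diamondWeight_eq hN]
    exact sum_congr rfl fun i _ => sortPairs_mul _ i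
  · obtain ⟨hodd, hlt⟩ := of_decide_eq_true hb
    refine ⟨hodd, ?_⟩
    rw [sortPairs_of_odd hodd, sortPairs_succ_of_odd hodd]
    exact (min_le_left _ _).trans_lt (hlt.trans_le (le_max_right _ _))

theorem seqToDiamond_succ (ht : 1 ≤ t) (hr2 : r ≤ 2 * k + 1) {x : ℕ → ℕ} {b : ℕ → Bool}
    (h : IsMarkedSeq n k t r x b) (p : ℕ) : seqToDiamond k t x b (p + 1) = unsortPairs k x b p :=
  finsuppOfSeq_succ (fun _ => unsortPairs_of_le fun _ => h.eq_zero_of_le ht hr2) p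

theorem isRefinedDiamond_seqToDiamond (hk : 1 ≤ k) (ht : 1 ≤ t) (hr2 : r ≤ 2 * k + 1)
    {x : ℕ → ℕ} {b : ℕ → Bool} (h : IsMarkedSeq n k t r x b) :
    IsRefinedDiamond n k t r (seqToDiamond k t x b) := by
  have hshift' := seqToDiamond_succ ht hr2 h
  have hshift : (fun p => seqToDiamond k t x b (p + 1)) = unsortPairs k x b := funext hshift'
  have hN m (hm : m ∈ (seqToDiamond k t x b).support) : m ≤ t * (2 * k + 1) :=
    le_of_mem_support_finsuppOfSeq hm
  have h0 : seqToDiamond k t x b 0 = 0 := finsuppOfSeq_zero _ _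
  refine ⟨(isDiamond_iff_s15 hk _).mpr ⟨h0, ?_⟩, ?_, hN, ?_⟩
  · rw [hshift, sortPairs_unsortPairs h.antitone]
    exact h.antitone
  · rw [diamondWeight_eq hN, ← h.sum_mul_eq]
    refine sum_congr rfl fun i _ => ?_
    rw [hshift', unsortPairs_of_mod_eq_zero (Nat.mul_mod_left _ _)]
  · simp only [card_support_eq_card_filter h0 hN, hshift']
    rw [← card_filter_sortPairs, sortPairs_unsortPairs h.antitone]
    exact card_filter_ne_zero_of_iff h.ne_zero_iff (by
      have := sub_one_mul_add ht (2 * k + 1)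
      omega)

noncomputable def refinedDiamondEquiv (hk : 1 ≤ k) (ht : 1 ≤ t) (hr2 : r ≤ 2 * k + 1) :
    {xb : (ℕ → ℕ) × (ℕ → Bool) // IsMarkedSeq n k t r xb.1 xb.2} ≃
      {π // IsRefinedDiamond n k t r π} where
  toFun xb := ⟨seqToDiamond k t xb.1.1 xb.1.2, isRefinedDiamond_seqToDiamond hk ht hr2 xb.2⟩
  invFun π := ⟨diamondToSeq k π, isMarkedSeq_diamondToSeq hk π.2⟩
  left_inv xb := by
    obtain ⟨⟨x, b⟩, h⟩ := xb
    have hshift : (fun p => seqToDiamond k t x b (p + 1)) = unsortPairs k x b :=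
      funext (seqToDiamond_succ ht hr2 h)
    refine Subtype.ext (Prod.ext ?_ ?_)
    · exact (congrArg (sortPairs k) hshift).trans (sortPairs_unsortPairs h.antitone)
    · exact (congrArg (pairMarks k) hshift).trans (pairMarks_unsortPairs h.antitone h.mark_imp)
  right_inv π := by
    obtain ⟨π, hD, -, hN, -⟩ := π
    refine Subtype.ext ?_
    change finsuppOfSeq _ (unsortPairs k (sortPairs k _) (pairMarks k _)) = π
    rw [unsortPairs_sortPairs, finsuppOfSeq_apply_succ ((isDiamond_iff_s15 hk π).mp hD).1 hN]

end Diamond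

/-- Refined diamond theorem: `(2k+1)`-tuples of total weight `n` (even positions
overpartitions, odd positions ordinary partitions), with maximal length `t` attained
last at (1-based) index `r`, are equinumerous with `k`-elongated partition diamonds of
`n` of length `t` with exactly `(t-1)(2k+1) + r` nonzero entries. -/
theorem diamond_tuple_refined (n k t r : ℕ) (hk : 1 ≤ k) (ht : 1 ≤ t)
    (hr1 : 1 ≤ r) (hr2 : r ≤ 2 * k + 1) :
    Nat.card {α : Fin (2 * k + 1) → List (ℕ × Bool) //
        (∀ i, IsOverpartition (α i)) ∧
        (∀ i : Fin (2 * k + 1), i.val % 2 = 0 → ∀ x ∈ α i, x.2 = false) ∧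
        (∀ i : Fin (2 * k + 1), (α i).length ≤ t) ∧
        (∀ i : Fin (2 * k + 1), i.val = r - 1 → (α i).length = t) ∧
        (∀ i : Fin (2 * k + 1), r ≤ i.val → (α i).length < t) ∧
        ∑ i, ((α i).map Prod.fst).sum = n} =
      Nat.card {π : ℕ →₀ ℕ // IsDiamond k π ∧ diamondWeight k π = n ∧
        (∀ m ∈ π.support, m ≤ t * (2 * k + 1)) ∧
        π.support.card = (t - 1) * (2 * k + 1) + r} :=
  Nat.card_congr ((refinedTupleEquiv ht hr1 hr2).trans (refinedDiamondEquiv hk ht hr2))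
end

section
/- For positive integers n, k, t, r, s with 1 ≤ r ≤ k, the number of k-tuples (α¹, …, αᵏ) of strict overpartitions of total weight n with exactly s overlined parts, where α¹, …, αʳ have length t and α^{r+1}, …, αᵏ have length t−1, and for i ≠ r every overlined part of αⁱ is at least 2, equals the number of Schmidt k-overpartitions of n with (t−1)k+r parts, exactly s of which are overlined. -/
/-!
A strict overpartition `λ₁ > ⋯ > λ_L` is determined by its gaps `d_j = λ_j - λ_{j+1}`
(with `λ_{L+1} = 0`) together with its overline marks: the conditions are `d_j ≥ 1`, and
`d_j ≥ 2` whenever `λ_j` is overlined and `j < L`. Its weight is `∑ j d_j`, and its Schmidt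
`k`-weight, the sum of the `λ_j` with `j ≡ 1 (mod k)`, is `∑ ⌈j/k⌉ d_j`, because `d_j` is
counted once for each such position `≤ j`.

Dealing the gaps of a Schmidt `k`-overpartition with `(t-1)k + r` parts into `k` rows, gap `j`
going to row `i` when `j ≡ i (mod k)`, gives `t` gaps to each of the first `r` rows and `t - 1`
to the others, and `⌈j/k⌉` becomes the position of the gap within its row. Reading each row as
the gap sequence of a strict overpartition thus turns the Schmidt weight into the total weight
and keeps the overline marks. The last gap overall becomes the last gap of row `r`; the last gap
of any other row is an interior gap, so it is at least 2 if marked, which is the extra condition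
on `αⁱ` for `i ≠ r`.
-/

/-- Sum of the parts of `l` in positions `1, k+1, 2k+1, …` (0-indexed `0, k, 2k, …`). -/
def schmidtSum (k : ℕ) (l : List ℕ) : ℕ :=
  ∑ i ∈ Finset.range l.length, if i % k = 0 then l.getD i 0 else 0

/-- A strict overpartition, encoded as a list of (part, overlined?) pairs: the parts are
positive and strictly decreasing, and the `i`-th part may be overlined only if it exceeds
the next part by at least 2 or it is the last part. -/
def IsStrictOverpartition (l : List (ℕ × Bool)) : Prop :=
  (l.map Prod.fst).Pairwise (· > ·) ∧ (∀ x ∈ l, 0 < x.1) ∧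
  ∀ i, i < l.length → (l.getD i (0, false)).2 = true →
    (i + 1 = l.length ∨ (l.getD (i + 1) (0, false)).1 + 2 ≤ (l.getD i (0, false)).1)

namespace SchmidtOverpartition

open Finset

lemma countP_eq_sum_range_getD {X : Type*} (p : X → Bool) (l : List X) (d : X) :
    l.countP p = ∑ i ∈ range l.length, if p (l.getD i d) then 1 else 0 := by
  induction l with
  | nil => simp
  | cons a l ih =>
    rw [List.countP_cons, List.length_cons, sum_range_succ', ih]
    simp only [List.getD_cons_succ, List.getD_cons_zero]

lemma sum_eq_sum_range_getD (l : List ℕ) : l.sum = ∑ i ∈ range l.length, l.getD i 0 := by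
  induction l with
  | nil => simp
  | cons a l ih => simp [sum_range_succ', ih, add_comm]

lemma card_filter_mod_eq_zero (k m : ℕ) : #{i ∈ range (m + 1) | i % k = 0} = m / k + 1 := by
  induction m with
  | zero => simp [filter_singleton]
  | succ m ih =>
    rw [range_add_one, filter_insert, Nat.succ_div, add_right_comm, ← ih]
    by_cases hdvd : k ∣ m + 1
    · rw [if_pos (Nat.mod_eq_zero_of_dvd hdvd), if_pos hdvd, card_insert_of_notMem (by simp)]
    · rw [if_neg (fun h => hdvd (Nat.dvd_of_mod_eq_zero h)), if_neg hdvd, add_zero]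

def part (l : List (ℕ × Bool)) (m : ℕ) : ℕ := (l.getD m (0, false)).1

def diffCode (l : List (ℕ × Bool)) (m : ℕ) : ℕ × Bool :=
  (part l m - part l (m + 1), (l.getD m (0, false)).2)

def ofDiffCode (L : ℕ) (f : ℕ → ℕ × Bool) : List (ℕ × Bool) :=
  List.ofFn fun j : Fin L => (∑ m ∈ Ico (j : ℕ) L, (f m).1, (f j).2)

lemma part_of_length_le {l : List (ℕ × Bool)} {m : ℕ} (h : l.length ≤ m) : part l m = 0 := by
  rw [part, List.getD_eq_default _ _ h]

lemma part_of_lt_length {l : List (ℕ × Bool)} {m : ℕ} (h : m < l.length) :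
    part l m = l[m].1 := by
  rw [part, List.getD_eq_getElem _ _ h]

lemma diffCode_snd {l : List (ℕ × Bool)} {m : ℕ} (h : m < l.length) :
    (diffCode l m).2 = l[m].2 := by
  rw [diffCode, List.getD_eq_getElem _ _ h]

lemma pairwise_gt_and_pos_iff (l : List (ℕ × Bool)) :
    ((l.map Prod.fst).Pairwise (· > ·) ∧ ∀ x ∈ l, 0 < x.1) ↔
      ∀ j < l.length, part l (j + 1) < part l j := by
  rw [← List.isChain_iff_pairwise, List.isChain_iff_getElem]
  constructor
  · rintro ⟨hchain, hpos⟩ j hj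
    rcases lt_or_ge (j + 1) l.length with h | h
    · simpa [part_of_lt_length, h, hj] using hchain j (by simpa using h)
    · simpa [part_of_length_le h, part_of_lt_length hj] using hpos _ (List.getElem_mem hj)
  · intro h
    refine ⟨fun j hj => ?_, fun x hx => ?_⟩
    · simp only [List.length_map] at hj
      simpa [part_of_lt_length, hj, (by omega : j < l.length)] using h j (by omega)
    · obtain ⟨j, hj, rfl⟩ := List.getElem_of_mem hx
      have := h j hj
      rw [part_of_lt_length hj] at this
      omega

lemma isStrictOverpartition_iff (l : List (ℕ × Bool)) :
    IsStrictOverpartition l ↔ ∀ j < l.length, 1 ≤ (diffCode l j).1 ∧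
      ((diffCode l j).2 = true → j + 1 = l.length ∨ 2 ≤ (diffCode l j).1) := by
  unfold IsStrictOverpartition
  rw [← and_assoc, pairwise_gt_and_pos_iff, ← forall₂_and]
  refine forall₂_congr fun j _ => ?_
  unfold diffCode part
  cases (l.getD j (0, false)).2 <;>
    simp only [Bool.false_eq_true, IsEmpty.forall_iff, and_true, forall_const] <;> omega

@[simp] lemma length_ofDiffCode (L : ℕ) (f : ℕ → ℕ × Bool) : (ofDiffCode L f).length = L :=
  List.length_ofFn

lemma part_ofDiffCode (L : ℕ) (f : ℕ → ℕ × Bool) (j : ℕ) :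
    part (ofDiffCode L f) j = ∑ m ∈ Ico j L, (f m).1 := by
  rcases lt_or_ge j L with hj | hj
  · rw [part_of_lt_length (by simpa using hj)]
    simp [ofDiffCode]
  · rw [part_of_length_le (by simpa using hj), Ico_eq_empty (by omega), sum_empty]

lemma diffCode_ofDiffCode {L j : ℕ} (f : ℕ → ℕ × Bool) (hj : j < L) :
    diffCode (ofDiffCode L f) j = f j := by
  rw [diffCode, part_ofDiffCode, part_ofDiffCode, sum_eq_sum_Ico_succ_bot hj, Nat.add_sub_cancel,
    List.getD_eq_getElem _ _ (by simpa using hj)]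
  simp [ofDiffCode]

lemma ofDiffCode_congr {L : ℕ} {f g : ℕ → ℕ × Bool} (h : ∀ m < L, f m = g m) :
    ofDiffCode L f = ofDiffCode L g := by
  unfold ofDiffCode
  congr 1
  funext j
  rw [h j j.isLt, sum_congr rfl fun m hm => by rw [h m (mem_Ico.1 hm).2]]

lemma sum_Ico_diffCode {l : List (ℕ × Bool)} (hl : IsStrictOverpartition l) (j : ℕ) :
    ∑ m ∈ Ico j l.length, (diffCode l m).1 = part l j := by
  induction h : l.length - j generalizing j with
  | zero => rw [Ico_eq_empty (by omega), sum_empty, part_of_length_le (by omega)]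
  | succ n ih =>
    have hj : j < l.length := by omega
    have hgap := ((isStrictOverpartition_iff l).1 hl j hj).1
    rw [sum_eq_sum_Ico_succ_bot hj, ih (j + 1) (by omega)]
    simp only [diffCode] at hgap ⊢
    omega

lemma ofDiffCode_diffCode {l : List (ℕ × Bool)} (hl : IsStrictOverpartition l) :
    ofDiffCode l.length (diffCode l) = l := by
  refine List.ext_getElem (by simp) fun j hj hj' => ?_
  simp only [ofDiffCode, List.getElem_ofFn]
  rw [sum_Ico_diffCode hl, part_of_lt_length hj', diffCode_snd hj']

lemma eq_of_diffCode_eq {l l' : List (ℕ × Bool)} (hl : IsStrictOverpartition l)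
    (hl' : IsStrictOverpartition l') (hlen : l.length = l'.length)
    (h : ∀ m < l.length, diffCode l m = diffCode l' m) : l = l' := by
  rw [← ofDiffCode_diffCode hl, ← ofDiffCode_diffCode hl', ← hlen]
  exact ofDiffCode_congr h

lemma isStrictOverpartition_and_two_le_iff (l : List (ℕ × Bool)) (c : Prop) :
    (IsStrictOverpartition l ∧ (¬c → ∀ x ∈ l, x.2 = true → 2 ≤ x.1)) ↔
      ∀ j < l.length, 1 ≤ (diffCode l j).1 ∧
        ((diffCode l j).2 = true → c ∧ j + 1 = l.length ∨ 2 ≤ (diffCode l j).1) := by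
  rw [isStrictOverpartition_iff]
  constructor
  · rintro ⟨hl, htwo⟩ j hj
    refine ⟨(hl j hj).1, fun hb => ?_⟩
    rcases (hl j hj).2 hb with hlast | hgap
    · by_cases hc : c
      · exact Or.inl ⟨hc, hlast⟩
      · have hpart := htwo hc l[j] (List.getElem_mem hj) (by rwa [diffCode_snd hj] at hb)
        simpa [diffCode, part_of_length_le hlast.ge, part_of_lt_length hj] using Or.inr hpart
    · exact Or.inr hgap
  · intro h
    refine ⟨fun j hj => ⟨(h j hj).1, fun hb => ((h j hj).2 hb).imp And.right id⟩,
      fun hc x hx hb => ?_⟩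
    obtain ⟨j, hj, rfl⟩ := List.getElem_of_mem hx
    have hgap := ((h j hj).2 (by rwa [diffCode_snd hj])).resolve_left fun h => hc h.1
    have hle : (diffCode l j).1 ≤ l[j].1 := by simp [diffCode, part_of_lt_length hj]
    omega

lemma schmidtSum_eq_sum_diffCode (k : ℕ) {l : List (ℕ × Bool)} (hl : IsStrictOverpartition l) :
    schmidtSum k (l.map Prod.fst) = ∑ m ∈ range l.length, (m / k + 1) * (diffCode l m).1 := by
  have hpart (i : ℕ) : (l.map Prod.fst).getD i 0 = ∑ m ∈ Ico i l.length, (diffCode l m).1 := by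
    rw [sum_Ico_diffCode hl]
    exact List.getD_map l (0, false) Prod.fst
  calc schmidtSum k (l.map Prod.fst)
      = ∑ i ∈ Ico 0 l.length, ∑ m ∈ Ico i l.length,
          if i % k = 0 then (diffCode l m).1 else 0 := by
        rw [schmidtSum, List.length_map, range_eq_Ico]
        refine sum_congr rfl fun i _ => ?_
        split_ifs <;> simp only [hpart, sum_const_zero]
    _ = ∑ m ∈ range l.length, #{i ∈ range (m + 1) | i % k = 0} * (diffCode l m).1 := by
        rw [sum_Ico_Ico_comm, range_eq_Ico]
        refine sum_congr rfl fun m _ => ?_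
        rw [← sum_filter, sum_const, smul_eq_mul, range_eq_Ico]
    _ = _ := by simp only [card_filter_mod_eq_zero]

lemma sum_map_fst_eq_sum_diffCode {l : List (ℕ × Bool)} (hl : IsStrictOverpartition l) :
    (l.map Prod.fst).sum = ∑ m ∈ range l.length, (m + 1) * (diffCode l m).1 := by
  have hschmidt := schmidtSum_eq_sum_diffCode 1 hl
  simp only [schmidtSum, Nat.mod_one, if_true, Nat.div_one, List.length_map] at hschmidt
  rw [sum_eq_sum_range_getD, List.length_map, hschmidt]

lemma add_mul_mod_of_lt {i j k : ℕ} (hi : i < k) : (i + j * k) % k = i := by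
  rw [Nat.add_mul_mod_self_right, Nat.mod_eq_of_lt hi]

lemma add_mul_div_of_lt {i j k : ℕ} (hi : i < k) : (i + j * k) / k = j := by
  rw [Nat.add_mul_div_right _ _ (by omega), Nat.div_eq_of_lt hi, zero_add]

def rowLength (q r i : ℕ) : ℕ := if i < r then q + 1 else q

variable {k q r : ℕ}

lemma add_mul_lt_iff {i j : ℕ} (hi : i < k) (hrk : r ≤ k) :
    i + j * k < q * k + r ↔ j < rowLength q r i := by
  unfold rowLength
  split_ifs with hir
  · rw [Nat.lt_succ_iff]
    constructor
    · intro h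
      by_contra! hqj
      have : (q + 1) * k ≤ j * k := by gcongr; omega
      linarith
    · intro h
      have : j * k ≤ q * k := by gcongr
      linarith
  · constructor
    · intro h
      by_contra! hqj
      have : q * k ≤ j * k := by gcongr
      linarith
    · intro h
      have : (j + 1) * k ≤ q * k := by gcongr; omega
      linarith

lemma lt_iff_div_lt_rowLength (hk : 0 < k) (hrk : r ≤ k) (m : ℕ) :
    m < q * k + r ↔ m / k < rowLength q r (m % k) := by
  conv_lhs => rw [← Nat.mod_add_div' m k]
  exact add_mul_lt_iff (Nat.mod_lt m hk) hrk

lemma forall_lt_iff_forall_rowLength (hk : 0 < k) (hrk : r ≤ k) {P : ℕ → Prop} :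
    (∀ m < q * k + r, P m) ↔ ∀ i : Fin k, ∀ j < rowLength q r i, P (i + j * k) := by
  refine ⟨fun h i j hj => h _ ((add_mul_lt_iff i.isLt hrk).2 hj), fun h m hm => ?_⟩
  simpa only [Nat.mod_add_div'] using
    h ⟨m % k, Nat.mod_lt m hk⟩ (m / k) ((lt_iff_div_lt_rowLength hk hrk m).1 hm)

lemma sum_range_eq_sum_rowLength {M : Type*} [AddCommMonoid M] (hk : 0 < k) (hrk : r ≤ k)
    (g : ℕ → M) :
    ∑ m ∈ range (q * k + r), g m = ∑ i : Fin k, ∑ j ∈ range (rowLength q r i), g (i + j * k) := by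
  rw [sum_sigma']
  refine sum_nbij' (fun m => ⟨⟨m % k, Nat.mod_lt m hk⟩, m / k⟩) (fun p => p.1 + p.2 * k)
    (fun m hm => ?_) (fun p hp => ?_) (fun m _ => Nat.mod_add_div' m k) (fun p _ => ?_)
    (fun m _ => by simp only [Nat.mod_add_div'])
  · simpa using (lt_iff_div_lt_rowLength hk hrk m).1 (by simpa using hm)
  · simpa using (add_mul_lt_iff p.1.isLt hrk).2 (by simpa using hp)
  · ext
    · exact add_mul_mod_of_lt p.1.isLt
    · exact heq_of_eq (add_mul_div_of_lt p.1.isLt)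

lemma add_mul_add_one_eq_iff {i j : ℕ} (hi : i < k) (hr : 1 ≤ r) (hrk : r ≤ k) :
    i + j * k + 1 = q * k + r ↔ i + 1 = r ∧ j = q := by
  obtain ⟨r, rfl⟩ := Nat.exists_eq_add_of_le' hr
  refine ⟨fun h => ?_, fun ⟨hir, hjq⟩ => by rw [← hir, hjq]; ring⟩
  have h' : i + j * k = r + q * k := by linarith
  have hmod := congrArg (· % k) h'
  have hdiv := congrArg (· / k) h'
  simp only [add_mul_mod_of_lt hi, add_mul_mod_of_lt (by omega : r < k)] at hmod
  simp only [add_mul_div_of_lt hi, add_mul_div_of_lt (by omega : r < k)] at hdiv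
  omega

structure IsInterleaving (q r : ℕ) (α : Fin k → List (ℕ × Bool)) (l : List (ℕ × Bool)) :
    Prop where
  length_eq : l.length = q * k + r
  length_row (i : Fin k) : (α i).length = rowLength q r i
  diffCode_eq (i : Fin k) {j : ℕ} (hj : j < rowLength q r i) :
    diffCode l (i + j * k) = diffCode (α i) j

def interleave (hk : 0 < k) (q r : ℕ) (α : Fin k → List (ℕ × Bool)) : List (ℕ × Bool) :=
  ofDiffCode (q * k + r) fun m => diffCode (α ⟨m % k, Nat.mod_lt m hk⟩) (m / k)

def deinterleave (k q r : ℕ) (l : List (ℕ × Bool)) (i : Fin k) : List (ℕ × Bool) :=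
  ofDiffCode (rowLength q r i) fun j => diffCode l (i + j * k)

lemma isInterleaving_interleave (hk : 0 < k) (hrk : r ≤ k) {α : Fin k → List (ℕ × Bool)}
    (hα : ∀ i, (α i).length = rowLength q r i) : IsInterleaving q r α (interleave hk q r α) where
  length_eq := length_ofDiffCode _ _
  length_row := hα
  diffCode_eq i j hj := by
    rw [interleave, diffCode_ofDiffCode _ ((add_mul_lt_iff i.isLt hrk).2 hj)]
    simp only [add_mul_mod_of_lt i.isLt, add_mul_div_of_lt i.isLt]

lemma isInterleaving_deinterleave {l : List (ℕ × Bool)} (hl : l.length = q * k + r) :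
    IsInterleaving q r (deinterleave k q r l) l where
  length_eq := hl
  length_row _ := length_ofDiffCode _ _
  diffCode_eq _ _ hj := by rw [deinterleave, diffCode_ofDiffCode _ hj]

namespace IsInterleaving

variable {α β : Fin k → List (ℕ × Bool)} {l l' : List (ℕ × Bool)}

lemma countP_eq (h : IsInterleaving q r α l) (hk : 0 < k) (hrk : r ≤ k) :
    l.countP (fun x => x.2) = ∑ i, (α i).countP (fun x => x.2) := by
  have hcount (l : List (ℕ × Bool)) :
      l.countP (fun x => x.2) = ∑ m ∈ range l.length, if (diffCode l m).2 then 1 else 0 :=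
    countP_eq_sum_range_getD _ l (0, false)
  rw [hcount, h.length_eq, sum_range_eq_sum_rowLength hk hrk]
  refine sum_congr rfl fun i _ => ?_
  rw [hcount, h.length_row]
  exact sum_congr rfl fun j hj => by rw [h.diffCode_eq i (mem_range.1 hj)]

lemma schmidtSum_eq (h : IsInterleaving q r α l) (hk : 0 < k) (hrk : r ≤ k)
    (hl : IsStrictOverpartition l) (hα : ∀ i, IsStrictOverpartition (α i)) :
    schmidtSum k (l.map Prod.fst) = ∑ i, ((α i).map Prod.fst).sum := by
  rw [schmidtSum_eq_sum_diffCode k hl, h.length_eq, sum_range_eq_sum_rowLength hk hrk]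
  refine sum_congr rfl fun i _ => ?_
  rw [sum_map_fst_eq_sum_diffCode (hα i), h.length_row]
  refine sum_congr rfl fun j hj => ?_
  rw [h.diffCode_eq i (mem_range.1 hj), add_mul_div_of_lt i.isLt]

lemma isStrictOverpartition_iff (h : IsInterleaving q r α l) (hk : 0 < k) (hr : 1 ≤ r)
    (hrk : r ≤ k) :
    IsStrictOverpartition l ↔ ∀ i : Fin k, IsStrictOverpartition (α i) ∧
      ((i : ℕ) ≠ r - 1 → ∀ x ∈ α i, x.2 = true → 2 ≤ x.1) := by
  rw [SchmidtOverpartition.isStrictOverpartition_iff, h.length_eq,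
    forall_lt_iff_forall_rowLength hk hrk]
  refine forall_congr' fun i => Iff.trans ?_
    (isStrictOverpartition_and_two_le_iff (α i) ((i : ℕ) = r - 1)).symm
  rw [h.length_row]
  refine forall₂_congr fun j hj => ?_
  have hlast : (i : ℕ) + 1 = r ∧ j = q ↔ (i : ℕ) = r - 1 ∧ j + 1 = rowLength q r i := by
    unfold rowLength
    split_ifs <;> omega
  rw [h.diffCode_eq i hj, add_mul_add_one_eq_iff i.isLt hr hrk, hlast]

lemma tuple_unique (h : IsInterleaving q r α l) (h' : IsInterleaving q r β l)
    (hα : ∀ i, IsStrictOverpartition (α i)) (hβ : ∀ i, IsStrictOverpartition (β i)) :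
    α = β :=
  funext fun i => eq_of_diffCode_eq (hα i) (hβ i) (by rw [h.length_row, h'.length_row])
    fun j hj => by
      rw [h.length_row] at hj
      rw [← h.diffCode_eq i hj, h'.diffCode_eq i hj]

lemma list_unique (h : IsInterleaving q r α l) (h' : IsInterleaving q r α l') (hk : 0 < k)
    (hrk : r ≤ k) (hl : IsStrictOverpartition l) (hl' : IsStrictOverpartition l') : l = l' := by
  refine eq_of_diffCode_eq hl hl' (by rw [h.length_eq, h'.length_eq]) ?_
  rw [h.length_eq, forall_lt_iff_forall_rowLength hk hrk]
  exact fun i j hj => by rw [h.diffCode_eq i hj, h'.diffCode_eq i hj]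

end IsInterleaving

lemma forall_length_eq_rowLength_iff {α : Fin k → List (ℕ × Bool)} :
    (∀ i, (α i).length = rowLength q r i) ↔
      (∀ i : Fin k, i.val < r → (α i).length = q + 1) ∧
        ∀ i : Fin k, r ≤ i.val → (α i).length = q := by
  refine ⟨fun h => ⟨fun i hi => by rw [h, rowLength, if_pos hi],
    fun i hi => by rw [h, rowLength, if_neg (by omega)]⟩, fun ⟨hlt, hge⟩ i => ?_⟩
  unfold rowLength
  split_ifs with hi
  exacts [hlt i hi, hge i (by omega)]

end SchmidtOverpartition

open SchmidtOverpartition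

theorem schmidt_k_overpartition_general (n k t r s : ℕ) (ht : 1 ≤ t) (hr1 : 1 ≤ r) (hrk : r ≤ k) :
    Nat.card {α : Fin k → List (ℕ × Bool) //
        (∀ i, IsStrictOverpartition (α i)) ∧
        (∀ i : Fin k, i.val < r → (α i).length = t) ∧
        (∀ i : Fin k, r ≤ i.val → (α i).length = t - 1) ∧
        (∀ i : Fin k, i.val ≠ r - 1 → ∀ x ∈ α i, x.2 = true → 2 ≤ x.1) ∧
        (∑ i, (α i).countP (fun x => x.2)) = s ∧
        ∑ i, ((α i).map Prod.fst).sum = n} =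
      Nat.card {l : List (ℕ × Bool) //
        IsStrictOverpartition l ∧ schmidtSum k (l.map Prod.fst) = n ∧
        l.length = (t - 1) * k + r ∧ l.countP (fun x => x.2) = s} := by
  obtain ⟨q, rfl⟩ := Nat.exists_eq_add_of_le' ht
  have hk : 0 < k := by omega
  simp only [Nat.add_sub_cancel]
  refine Nat.card_eq_of_bijective (fun α => ⟨interleave hk q r α.1, ?_⟩) ⟨?_, ?_⟩
  · obtain ⟨α, hα, hlt, hge, htwo, hs, hn⟩ := α
    have h := isInterleaving_interleave hk hrk (forall_length_eq_rowLength_iff.2 ⟨hlt, hge⟩)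
    have hl := (h.isStrictOverpartition_iff hk hr1 hrk).2 fun i => ⟨hα i, htwo i⟩
    exact ⟨hl, (h.schmidtSum_eq hk hrk hl hα).trans hn, h.length_eq, (h.countP_eq hk hrk).trans hs⟩
  · rintro ⟨α, hα, hlt, hge, _⟩ ⟨β, hβ, hlt', hge', _⟩ hαβ
    have h := isInterleaving_interleave hk hrk (forall_length_eq_rowLength_iff.2 ⟨hlt, hge⟩)
    have h' := isInterleaving_interleave hk hrk (forall_length_eq_rowLength_iff.2 ⟨hlt', hge'⟩)
    rw [Subtype.mk.injEq] at hαβ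
    exact Subtype.ext (h.tuple_unique (hαβ ▸ h') hα hβ)
  · rintro ⟨l, hl, hn, hlen, hs⟩
    have h := isInterleaving_deinterleave hlen
    obtain ⟨hα, htwo⟩ := forall_and.1 ((h.isStrictOverpartition_iff hk hr1 hrk).1 hl)
    obtain ⟨hlt, hge⟩ := forall_length_eq_rowLength_iff.1 h.length_row
    refine ⟨⟨deinterleave k q r l, hα, hlt, hge, htwo,
      (h.countP_eq hk hrk).symm.trans hs, (h.schmidtSum_eq hk hrk hl hα).symm.trans hn⟩,
      Subtype.ext ?_⟩
    have h' := isInterleaving_interleave hk hrk h.length_row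
    have hl' := (h'.isStrictOverpartition_iff hk hr1 hrk).2 fun i => ⟨hα i, htwo i⟩
    exact h'.list_unique h hk hrk hl' hl

/-- Schmidt `k`-overpartition theorem: `k`-tuples of strict overpartitions of total
weight `n` with `s` overlined parts in total, the first `r` of length `t` and the
remaining of length `t - 1`, every overlined part of `αⁱ` being at least 2 for `i ≠ r`,
are equinumerous with Schmidt `k`-overpartitions of `n` with `(t-1)k + r` parts, exactly
`s` of which are overlined. -/
theorem schmidt_k_overpartition (n k t r s : ℕ) (hn : 1 ≤ n) (hk : 1 ≤ k) (ht : 1 ≤ t)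
    (hs : 1 ≤ s) (hr1 : 1 ≤ r) (hrk : r ≤ k) :
    Nat.card {α : Fin k → List (ℕ × Bool) //
        (∀ i, IsStrictOverpartition (α i)) ∧
        (∀ i : Fin k, i.val < r → (α i).length = t) ∧
        (∀ i : Fin k, r ≤ i.val → (α i).length = t - 1) ∧
        (∀ i : Fin k, i.val ≠ r - 1 → ∀ x ∈ α i, x.2 = true → 2 ≤ x.1) ∧
        (∑ i, (α i).countP (fun x => x.2)) = s ∧
        ∑ i, ((α i).map Prod.fst).sum = n} =
      Nat.card {l : List (ℕ × Bool) //
        IsStrictOverpartition l ∧ schmidtSum k (l.map Prod.fst) = n ∧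
        l.length = (t - 1) * k + r ∧ l.countP (fun x => x.2) = s} :=
  schmidt_k_overpartition_general n k t r s ht hr1 hrk
end

section
/- The number of overpartitions of n with exactly s overlined parts and Durfee square of side t equals the number of Schmidt 2-overpartitions of n with exactly s overlined parts and length 2t or 2t−1. -/
/-- The Durfee square of the partition `l` has side `t`: `t` is the largest integer such
that `l` has at least `t` parts of size at least `t`. -/
def HasDurfeeSide (l : List ℕ) (t : ℕ) : Prop :=
  (t ≤ l.length ∧ ∀ i < t, t ≤ l.getD i 0) ∧
  ¬ (t + 1 ≤ l.length ∧ ∀ i < t + 1, t + 1 ≤ l.getD i 0)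

namespace SchmidtDurfee

open Finset

lemma sum_Ico_sub_succ_of_antitone {f : ℕ → ℕ} (hf : Antitone f) {i j : ℕ} (h : i ≤ j) :
    ∑ k ∈ Ico i j, (f k - f (k + 1)) = f i - f j := by
  induction j, h using Nat.le_induction with
  | base => simp
  | succ j hij ih =>
    rw [sum_Ico_succ_top hij, ih]
    have := hf hij
    have := hf (show j ≤ j + 1 by omega)
    omega

lemma eq_zero_of_antitone {f : ℕ → ℕ} (hf : Antitone f) {t i : ℕ} (ht : f t = 0)
    (hi : t ≤ i) : f i = 0 :=
  Nat.eq_zero_of_le_zero (ht ▸ hf hi)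

lemma sum_range_two_mul (f : ℕ → ℕ) (t : ℕ) :
    ∑ k ∈ range (2 * t), f k =
      ∑ i ∈ range t, f (2 * i) + ∑ i ∈ range t, f (2 * i + 1) := by
  induction t with
  | zero => simp
  | succ t ih =>
    rw [show 2 * (t + 1) = 2 * t + 1 + 1 by ring, sum_range_succ, sum_range_succ, ih,
      sum_range_succ, sum_range_succ]
    ring

lemma sum_range_staircase (t : ℕ) : ∑ i ∈ range t, (2 * t - 1 - 2 * i) = t ^ 2 := by
  induction t with
  | zero => simp
  | succ t ih =>
    have hshift : ∀ i ∈ range t, 2 * (t + 1) - 1 - 2 * (i + 1) = 2 * t - 1 - 2 * i :=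
      fun i _ => by omega
    rw [sum_range_succ', sum_congr rfl hshift, ih]
    have : (t + 1) ^ 2 = t ^ 2 + 2 * t + 1 := by ring
    omega

lemma card_filter_range_add (p : ℕ → Prop) [DecidablePred p] (n n' : ℕ) :
    #{k ∈ range (n + n') | p k} =
      #{k ∈ range n | p k} + #{k ∈ range n' | p (n + k)} := by
  simp only [card_filter, sum_range_add]

lemma card_fiber_eq_of_equiv {α β : Type*} {P Q : α → Prop} (e : {x // P x ∧ Q x} ≃ β)
    {u v : α → ℕ} {u' v' : β → ℕ} (hu : ∀ x, u' (e x) = u x.1)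
    (hv : ∀ x, v' (e x) = v x.1) (n s : ℕ) :
    Nat.card {x // P x ∧ u x = n ∧ v x = s ∧ Q x} =
      Nat.card {y // u' y = n ∧ v' y = s} := by
  let regroup : {x // P x ∧ u x = n ∧ v x = s ∧ Q x} ≃
      {x : {x // P x ∧ Q x} // u x.1 = n ∧ v x.1 = s} :=
    { toFun x := ⟨⟨x.1, x.2.1, x.2.2.2.2⟩, x.2.2.1, x.2.2.2.1⟩
      invFun x := ⟨x.1.1, x.1.2.1, x.2.1, x.2.2, x.1.2.2⟩
      left_inv _ := rfl
      right_inv _ := rfl }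
  exact Nat.card_congr (regroup.trans (e.subtypeEquiv fun x => by rw [hu, hv]))

section Interleave

variable {t : ℕ} {a b c : ℕ → ℕ}

/-- `interleave a b = (a 0 + b 0, a 1 + b 0, a 1 + b 1, a 2 + b 1, …)`. -/
def interleave (a b : ℕ → ℕ) (j : ℕ) : ℕ := a ((j + 1) / 2) + b (j / 2)

lemma interleave_two_mul (i : ℕ) : interleave a b (2 * i) = a i + b i := by
  simp only [interleave]
  congr 2 <;> omega

lemma interleave_two_mul_add_one (i : ℕ) : interleave a b (2 * i + 1) = a (i + 1) + b i := by
  simp only [interleave]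
  congr 2 <;> omega

lemma interleave_two_mul_sub_one (hat : a t = 0) :
    interleave a b (2 * t - 1) = b (t - 1) := by
  rcases Nat.eq_zero_or_pos t with rfl | ht
  · simp [interleave, hat]
  · rw [show 2 * t - 1 = 2 * (t - 1) + 1 by omega, interleave_two_mul_add_one,
      Nat.sub_add_cancel ht, hat, zero_add]

lemma antitone_interleave (ha : Antitone a) (hb : Antitone b) : Antitone (interleave a b) :=
  fun _ _ h => add_le_add (ha (Nat.div_le_div_right (by omega))) (hb (Nat.div_le_div_right h))

def evenDrops (t : ℕ) (c : ℕ → ℕ) (i : ℕ) : ℕ :=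
  ∑ k ∈ Ico i t, (c (2 * k) - c (2 * k + 1))

def oddDrops (t : ℕ) (c : ℕ → ℕ) : ℕ → ℕ := evenDrops t fun j => c (j + 1)

lemma antitone_evenDrops : Antitone (evenDrops t c) := fun _ _ h =>
  sum_le_sum_of_subset (Ico_subset_Ico_left h)

lemma evenDrops_of_le {i : ℕ} (h : t ≤ i) : evenDrops t c i = 0 := by
  rw [evenDrops, Ico_eq_empty_of_le h, sum_empty]

lemma oddDrops_of_le {i : ℕ} (h : t ≤ i) : oddDrops t c i = 0 := evenDrops_of_le h

lemma evenDrops_interleave (ha : Antitone a) (hat : a t = 0) :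
    evenDrops t (interleave a b) = a := by
  funext i
  rcases le_total i t with hi | hi
  · have hdrop : ∀ k, interleave a b (2 * k) - interleave a b (2 * k + 1) = a k - a (k + 1) :=
      fun k => by rw [interleave_two_mul, interleave_two_mul_add_one, Nat.add_sub_add_right]
    rw [evenDrops, sum_congr rfl fun k _ => hdrop k, sum_Ico_sub_succ_of_antitone ha hi, hat,
      Nat.sub_zero]
  · rw [evenDrops_of_le hi, eq_zero_of_antitone ha hat hi]

lemma oddDrops_interleave (hb : Antitone b) (hbt : b t = 0) :
    oddDrops t (interleave a b) = b := by
  funext i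
  rcases le_total i t with hi | hi
  · have hdrop : ∀ k, interleave a b (2 * k + 1) - interleave a b (2 * k + 1 + 1) =
        b k - b (k + 1) := fun k => by
      rw [show 2 * k + 1 + 1 = 2 * (k + 1) by ring, interleave_two_mul,
        interleave_two_mul_add_one, Nat.add_sub_add_left]
    rw [oddDrops, evenDrops, sum_congr rfl fun k _ => hdrop k,
      sum_Ico_sub_succ_of_antitone hb hi, hbt, Nat.sub_zero]
  · rw [oddDrops_of_le hi, eq_zero_of_antitone hb hbt hi]

lemma evenDrops_add_oddDrops (hc : Antitone c) (hct : c (2 * t) = 0) (i : ℕ) :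
    evenDrops t c i + oddDrops t c i = c (2 * i) := by
  rcases le_total i t with hi | hi
  · have hdrop : ∀ k, (c (2 * k) - c (2 * k + 1)) + (c (2 * k + 1) - c (2 * k + 1 + 1)) =
        c (2 * k) - c (2 * (k + 1)) := fun k => by
      have := hc (show 2 * k ≤ 2 * k + 1 by omega)
      have := hc (show 2 * k + 1 ≤ 2 * k + 1 + 1 by omega)
      rw [show 2 * (k + 1) = 2 * k + 1 + 1 by ring]
      omega
    rw [oddDrops, evenDrops, evenDrops, ← sum_add_distrib, sum_congr rfl fun k _ => hdrop k,
      sum_Ico_sub_succ_of_antitone (f := fun k => c (2 * k))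
        (hc.comp_monotone fun _ _ h => by omega) hi,
      hct, Nat.sub_zero]
  · rw [evenDrops_of_le hi, oddDrops_of_le hi, eq_zero_of_antitone hc hct (by omega)]

lemma interleave_evenDrops_oddDrops (hc : Antitone c) (hct : c (2 * t) = 0) :
    interleave (evenDrops t c) (oddDrops t c) = c := by
  funext j
  obtain ⟨i, rfl | rfl⟩ := Nat.even_or_odd' j
  · rw [interleave_two_mul, evenDrops_add_oddDrops hc hct]
  · rw [interleave_two_mul_add_one]
    rcases lt_or_ge i t with hi | hi
    · have hsucc := evenDrops_add_oddDrops hc hct (i + 1)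
      have hstep : oddDrops t c i =
          (c (2 * i + 1) - c (2 * i + 1 + 1)) + oddDrops t c (i + 1) :=
        sum_eq_sum_Ico_succ_bot hi _
      have := hc (show 2 * i + 1 ≤ 2 * (i + 1) by omega)
      rw [show 2 * i + 1 + 1 = 2 * (i + 1) by ring] at hstep
      omega
    · rw [evenDrops_of_le (by omega), oddDrops_of_le hi,
        eq_zero_of_antitone hc hct (by omega)]

end Interleave

section Conjugate

/-- If `f` lists the rows of a Young diagram with `N` rows, `conj N f` lists its columns. -/
def conj (N : ℕ) (f : ℕ → ℕ) (k : ℕ) : ℕ := #{i ∈ range N | k < f i}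

variable {N M : ℕ} {f : ℕ → ℕ}

lemma conj_le (k : ℕ) : conj N f k ≤ N :=
  (card_filter_le _ _).trans (card_range N).le

lemma antitone_conj : Antitone (conj N f) := fun _ _ h =>
  card_le_card (monotone_filter_right _ fun _ _ hi => h.trans_lt hi)

lemma conj_eq_zero {k : ℕ} (h : ∀ i < N, f i ≤ k) : conj N f k = 0 := by
  simpa [conj, filter_eq_empty_iff] using h

lemma conj_zero_of_pos (h : ∀ i < N, 0 < f i) : conj N f 0 = N := by
  rw [conj, filter_true_of_mem (by simpa using h), card_range]

lemma lt_conj_iff (hf : Antitone f) {j k : ℕ} (hj : j < N) : j < conj N f k ↔ k < f j := by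
  constructor
  · intro h
    by_contra hk
    have hsub : {i ∈ range N | k < f i} ⊆ range j := fun i hi => by
      simp only [mem_filter, mem_range] at hi ⊢
      by_contra hij
      exact hk (hi.2.trans_le (hf (not_lt.1 hij)))
    exact (card_le_card hsub).not_gt (by simpa [conj] using h)
  · intro hk
    have hsub : range (j + 1) ⊆ {i ∈ range N | k < f i} := fun i hi => by
      simp only [mem_filter, mem_range] at hi ⊢
      exact ⟨by omega, hk.trans_le (hf (by omega))⟩
    simpa [conj] using card_le_card hsub

lemma conj_conj (hf : Antitone f) (hN : f N = 0) (hM : f 0 ≤ M) : conj M (conj N f) = f := by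
  funext j
  rcases lt_or_ge j N with hj | hj
  · have hfilter : {k ∈ range M | j < conj N f k} = range (f j) := by
      ext k
      simp only [mem_filter, mem_range, lt_conj_iff hf hj]
      have := hf (Nat.zero_le j)
      omega
    rw [conj, hfilter, card_range]
  · have hfj : f j = 0 := Nat.eq_zero_of_le_zero (hN ▸ hf hj)
    exact hfj ▸ conj_eq_zero fun k _ => (conj_le k).trans hj

lemma conj_apply_sub_one (hf : Antitone f) {j : ℕ} (hj : j < N) (hstep : f (j + 1) < f j) :
    conj N f (f j - 1) = j + 1 := by
  have hge : j < conj N f (f j - 1) := (lt_conj_iff hf hj).2 (by omega)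
  have hle : ¬ j + 1 < conj N f (f j - 1) := by
    rcases lt_or_ge (j + 1) N with hj' | hj'
    · rw [lt_conj_iff hf hj']
      omega
    · exact (conj_le _).trans hj' |>.not_gt
  omega

lemma apply_conj_sub_one (hf : Antitone f) {k : ℕ} (hstep : conj N f (k + 1) < conj N f k) :
    f (conj N f k - 1) = k + 1 := by
  have hj : conj N f k - 1 < N := by have := conj_le (N := N) (f := f) k; omega
  have h1 := (lt_conj_iff hf hj (k := k)).1 (by omega)
  have h2 := mt (lt_conj_iff hf hj (k := k + 1)).2 (by omega)
  omega

lemma sum_conj (h : ∀ i < N, f i ≤ M) :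
    ∑ k ∈ range M, conj N f k = ∑ i ∈ range N, f i := by
  simp only [conj, card_filter]
  rw [sum_comm]
  refine sum_congr rfl fun i hi => ?_
  rw [← card_filter]
  convert card_range (f i) using 2
  ext k
  have := h i (mem_range.1 hi)
  simp only [mem_filter, mem_range]
  omega

/-- Marks on the steps of `f` (the outer corners of its diagram) moved to the same corners,
seen as steps of `conj N f`. -/
def conjMark (N : ℕ) (f : ℕ → ℕ) (m : ℕ → Bool) (k : ℕ) : Bool :=
  if conj N f (k + 1) < conj N f k then m (conj N f k - 1) else false

lemma conj_lt_of_conjMark {m : ℕ → Bool} {k : ℕ} (h : conjMark N f m k) :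
    conj N f (k + 1) < conj N f k := by
  unfold conjMark at h
  split_ifs at h with hk
  exact hk

variable {m : ℕ → Bool}

lemma conjMark_apply_sub_one (hf : Antitone f) {j : ℕ} (hj : j < N) (hstep : f (j + 1) < f j) :
    conjMark N f m (f j - 1) = m j := by
  have h1 := conj_apply_sub_one hf hj hstep
  have h2 : ¬ j < conj N f (f j) := by rw [lt_conj_iff hf hj]; exact lt_irrefl _
  rw [conjMark, show f j - 1 + 1 = f j by omega, h1, if_pos (by omega), Nat.add_sub_cancel]

lemma conjMark_conjMark (hf : Antitone f) (hN : f N = 0) (hM : f 0 ≤ M)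
    (hm : ∀ j, m j → f (j + 1) < f j) : conjMark M (conj N f) (conjMark N f m) = m := by
  funext j
  rw [conjMark, conj_conj hf hN hM]
  split_ifs with hstep
  · have hj : j < N := by
      by_contra hj
      have := hf (not_lt.1 hj)
      omega
    exact conjMark_apply_sub_one hf hj hstep
  · exact (Bool.not_eq_true _ ▸ mt (hm j) hstep).symm

lemma card_conjMark (hf : Antitone f) (hN : f N = 0) (hM : f 0 ≤ M)
    (hm : ∀ j, m j → f (j + 1) < f j) :
    #{k ∈ range M | conjMark N f m k} = #{j ∈ range N | m j} := by
  have hjN : ∀ j, m j → j < N := fun j hj => by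
    by_contra h
    have := hf (not_lt.1 h)
    have := hm j hj
    omega
  refine card_bij' (fun k _ => conj N f k - 1) (fun j _ => f j - 1) ?_ ?_ ?_ ?_
  · intro k hk
    simp only [mem_filter, mem_range] at hk ⊢
    have hstep := conj_lt_of_conjMark hk.2
    have := conj_le (N := N) (f := f) k
    refine ⟨by omega, ?_⟩
    unfold conjMark at hk
    rw [if_pos hstep] at hk
    exact hk.2
  · intro j hj
    simp only [mem_filter, mem_range] at hj ⊢
    have hstep := hm j hj.2
    have := hf (Nat.zero_le j)
    exact ⟨by omega, (conjMark_apply_sub_one hf hj.1 hstep).trans hj.2⟩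
  · intro k hk
    simp only [mem_filter] at hk
    rw [apply_conj_sub_one hf (conj_lt_of_conjMark hk.2), Nat.add_sub_cancel]
  · intro j hj
    simp only [mem_filter] at hj
    rw [conj_apply_sub_one hf (hjN j hj.2) (hm j hj.2), Nat.add_sub_cancel]

end Conjugate

section Lists

/-- Past the end of `l` the parts are `0`, so that `l` is weakly decreasing with positive parts
exactly when `part l` is antitone and positive below `l.length`. -/
def part (l : List (ℕ × Bool)) (k : ℕ) : ℕ := (l.getD k (0, false)).1

def mark (l : List (ℕ × Bool)) (k : ℕ) : Bool := (l.getD k (0, false)).2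

def ofParts (L : ℕ) (p : ℕ → ℕ) (m : ℕ → Bool) : List (ℕ × Bool) :=
  (List.range L).map fun k => (p k, m k)

variable {l : List (ℕ × Bool)} {L k : ℕ} {p : ℕ → ℕ} {m : ℕ → Bool}

lemma length_ofParts : (ofParts L p m).length = L := by simp [ofParts]

lemma getD_ofParts :
    (ofParts L p m).getD k (0, false) = if k < L then (p k, m k) else (0, false) := by
  split_ifs with hk
  · simp [ofParts, List.getD_eq_getElem?_getD, List.getElem?_range hk]
  · exact List.getD_eq_default _ _ (by simpa [ofParts] using hk)

lemma part_ofParts (hp : ∀ k, L ≤ k → p k = 0) : part (ofParts L p m) = p := by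
  funext k
  rw [part, getD_ofParts]
  split_ifs with hk
  · rfl
  · exact (hp k (not_lt.1 hk)).symm

lemma mark_ofParts (hm : ∀ k, L ≤ k → m k = false) : mark (ofParts L p m) = m := by
  funext k
  rw [mark, getD_ofParts]
  split_ifs with hk
  · rfl
  · exact (hm k (not_lt.1 hk)).symm

lemma ofParts_part_mark (l : List (ℕ × Bool)) : ofParts l.length (part l) (mark l) = l := by
  refine List.ext_getElem length_ofParts fun k _ hk => ?_
  simp [ofParts, part, mark, List.getElem?_eq_getElem hk]

lemma part_eq_getElem (h : k < l.length) : part l k = l[k].1 := by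
  rw [part, List.getD_eq_getElem _ _ h]

lemma part_eq_zero (h : l.length ≤ k) : part l k = 0 := by
  rw [part, List.getD_eq_default _ _ h]

lemma lt_length_of_mark (h : mark l k) : k < l.length := by
  by_contra hk
  rw [mark, List.getD_eq_default _ _ (not_lt.1 hk)] at h
  exact Bool.false_ne_true h

lemma getD_map_fst : (l.map Prod.fst).getD k 0 = part l k :=
  List.getD_map l (0, false) Prod.fst

lemma sum_map_fst_eq_sum_part : (l.map Prod.fst).sum = ∑ k ∈ range l.length, part l k := by
  conv_lhs => rw [← ofParts_part_mark l]
  simp [ofParts, Finset.sum, Finset.range, Multiset.range, Function.comp_def]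

lemma countP_snd_eq_card_mark (hl : l.length ≤ L) :
    l.countP (·.2) = #{k ∈ range L | mark l k} := by
  have hrange : #{k ∈ range L | mark l k} = #{k ∈ range l.length | mark l k} := by
    congr 1
    ext k
    simp only [mem_filter, mem_range]
    exact ⟨fun h => ⟨lt_length_of_mark h.2, h.2⟩, fun h => ⟨h.1.trans_le hl, h.2⟩⟩
  rw [hrange]
  conv_lhs => rw [← ofParts_part_mark l]
  simp [ofParts, Finset.filter, Finset.range, Multiset.range, List.countP_eq_length_filter,
    List.filter_map, Function.comp_def]

lemma pairwise_map_fst_iff {R : ℕ → ℕ → Prop} [Trans R R R] :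
    (l.map Prod.fst).Pairwise R ↔ ∀ k, k + 1 < l.length → R (part l k) (part l (k + 1)) := by
  rw [← List.isChain_iff_pairwise, List.isChain_iff_getElem]
  simp only [List.length_map, List.getElem_map]
  refine forall_congr' fun k => forall_congr' fun hk => ?_
  rw [part_eq_getElem hk, part_eq_getElem (by omega)]

lemma schmidtSum_two_eq {t : ℕ} (hl : l.length ≤ 2 * t) :
    schmidtSum 2 (l.map Prod.fst) = ∑ i ∈ range t, part l (2 * i) := by
  rw [schmidtSum, List.length_map]
  rw [sum_subset (range_subset_range.2 hl) fun j _ hj => by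
    rw [getD_map_fst, part_eq_zero (not_lt.1 (mem_range.not.1 hj)), ite_self]]
  have hodd : ∀ i, ¬ (2 * i + 1) % 2 = 0 := by omega
  simp only [sum_range_two_mul, getD_map_fst, Nat.mul_mod_right, hodd, ↓reduceIte,
    sum_const_zero, add_zero]

lemma forall_mem_pos_iff : (∀ x ∈ l, 0 < x.1) ↔ ∀ k < l.length, 0 < part l k := by
  rw [List.forall_mem_iff_getElem]
  exact forall_congr' fun k => forall_congr' fun hk => by rw [part_eq_getElem hk]

lemma isOverpartition_iff : IsOverpartition l ↔ Antitone (part l) ∧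
    (∀ k < l.length, 0 < part l k) ∧ ∀ k, mark l k → part l (k + 1) < part l k := by
  rw [IsOverpartition, pairwise_map_fst_iff, forall_mem_pos_iff]
  constructor
  · rintro ⟨hanti, hpos, hmark⟩
    refine ⟨antitone_nat_of_succ_le fun k => ?_, hpos, fun k hk => ?_⟩
    · rcases lt_or_ge (k + 1) l.length with h | h
      · exact hanti k h
      · exact (part_eq_zero h).trans_le (Nat.zero_le _)
    · rcases lt_or_ge (k + 1) l.length with h | h
      · exact hmark k h hk
      · rw [part_eq_zero h]
        exact hpos k (lt_length_of_mark hk)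
  · rintro ⟨hanti, hpos, hmark⟩
    exact ⟨fun k _ => hanti k.le_succ, hpos, fun k _ hk => hmark k hk⟩

lemma isStrictOverpartition_iff : IsStrictOverpartition l ↔
    (∀ k < l.length, part l (k + 1) < part l k) ∧
    ∀ k, mark l k → k + 1 = l.length ∨ part l (k + 1) + 2 ≤ part l k := by
  rw [IsStrictOverpartition, pairwise_map_fst_iff, forall_mem_pos_iff]
  constructor
  · rintro ⟨hdec, hpos, hmark⟩
    refine ⟨fun k hk => ?_, fun k hk => hmark k (lt_length_of_mark hk) hk⟩
    rcases lt_or_ge (k + 1) l.length with h | h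
    · exact hdec k h
    · rw [part_eq_zero h]
      exact hpos k hk
  · rintro ⟨hdec, hmark⟩
    exact ⟨fun k hk => hdec k (by omega), fun k hk => (hdec k hk).trans_le' (Nat.zero_le _),
      fun k _ hk => hmark k hk⟩

lemma hasDurfeeSide_iff {t : ℕ} (hl : Antitone (part l)) :
    HasDurfeeSide (l.map Prod.fst) t ↔ (∀ i < t, t ≤ part l i) ∧ part l t ≤ t := by
  simp only [HasDurfeeSide, List.length_map, getD_map_fst]
  constructor
  · rintro ⟨⟨-, hsq⟩, hmax⟩
    refine ⟨hsq, not_lt.1 fun ht => hmax ⟨?_, fun i hi => ht.trans_le (hl (by omega))⟩⟩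
    by_contra hlen
    rw [part_eq_zero (by omega)] at ht
    omega
  · rintro ⟨hsq, ht⟩
    refine ⟨⟨?_, hsq⟩, fun ⟨_, h⟩ => by have := h t (by omega); omega⟩
    by_contra hlen
    have := hsq (t - 1) (by omega)
    rw [part_eq_zero (by omega)] at this
    omega

end Lists

/-- An overpartition with Durfee square of side `t`, cut along the square: `a i` is the length of
row `i` to the right of the square, `b` is the conjugate of the part below the square, and `ma`,
`mb` record the overlines on either side. The last row of the square is followed by a smaller part
iff it sticks out of the square or column `t - 1` below the square is empty. -/
@[ext] structure MarkedPair (t : ℕ) where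
  a : ℕ → ℕ
  b : ℕ → ℕ
  ma : ℕ → Bool
  mb : ℕ → Bool
  antitone_a : Antitone a
  antitone_b : Antitone b
  a_t : a t = 0
  b_t : b t = 0
  ma_spec : ∀ i, ma i → a (i + 1) < a i ∨ i + 1 = t ∧ b i = 0
  mb_spec : ∀ i, mb i → b (i + 1) < b i

namespace MarkedPair

variable {t : ℕ} (m : MarkedPair t)

def weight : ℕ := t ^ 2 + ∑ i ∈ range t, (m.a i + m.b i)

def markCount : ℕ := #{i ∈ range t | m.ma i} + #{i ∈ range t | m.mb i}

variable {m} {i : ℕ}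

lemma a_eq_zero (h : t ≤ i) : m.a i = 0 := eq_zero_of_antitone m.antitone_a m.a_t h

lemma b_eq_zero (h : t ≤ i) : m.b i = 0 := eq_zero_of_antitone m.antitone_b m.b_t h

lemma lt_of_mb (h : m.mb i) : i < t := by
  by_contra hi
  have := m.mb_spec i h
  rw [b_eq_zero (not_lt.1 hi)] at this
  omega

lemma lt_of_ma (h : m.ma i) : i < t := by
  by_contra hi
  rcases m.ma_spec i h with h' | h'
  · rw [a_eq_zero (not_lt.1 hi)] at h'
    omega
  · omega

end MarkedPair

section Overpartition

variable {t : ℕ}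

namespace MarkedPair

variable (m : MarkedPair t)

def overpartitionPart (k : ℕ) : ℕ := if k < t then t + m.a k else conj t m.b (k - t)

def overpartitionMark (k : ℕ) : Bool := if k < t then m.ma k else conjMark t m.b m.mb (k - t)

def toOverpartition : List (ℕ × Bool) :=
  ofParts (t + m.b 0) m.overpartitionPart m.overpartitionMark

variable {m} {k : ℕ}

lemma overpartitionPart_of_lt (hk : k < t) : m.overpartitionPart k = t + m.a k := if_pos hk

lemma overpartitionPart_of_le (hk : t ≤ k) : m.overpartitionPart k = conj t m.b (k - t) :=
  if_neg (not_lt.2 hk)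

lemma overpartitionMark_of_lt (hk : k < t) : m.overpartitionMark k = m.ma k := if_pos hk

lemma overpartitionMark_of_le (hk : t ≤ k) :
    m.overpartitionMark k = conjMark t m.b m.mb (k - t) :=
  if_neg (not_lt.2 hk)

lemma length_toOverpartition : m.toOverpartition.length = t + m.b 0 := length_ofParts

lemma part_toOverpartition : part m.toOverpartition = m.overpartitionPart := by
  refine part_ofParts fun k hk => ?_
  rw [overpartitionPart_of_le (by omega)]
  exact conj_eq_zero fun i _ => (m.antitone_b (Nat.zero_le i)).trans (by omega)

lemma mark_toOverpartition : mark m.toOverpartition = m.overpartitionMark := by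
  refine mark_ofParts fun k hk => ?_
  have hzero : ∀ j, m.b 0 ≤ j → conj t m.b j = 0 := fun j hj =>
    conj_eq_zero fun i _ => (m.antitone_b (Nat.zero_le i)).trans hj
  rw [overpartitionMark_of_le (by omega), conjMark, hzero _ (by omega), hzero _ (by omega),
    if_neg (lt_irrefl 0)]

lemma overpartitionPart_le_of_le (hk : t ≤ k) : m.overpartitionPart k ≤ t :=
  overpartitionPart_of_le hk ▸ conj_le _

lemma antitone_overpartitionPart : Antitone m.overpartitionPart := by
  refine antitone_nat_of_succ_le fun k => ?_
  rcases lt_or_ge (k + 1) t with hk | hk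
  · rw [overpartitionPart_of_lt hk, overpartitionPart_of_lt (by omega)]
    exact Nat.add_le_add_left (m.antitone_a (Nat.le_add_right k 1)) t
  · rcases lt_or_ge k t with hk' | hk'
    · rw [overpartitionPart_of_lt hk']
      exact (overpartitionPart_le_of_le hk).trans (Nat.le_add_right t _)
    · rw [overpartitionPart_of_le hk, overpartitionPart_of_le hk']
      exact antitone_conj (by omega)

lemma overpartitionPart_pos (hk : k < t + m.b 0) : 0 < m.overpartitionPart k := by
  rcases lt_or_ge k t with hkt | hkt
  · rw [overpartitionPart_of_lt hkt]
    omega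
  · have ht : 0 < t := Nat.pos_of_ne_zero fun ht => by
      have := m.b_t
      subst ht
      omega
    rw [overpartitionPart_of_le hkt]
    exact (lt_conj_iff m.antitone_b ht).2 (by omega)

lemma overpartitionPart_succ_lt (hk : m.overpartitionMark k) :
    m.overpartitionPart (k + 1) < m.overpartitionPart k := by
  rcases lt_or_ge k t with hkt | hkt
  · rw [overpartitionMark_of_lt hkt] at hk
    rw [overpartitionPart_of_lt hkt]
    rcases m.ma_spec k hk with hstep | ⟨hkt', hb⟩
    · rcases lt_or_ge (k + 1) t with h | h
      · rw [overpartitionPart_of_lt h]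
        omega
      · have := overpartitionPart_le_of_le (m := m) h
        omega
    · have : ¬ k < conj t m.b 0 := by rw [lt_conj_iff m.antitone_b hkt, hb]; exact lt_irrefl 0
      rw [overpartitionPart_of_le hkt'.ge, hkt', Nat.sub_self]
      omega
  · rw [overpartitionMark_of_le hkt] at hk
    rw [overpartitionPart_of_le hkt, overpartitionPart_of_le (by omega),
      show k + 1 - t = k - t + 1 by omega]
    exact conj_lt_of_conjMark hk

lemma isOverpartition_toOverpartition : IsOverpartition m.toOverpartition := by
  rw [isOverpartition_iff, part_toOverpartition, mark_toOverpartition, length_toOverpartition]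
  exact ⟨antitone_overpartitionPart, fun _ => overpartitionPart_pos,
    fun _ => overpartitionPart_succ_lt⟩

lemma hasDurfeeSide_toOverpartition : HasDurfeeSide (m.toOverpartition.map Prod.fst) t := by
  rw [hasDurfeeSide_iff (part_toOverpartition ▸ antitone_overpartitionPart),
    part_toOverpartition]
  exact ⟨fun i hi => overpartitionPart_of_lt hi ▸ Nat.le_add_right t _,
    overpartitionPart_le_of_le le_rfl⟩

end MarkedPair

variable {l : List (ℕ × Bool)} {k : ℕ}

lemma antitone_part (hO : IsOverpartition l) : Antitone (part l) :=
  (isOverpartition_iff.1 hO).1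

lemma part_pos (hO : IsOverpartition l) (hk : k < l.length) : 0 < part l k :=
  (isOverpartition_iff.1 hO).2.1 k hk

lemma part_succ_lt_of_mark (hO : IsOverpartition l) (hk : mark l k) : part l (k + 1) < part l k :=
  (isOverpartition_iff.1 hO).2.2 k hk

lemma le_length_of_hasDurfeeSide (hD : HasDurfeeSide (l.map Prod.fst) t) : t ≤ l.length :=
  List.length_map (f := Prod.fst) (as := l) ▸ hD.1.1

lemma le_part_of_hasDurfeeSide (hD : HasDurfeeSide (l.map Prod.fst) t) (hk : k < t) :
    t ≤ part l k :=
  getD_map_fst (l := l) ▸ hD.1.2 k hk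

lemma part_le_of_hasDurfeeSide (hO : IsOverpartition l) (hD : HasDurfeeSide (l.map Prod.fst) t) :
    part l t ≤ t :=
  ((hasDurfeeSide_iff (antitone_part hO)).1 hD).2

/-- The parts of `l` below its Durfee square. -/
def leg (t : ℕ) (l : List (ℕ × Bool)) (k : ℕ) : ℕ := part l (t + k)

def legMark (t : ℕ) (l : List (ℕ × Bool)) (k : ℕ) : Bool := mark l (t + k)

lemma antitone_leg (hO : IsOverpartition l) : Antitone (leg t l) := fun _ _ h =>
  antitone_part hO (Nat.add_le_add_left h t)

lemma leg_length_sub : leg t l (l.length - t) = 0 := part_eq_zero (by omega)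

lemma leg_le (hO : IsOverpartition l) (hD : HasDurfeeSide (l.map Prod.fst) t) (k : ℕ) :
    leg t l k ≤ t :=
  (antitone_part hO (Nat.le_add_right t k)).trans (part_le_of_hasDurfeeSide hO hD)

lemma leg_succ_lt_of_legMark (hO : IsOverpartition l) (hk : legMark t l k) :
    leg t l (k + 1) < leg t l k :=
  part_succ_lt_of_mark hO hk

lemma ofOverpartition_ma_spec (hO : IsOverpartition l) (hD : HasDurfeeSide (l.map Prod.fst) t)
    {i : ℕ} (hi : i < t) (hm : mark l i) : part l (i + 1) - t < part l i - t ∨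
      i + 1 = t ∧ conj (l.length - t) (leg t l) i = 0 := by
  have hstep := part_succ_lt_of_mark hO hm
  have hleg := part_le_of_hasDurfeeSide hO hD
  rcases lt_or_ge (i + 1) t with h | h
  · have := le_part_of_hasDurfeeSide hD h
    omega
  · have hit : i + 1 = t := by omega
    rcases lt_or_ge t (part l i) with hlt | hge
    · left
      subst hit
      omega
    · right
      refine ⟨hit, conj_eq_zero fun k _ => ?_⟩
      have := antitone_leg (t := t) hO (Nat.zero_le k)
      simp only [leg, Nat.add_zero] at this ⊢
      subst hit
      omega

def ofOverpartition (l : List (ℕ × Bool)) (hO : IsOverpartition l)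
    (hD : HasDurfeeSide (l.map Prod.fst) t) : MarkedPair t where
  a i := part l i - t
  b := conj (l.length - t) (leg t l)
  ma i := decide (i < t) && mark l i
  mb := conjMark (l.length - t) (leg t l) (legMark t l)
  antitone_a _ _ h := Nat.sub_le_sub_right (antitone_part hO h) t
  antitone_b := antitone_conj
  a_t := Nat.sub_eq_zero_of_le (part_le_of_hasDurfeeSide hO hD)
  b_t := conj_eq_zero fun k _ => leg_le hO hD k
  ma_spec i h := by
    simp only [Bool.and_eq_true, decide_eq_true_eq] at h
    exact ofOverpartition_ma_spec hO hD h.1 h.2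
  mb_spec _ h := conj_lt_of_conjMark h

lemma weight_ofOverpartition (hO : IsOverpartition l) (hD : HasDurfeeSide (l.map Prod.fst) t) :
    (ofOverpartition l hO hD).weight = (l.map Prod.fst).sum := by
  have hsq : ∑ i ∈ range t, part l i = ∑ i ∈ range t, (part l i - t) + t ^ 2 := by
    have hconst : ∑ _i ∈ range t, t = t ^ 2 := by rw [sum_const, card_range, smul_eq_mul, sq]
    rw [← hconst, ← sum_add_distrib]
    exact sum_congr rfl fun i hi => (Nat.sub_add_cancel (le_part_of_hasDurfeeSide hD
      (mem_range.1 hi))).symm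
  have hlegs : ∑ i ∈ range t, conj (l.length - t) (leg t l) i =
      ∑ k ∈ range (l.length - t), part l (t + k) :=
    sum_conj fun k _ => leg_le hO hD k
  rw [sum_map_fst_eq_sum_part, ← Nat.add_sub_cancel' (le_length_of_hasDurfeeSide hD),
    sum_range_add, hsq, ← hlegs, MarkedPair.weight, sum_add_distrib]
  simp only [ofOverpartition]
  ring

lemma markCount_ofOverpartition (hO : IsOverpartition l) (hD : HasDurfeeSide (l.map Prod.fst) t) :
    (ofOverpartition l hO hD).markCount = l.countP (·.2) := by
  have hsq : #{i ∈ range t | (decide (i < t) && mark l i) = true} = #{i ∈ range t | mark l i} :=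
    congrArg card (filter_congr fun i hi => by simp [mem_range.1 hi])
  have hlegs := card_conjMark (M := t) (antitone_leg hO) leg_length_sub (leg_le hO hD 0)
    fun _ => leg_succ_lt_of_legMark hO
  rw [countP_snd_eq_card_mark le_rfl, ← Nat.add_sub_cancel' (le_length_of_hasDurfeeSide hD),
    card_filter_range_add, MarkedPair.markCount]
  exact congrArg₂ (· + ·) hsq hlegs

lemma toOverpartition_ofOverpartition (hO : IsOverpartition l)
    (hD : HasDurfeeSide (l.map Prod.fst) t) : (ofOverpartition l hO hD).toOverpartition = l := by
  have hconj : conj t (conj (l.length - t) (leg t l)) = leg t l :=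
    conj_conj (antitone_leg hO) leg_length_sub (leg_le hO hD 0)
  have hlen : t + (ofOverpartition l hO hD).b 0 = l.length := by
    have : conj (l.length - t) (leg t l) 0 = l.length - t :=
      conj_zero_of_pos fun k hk => part_pos hO (by omega)
    simp only [ofOverpartition, this]
    have := le_length_of_hasDurfeeSide hD
    omega
  have hpart : (ofOverpartition l hO hD).overpartitionPart = part l := by
    funext k
    rcases lt_or_ge k t with hk | hk
    · rw [MarkedPair.overpartitionPart_of_lt hk]
      have := le_part_of_hasDurfeeSide hD hk
      simp only [ofOverpartition]
      omega
    · rw [MarkedPair.overpartitionPart_of_le hk]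
      simp only [ofOverpartition, hconj, leg, Nat.add_sub_cancel' hk]
  have hmark : (ofOverpartition l hO hD).overpartitionMark = mark l := by
    funext k
    rcases lt_or_ge k t with hk | hk
    · rw [MarkedPair.overpartitionMark_of_lt hk]
      simp [ofOverpartition, hk]
    · rw [MarkedPair.overpartitionMark_of_le hk]
      simp only [ofOverpartition]
      rw [conjMark_conjMark (antitone_leg hO) leg_length_sub (leg_le hO hD 0)
        fun _ => leg_succ_lt_of_legMark hO]
      simp only [legMark, Nat.add_sub_cancel' hk]
  rw [MarkedPair.toOverpartition, hlen, hpart, hmark, ofParts_part_mark]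

lemma ofOverpartition_toOverpartition (m : MarkedPair t) (hO : IsOverpartition m.toOverpartition)
    (hD : HasDurfeeSide (m.toOverpartition.map Prod.fst) t) :
    ofOverpartition m.toOverpartition hO hD = m := by
  have hleg : leg t m.toOverpartition = conj t m.b := by
    funext k
    rw [leg, MarkedPair.part_toOverpartition, MarkedPair.overpartitionPart_of_le (by omega),
      Nat.add_sub_cancel_left]
  have hlegMark : legMark t m.toOverpartition = conjMark t m.b m.mb := by
    funext k
    rw [legMark, MarkedPair.mark_toOverpartition, MarkedPair.overpartitionMark_of_le (by omega),
      Nat.add_sub_cancel_left]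
  refine MarkedPair.ext (funext fun i => ?_) ?_ (funext fun i => ?_) ?_
  · simp only [ofOverpartition, MarkedPair.part_toOverpartition]
    rcases lt_or_ge i t with hi | hi
    · rw [MarkedPair.overpartitionPart_of_lt hi, Nat.add_sub_cancel_left]
    · rw [MarkedPair.a_eq_zero hi]
      exact Nat.sub_eq_zero_of_le (MarkedPair.overpartitionPart_le_of_le hi)
  · simp only [ofOverpartition, MarkedPair.length_toOverpartition, Nat.add_sub_cancel_left, hleg,
      conj_conj m.antitone_b m.b_t le_rfl]
  · simp only [ofOverpartition, MarkedPair.mark_toOverpartition]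
    rcases lt_or_ge i t with hi | hi
    · simp [hi, MarkedPair.overpartitionMark_of_lt hi]
    · simp only [show ¬ i < t by omega, decide_false, Bool.false_and]
      exact (Bool.not_eq_true _ ▸ mt MarkedPair.lt_of_ma (by omega)).symm
  · simp only [ofOverpartition, MarkedPair.length_toOverpartition, Nat.add_sub_cancel_left, hleg,
      hlegMark, conjMark_conjMark m.antitone_b m.b_t le_rfl m.mb_spec]

def overpartitionEquiv (t : ℕ) :
    {l : List (ℕ × Bool) // IsOverpartition l ∧ HasDurfeeSide (l.map Prod.fst) t} ≃
      MarkedPair t where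
  toFun x := ofOverpartition x.1 x.2.1 x.2.2
  invFun m := ⟨m.toOverpartition, m.isOverpartition_toOverpartition,
    m.hasDurfeeSide_toOverpartition⟩
  left_inv x := Subtype.ext (toOverpartition_ofOverpartition x.2.1 x.2.2)
  right_inv m := ofOverpartition_toOverpartition m _ _

end Overpartition

section Schmidt

variable {t : ℕ}

namespace MarkedPair

variable (m : MarkedPair t)

def schmidtPart (j : ℕ) : ℕ := interleave m.a m.b j + (2 * t - 1 - j)

def schmidtMark (j : ℕ) : Bool := if j % 2 = 0 then m.ma (j / 2) else m.mb (j / 2)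

def schmidtLength : ℕ := if m.b (t - 1) = 0 then 2 * t - 1 else 2 * t

def toSchmidt : List (ℕ × Bool) := ofParts m.schmidtLength m.schmidtPart m.schmidtMark

variable {m} {i j k : ℕ}

lemma schmidtPart_two_mul : m.schmidtPart (2 * i) = m.a i + m.b i + (2 * t - 1 - 2 * i) := by
  rw [schmidtPart, interleave_two_mul]

lemma schmidtPart_two_mul_add_one :
    m.schmidtPart (2 * i + 1) = m.a (i + 1) + m.b i + (2 * t - 1 - (2 * i + 1)) := by
  rw [schmidtPart, interleave_two_mul_add_one]

lemma schmidtMark_two_mul : m.schmidtMark (2 * i) = m.ma i := by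
  simp [schmidtMark]

lemma schmidtMark_two_mul_add_one : m.schmidtMark (2 * i + 1) = m.mb i := by
  simp [schmidtMark, Nat.add_mod, show (2 * i + 1) / 2 = i by omega]

lemma schmidtLength_le : m.schmidtLength ≤ 2 * t := by
  unfold schmidtLength
  split_ifs <;> omega

lemma schmidtPart_eq_zero (hj : m.schmidtLength ≤ j) : m.schmidtPart j = 0 := by
  rcases le_or_gt (2 * t) j with h2t | h2t
  · rw [schmidtPart, interleave, a_eq_zero (by omega), b_eq_zero (by omega)]
    omega
  · unfold schmidtLength at hj
    split_ifs at hj with hb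
    · rw [show j = 2 * t - 1 by omega, schmidtPart, interleave_two_mul_sub_one m.a_t, hb]
      omega
    · omega

lemma schmidtMark_eq_false (hj : m.schmidtLength ≤ j) : m.schmidtMark j = false := by
  obtain ⟨i, rfl | rfl⟩ := Nat.even_or_odd' j
  · rw [schmidtMark_two_mul]
    by_contra h
    have := lt_of_ma (Bool.not_eq_false _ ▸ h)
    have := schmidtLength_le (m := m)
    unfold schmidtLength at hj
    split_ifs at hj <;> omega
  · rw [schmidtMark_two_mul_add_one]
    by_contra h
    have hstep := m.mb_spec i (Bool.not_eq_false _ ▸ h)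
    have := lt_of_mb (Bool.not_eq_false _ ▸ h)
    unfold schmidtLength at hj
    split_ifs at hj with hb
    · rw [show i = t - 1 by omega, hb] at hstep
      omega
    · omega

lemma length_toSchmidt : m.toSchmidt.length = m.schmidtLength := length_ofParts

lemma part_toSchmidt : part m.toSchmidt = m.schmidtPart :=
  part_ofParts fun _ => schmidtPart_eq_zero

lemma mark_toSchmidt : mark m.toSchmidt = m.schmidtMark :=
  mark_ofParts fun _ => schmidtMark_eq_false

lemma length_toSchmidt_eq : m.toSchmidt.length = 2 * t ∨ m.toSchmidt.length = 2 * t - 1 := by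
  rw [length_toSchmidt, schmidtLength]
  split_ifs <;> simp

lemma schmidtPart_succ_lt (hk : k < m.schmidtLength) : m.schmidtPart (k + 1) < m.schmidtPart k := by
  rcases lt_or_ge (k + 1) (2 * t) with h | h
  · have := antitone_interleave m.antitone_a m.antitone_b (Nat.le_add_right k 1)
    simp only [schmidtPart]
    omega
  · have hb : m.b (t - 1) ≠ 0 := fun hb => by
      rw [schmidtLength, if_pos hb] at hk
      omega
    rw [schmidtPart_eq_zero (schmidtLength_le.trans (by omega)), schmidtPart,
      show k = 2 * t - 1 by have := schmidtLength_le (m := m); omega,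
      interleave_two_mul_sub_one m.a_t]
    omega

lemma schmidtPart_gap_of_mark (hk : m.schmidtMark k) :
    k + 1 = m.schmidtLength ∨ m.schmidtPart (k + 1) + 2 ≤ m.schmidtPart k := by
  obtain ⟨i, rfl | rfl⟩ := Nat.even_or_odd' k
  · rw [schmidtMark_two_mul] at hk
    have hi := lt_of_ma hk
    rcases m.ma_spec i hk with hstep | ⟨hit, hb⟩
    · right
      rw [schmidtPart_two_mul, schmidtPart_two_mul_add_one]
      omega
    · left
      rw [schmidtLength, if_pos (by rw [show t - 1 = i by omega]; exact hb)]
      omega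
  · rw [schmidtMark_two_mul_add_one] at hk
    have hi := lt_of_mb hk
    have hstep := m.mb_spec i hk
    rcases lt_or_ge (i + 1) t with hit | hit
    · right
      rw [show 2 * i + 1 + 1 = 2 * (i + 1) by ring, schmidtPart_two_mul,
        schmidtPart_two_mul_add_one]
      omega
    · left
      have hb : m.b (t - 1) ≠ 0 := by
        rw [show t - 1 = i by omega]
        rw [show i + 1 = t by omega, m.b_t] at hstep
        omega
      rw [schmidtLength, if_neg hb]
      omega

lemma isStrictOverpartition_toSchmidt : IsStrictOverpartition m.toSchmidt := by
  rw [isStrictOverpartition_iff, part_toSchmidt, mark_toSchmidt, length_toSchmidt]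
  exact ⟨fun _ => schmidtPart_succ_lt, fun _ => schmidtPart_gap_of_mark⟩

lemma weight_eq_schmidtSum : m.weight = schmidtSum 2 (m.toSchmidt.map Prod.fst) := by
  rw [schmidtSum_two_eq (length_toSchmidt ▸ schmidtLength_le), part_toSchmidt, weight]
  simp only [schmidtPart_two_mul, sum_add_distrib, sum_range_staircase]
  ring

lemma markCount_eq_countP : m.markCount = m.toSchmidt.countP (·.2) := by
  rw [countP_snd_eq_card_mark (length_toSchmidt ▸ schmidtLength_le), card_filter,
    sum_range_two_mul, markCount, card_filter, card_filter, mark_toSchmidt]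
  simp only [schmidtMark_two_mul, schmidtMark_two_mul_add_one]

end MarkedPair

variable {l : List (ℕ × Bool)} {j : ℕ}

/-- The excess of the parts of `l` over the staircase `2t - 1, 2t - 2, …, 1, 0`. -/
def excess (t : ℕ) (l : List (ℕ × Bool)) (j : ℕ) : ℕ := part l j - (2 * t - 1 - j)

lemma length_sub_le_part (hS : IsStrictOverpartition l) (hj : j ≤ l.length) :
    l.length - j ≤ part l j := by
  induction hj using Nat.decreasingInduction with
  | self => omega
  | of_succ j hj ih =>
    have := (isStrictOverpartition_iff.1 hS).1 j hj
    omega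

lemma part_eq_excess_add (hS : IsStrictOverpartition l) (hL : 2 * t - 1 ≤ l.length)
    (hj : j < l.length) : part l j = excess t l j + (2 * t - 1 - j) := by
  have := length_sub_le_part hS hj.le
  rw [excess]
  omega

lemma antitone_excess (hS : IsStrictOverpartition l) (hL : 2 * t - 1 ≤ l.length) :
    Antitone (excess t l) := by
  refine antitone_nat_of_succ_le fun j => ?_
  rcases lt_or_ge (j + 1) l.length with hj | hj
  · have := (isStrictOverpartition_iff.1 hS).1 j (by omega)
    have := part_eq_excess_add hS hL hj
    have := part_eq_excess_add hS hL (show j < l.length by omega)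
    omega
  · rw [excess, part_eq_zero hj, Nat.zero_sub]
    exact Nat.zero_le _

lemma excess_two_mul (hL : l.length ≤ 2 * t) : excess t l (2 * t) = 0 := by
  rw [excess, part_eq_zero hL, Nat.zero_sub]

lemma excess_eq_interleave (hS : IsStrictOverpartition l)
    (hL : l.length = 2 * t ∨ l.length = 2 * t - 1) :
    excess t l = interleave (evenDrops t (excess t l)) (oddDrops t (excess t l)) :=
  (interleave_evenDrops_oddDrops (antitone_excess hS (by omega)) (excess_two_mul (by omega))).symm

lemma ofSchmidt_ma_spec (hS : IsStrictOverpartition l)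
    (hL : l.length = 2 * t ∨ l.length = 2 * t - 1) {i : ℕ} (h : mark l (2 * i)) :
    evenDrops t (excess t l) (i + 1) < evenDrops t (excess t l) i ∨
      i + 1 = t ∧ oddDrops t (excess t l) i = 0 := by
  have heven := congrFun (excess_eq_interleave hS hL) (2 * i)
  have hodd := congrFun (excess_eq_interleave hS hL) (2 * i + 1)
  rw [interleave_two_mul] at heven
  rw [interleave_two_mul_add_one] at hodd
  have hi := lt_length_of_mark h
  rcases lt_or_ge (2 * i + 1) l.length with hi' | hi'
  · have hgap := ((isStrictOverpartition_iff.1 hS).2 (2 * i) h).resolve_left (by omega)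
    have hL' : 2 * t - 1 ≤ l.length := by omega
    have := part_eq_excess_add hS hL' hi
    have := part_eq_excess_add hS hL' hi'
    omega
  · rw [excess, part_eq_zero hi', Nat.zero_sub] at hodd
    omega

lemma ofSchmidt_mb_spec (hS : IsStrictOverpartition l)
    (hL : l.length = 2 * t ∨ l.length = 2 * t - 1) {i : ℕ} (h : mark l (2 * i + 1)) :
    oddDrops t (excess t l) (i + 1) < oddDrops t (excess t l) i := by
  have hodd := congrFun (excess_eq_interleave hS hL) (2 * i + 1)
  have hnext := congrFun (excess_eq_interleave hS hL) (2 * (i + 1))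
  rw [interleave_two_mul_add_one] at hodd
  rw [interleave_two_mul] at hnext
  have hi := lt_length_of_mark h
  have hpos := (isStrictOverpartition_iff.1 hS).1 (2 * i + 1) hi
  rcases lt_or_ge (2 * i + 2) l.length with hi' | hi'
  · have hgap := ((isStrictOverpartition_iff.1 hS).2 (2 * i + 1) h).resolve_left (by omega)
    have hL' : 2 * t - 1 ≤ l.length := by omega
    have := part_eq_excess_add hS hL' hi
    have := part_eq_excess_add hS hL' hi'
    rw [show 2 * (i + 1) = 2 * i + 2 by ring] at hnext
    rw [show 2 * i + 1 + 1 = 2 * i + 2 by ring] at hgap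
    omega
  · have hit : i + 1 = t := by omega
    rw [evenDrops_of_le hit.ge, excess] at hodd
    rw [oddDrops_of_le hit.ge]
    omega

def ofSchmidt (l : List (ℕ × Bool)) (hS : IsStrictOverpartition l)
    (hL : l.length = 2 * t ∨ l.length = 2 * t - 1) : MarkedPair t where
  a := evenDrops t (excess t l)
  b := oddDrops t (excess t l)
  ma i := mark l (2 * i)
  mb i := mark l (2 * i + 1)
  antitone_a := antitone_evenDrops
  antitone_b := antitone_evenDrops
  a_t := evenDrops_of_le le_rfl
  b_t := evenDrops_of_le le_rfl
  ma_spec _ h := ofSchmidt_ma_spec hS hL h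
  mb_spec _ h := ofSchmidt_mb_spec hS hL h

lemma ofSchmidt_toSchmidt (m : MarkedPair t) (hS : IsStrictOverpartition m.toSchmidt)
    (hL : m.toSchmidt.length = 2 * t ∨ m.toSchmidt.length = 2 * t - 1) :
    ofSchmidt m.toSchmidt hS hL = m := by
  have hexcess : excess t m.toSchmidt = interleave m.a m.b := by
    funext j
    rw [excess, MarkedPair.part_toSchmidt, MarkedPair.schmidtPart, Nat.add_sub_cancel]
  refine MarkedPair.ext ?_ ?_ (funext fun i => ?_) (funext fun i => ?_)
  · simp only [ofSchmidt, hexcess, evenDrops_interleave m.antitone_a m.a_t]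
  · simp only [ofSchmidt, hexcess, oddDrops_interleave m.antitone_b m.b_t]
  · simp only [ofSchmidt, MarkedPair.mark_toSchmidt, MarkedPair.schmidtMark_two_mul]
  · simp only [ofSchmidt, MarkedPair.mark_toSchmidt, MarkedPair.schmidtMark_two_mul_add_one]

lemma toSchmidt_ofSchmidt (hS : IsStrictOverpartition l)
    (hL : l.length = 2 * t ∨ l.length = 2 * t - 1) : (ofSchmidt l hS hL).toSchmidt = l := by
  set m := ofSchmidt l hS hL
  have hexcess : interleave m.a m.b = excess t l := (excess_eq_interleave hS hL).symm
  have hlen : m.schmidtLength = l.length := by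
    have hb : m.b (t - 1) = part l (2 * t - 1) := by
      rw [← interleave_two_mul_sub_one (b := m.b) m.a_t, hexcess, excess, Nat.sub_self,
        Nat.sub_zero]
    rw [MarkedPair.schmidtLength, hb]
    rcases hL with hL | hL
    · rcases Nat.eq_zero_or_pos t with ht | ht
      · simp [ht, hL]
      · have := (isStrictOverpartition_iff.1 hS).1 (2 * t - 1) (by omega)
        rw [if_neg (by omega), hL]
    · rw [if_pos (part_eq_zero hL.le), hL]
  have hpart : m.schmidtPart = part l := by
    funext j
    rcases lt_or_ge j l.length with hj | hj
    · rw [MarkedPair.schmidtPart, hexcess, part_eq_excess_add hS (t := t) (by omega) hj]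
    · rw [MarkedPair.schmidtPart_eq_zero (hlen ▸ hj), part_eq_zero hj]
  have hmark : m.schmidtMark = mark l := by
    funext j
    obtain ⟨i, rfl | rfl⟩ := Nat.even_or_odd' j
    · exact MarkedPair.schmidtMark_two_mul
    · exact MarkedPair.schmidtMark_two_mul_add_one
  rw [MarkedPair.toSchmidt, hlen, hpart, hmark, ofParts_part_mark]

def schmidtEquiv (t : ℕ) :
    {l : List (ℕ × Bool) //
        IsStrictOverpartition l ∧ (l.length = 2 * t ∨ l.length = 2 * t - 1)} ≃
      MarkedPair t where
  toFun x := ofSchmidt x.1 x.2.1 x.2.2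
  invFun m := ⟨m.toSchmidt, m.isStrictOverpartition_toSchmidt, m.length_toSchmidt_eq⟩
  left_inv x := Subtype.ext (toSchmidt_ofSchmidt x.2.1 x.2.2)
  right_inv m := ofSchmidt_toSchmidt m _ _

end Schmidt

lemma weight_overpartitionEquiv {t : ℕ} (x : {l : List (ℕ × Bool) //
    IsOverpartition l ∧ HasDurfeeSide (l.map Prod.fst) t}) :
    (overpartitionEquiv t x).weight = (x.1.map Prod.fst).sum :=
  weight_ofOverpartition x.2.1 x.2.2

lemma markCount_overpartitionEquiv {t : ℕ} (x : {l : List (ℕ × Bool) //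
    IsOverpartition l ∧ HasDurfeeSide (l.map Prod.fst) t}) :
    (overpartitionEquiv t x).markCount = x.1.countP (·.2) :=
  markCount_ofOverpartition x.2.1 x.2.2

lemma weight_schmidtEquiv {t : ℕ} (x : {l : List (ℕ × Bool) //
    IsStrictOverpartition l ∧ (l.length = 2 * t ∨ l.length = 2 * t - 1)}) :
    (schmidtEquiv t x).weight = schmidtSum 2 (x.1.map Prod.fst) := by
  conv_rhs => rw [← (schmidtEquiv t).symm_apply_apply x]
  exact MarkedPair.weight_eq_schmidtSum

lemma markCount_schmidtEquiv {t : ℕ} (x : {l : List (ℕ × Bool) //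
    IsStrictOverpartition l ∧ (l.length = 2 * t ∨ l.length = 2 * t - 1)}) :
    (schmidtEquiv t x).markCount = x.1.countP (·.2) := by
  conv_rhs => rw [← (schmidtEquiv t).symm_apply_apply x]
  exact MarkedPair.markCount_eq_countP

end SchmidtDurfee

theorem overpartition_durfee_schmidt_two_general (n t s : ℕ) :
    Nat.card {l : List (ℕ × Bool) // IsOverpartition l ∧
        (l.map Prod.fst).sum = n ∧ l.countP (fun x => x.2) = s ∧
        HasDurfeeSide (l.map Prod.fst) t} =
      Nat.card {l : List (ℕ × Bool) // IsStrictOverpartition l ∧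
        schmidtSum 2 (l.map Prod.fst) = n ∧ l.countP (fun x => x.2) = s ∧
        (l.length = 2 * t ∨ l.length = 2 * t - 1)} := by
  open SchmidtDurfee in
  exact (card_fiber_eq_of_equiv (overpartitionEquiv t) weight_overpartitionEquiv
    markCount_overpartitionEquiv n s).trans
    (card_fiber_eq_of_equiv (schmidtEquiv t) weight_schmidtEquiv markCount_schmidtEquiv n s).symm

/-- Overpartitions of `n` with `s` overlined parts and Durfee square of side `t` are
equinumerous with Schmidt 2-overpartitions of `n` with `s` overlined parts and length
`2t` or `2t - 1`. -/
theorem overpartition_durfee_schmidt_two (n t s : ℕ) (ht : 1 ≤ t) :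
    Nat.card {l : List (ℕ × Bool) // IsOverpartition l ∧
        (l.map Prod.fst).sum = n ∧ l.countP (fun x => x.2) = s ∧
        HasDurfeeSide (l.map Prod.fst) t} =
      Nat.card {l : List (ℕ × Bool) // IsStrictOverpartition l ∧
        schmidtSum 2 (l.map Prod.fst) = n ∧ l.countP (fun x => x.2) = s ∧
        (l.length = 2 * t ∨ l.length = 2 * t - 1)} :=
  overpartition_durfee_schmidt_two_general n t s
end

section
/- The number of overpartitions of n with exactly s overlined parts equals the number of Schmidt 2-overpartitions of n with exactly s overlined parts. -/
theorem forall_nat_iff_zero_and_succ {P : ℕ → Prop} : (∀ i, P i) ↔ P 0 ∧ ∀ i, P (i + 1) :=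
  ⟨fun h => ⟨h 0, fun i => h (i + 1)⟩, fun h i => by cases i <;> simp [h.1, h.2]⟩

namespace Overpartition

def leadPart (l : List (ℕ × Bool)) : ℕ := (l.headD (0, false)).1

@[simp] theorem leadPart_nil : leadPart [] = 0 := rfl

@[simp] theorem leadPart_cons (p : ℕ × Bool) (l : List (ℕ × Bool)) : leadPart (p :: l) = p.1 := rfl

theorem isOverpartition_nil : IsOverpartition [] := by simp [IsOverpartition]

theorem isStrictOverpartition_nil : IsStrictOverpartition [] := by simp [IsStrictOverpartition]

theorem isOverpartition_cons {a : ℕ} {o : Bool} {l : List (ℕ × Bool)} :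
    IsOverpartition ((a, o) :: l) ↔
      0 < a ∧ leadPart l ≤ a ∧ (o = true → leadPart l < a) ∧ IsOverpartition l := by
  rw [IsOverpartition, IsOverpartition, forall_nat_iff_zero_and_succ]
  cases l with
  | nil => simp +contextual
  | cons q l =>
    simp only [List.map_cons, List.pairwise_cons, List.forall_mem_cons, List.length_cons,
      List.getD_cons_zero, List.getD_cons_succ, leadPart_cons]
    constructor
    · rintro ⟨⟨⟨hqa, -⟩, hsort⟩, ⟨ha, hpos⟩, hover, hover'⟩
      exact ⟨ha, hqa, hover (by omega), hsort, hpos, fun i hi => hover' i (by omega)⟩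
    · rintro ⟨ha, hqa, hover, ⟨hq, hsort⟩, hpos, hover'⟩
      exact ⟨⟨⟨hqa, fun x hx => (hq x hx).trans hqa⟩, hq, hsort⟩, ⟨ha, hpos⟩,
        fun _ => hover, fun i hi => hover' i (by omega)⟩

theorem isStrictOverpartition_cons {a : ℕ} {o : Bool} {l : List (ℕ × Bool)} :
    IsStrictOverpartition ((a, o) :: l) ↔
      leadPart l < a ∧ (o = true → l ≠ [] → leadPart l + 2 ≤ a) ∧ IsStrictOverpartition l := by
  rw [IsStrictOverpartition, IsStrictOverpartition, forall_nat_iff_zero_and_succ]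
  cases l with
  | nil => simp +contextual
  | cons q l =>
    simp only [List.map_cons, List.pairwise_cons, List.forall_mem_cons, List.length_cons,
      List.getD_cons_zero, List.getD_cons_succ, leadPart_cons]
    constructor
    · rintro ⟨⟨⟨hqa, -⟩, hsort⟩, ⟨-, hpos⟩, hover, hover'⟩
      refine ⟨hqa, fun ho _ => (hover (by omega) ho).resolve_left (by omega), hsort, hpos,
        fun i hi ho => ?_⟩
      simpa using hover' i (by omega) ho
    · rintro ⟨hqa, hover, ⟨hq, hsort⟩, hpos, hover'⟩
      refine ⟨⟨⟨hqa, fun x hx => (hq x hx).trans hqa⟩, hq, hsort⟩, ⟨by omega, hpos⟩,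
        fun _ ho => .inr (hover ho (List.cons_ne_nil _ _)), fun i hi ho => ?_⟩
      simpa using hover' i (by omega) ho

theorem _root_.IsStrictOverpartition.of_cons {p : ℕ × Bool} {l : List (ℕ × Bool)}
    (h : IsStrictOverpartition (p :: l)) : IsStrictOverpartition l :=
  (isStrictOverpartition_cons.1 h).2.2

@[simp] theorem schmidtSum_two_singleton (a : ℕ) : schmidtSum 2 [a] = a := by simp [schmidtSum]

@[simp] theorem schmidtSum_two_cons_cons (a b : ℕ) (l : List ℕ) :
    schmidtSum 2 (a :: b :: l) = a + schmidtSum 2 l := by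
  have hmod : ∀ i, (i + 1 + 1) % 2 = i % 2 := by omega
  simp only [schmidtSum, List.length_cons, Finset.sum_range_succ', List.getD_cons_succ,
    List.getD_cons_zero, hmod]
  simp [Nat.add_comm]

def shift (v : List (ℕ × Bool)) : List (ℕ × Bool) := v.map fun p => (p.1 + 1, p.2)

def onesBlock (k : ℕ) (u : Bool) : List (ℕ × Bool) :=
  List.replicate k (1, false) ++ if u then [(1, true)] else []

@[simp] theorem length_shift (v : List (ℕ × Bool)) : (shift v).length = v.length := by
  simp [shift]

@[simp] theorem sum_shift (v : List (ℕ × Bool)) :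
    ((shift v).map Prod.fst).sum = (v.map Prod.fst).sum + v.length := by
  simp [shift, Function.comp_def, List.sum_map_add]

@[simp] theorem countP_shift (v : List (ℕ × Bool)) :
    (shift v).countP (fun p => p.2) = v.countP (fun p => p.2) := by
  simp [shift, List.countP_map, Function.comp_def]

@[simp] theorem length_onesBlock (k : ℕ) (u : Bool) : (onesBlock k u).length = k + u.toNat := by
  cases u <;> simp [onesBlock]

@[simp] theorem sum_onesBlock (k : ℕ) (u : Bool) :
    ((onesBlock k u).map Prod.fst).sum = k + u.toNat := by
  cases u <;> simp [onesBlock]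

@[simp] theorem countP_onesBlock (k : ℕ) (u : Bool) :
    (onesBlock k u).countP (fun p => p.2) = u.toNat := by
  cases u <;> simp [onesBlock, List.countP_replicate]

theorem onesBlock_injective {k k' : ℕ} {u u' : Bool} (h : onesBlock k u = onesBlock k' u') :
    k = k' ∧ u = u' := by
  have hu : u.toNat = u'.toNat := by simpa using congrArg (List.countP fun p => p.2) h
  have hk : k + u.toNat = k' + u'.toNat := by simpa using congrArg List.length h
  refine ⟨by omega, ?_⟩
  cases u <;> cases u' <;> simp_all

theorem fst_eq_one_of_mem_onesBlock {k : ℕ} {u : Bool} {p : ℕ × Bool} (hp : p ∈ onesBlock k u) :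
    p.1 = 1 := by
  rcases List.mem_append.1 hp with hp | hp
  · rw [List.eq_of_mem_replicate hp]
  · cases u <;> simp_all

theorem leadPart_onesBlock {k : ℕ} {u : Bool} (h : onesBlock k u ≠ []) :
    leadPart (onesBlock k u) = 1 := by
  obtain ⟨p, l, hpl⟩ := List.exists_cons_of_ne_nil h
  rw [hpl, leadPart_cons]
  exact fst_eq_one_of_mem_onesBlock (hpl ▸ List.mem_cons_self)

theorem leadPart_onesBlock_le (k : ℕ) (u : Bool) : leadPart (onesBlock k u) ≤ 1 := by
  rcases eq_or_ne (onesBlock k u) [] with h | h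
  · simp [h]
  · exact (leadPart_onesBlock h).le

theorem leadPart_shift_append_onesBlock {v : List (ℕ × Bool)} {k : ℕ} {u : Bool}
    (h : shift v ++ onesBlock k u ≠ []) : leadPart (shift v ++ onesBlock k u) = leadPart v + 1 := by
  cases v with
  | nil => exact leadPart_onesBlock h
  | cons p v => simp [shift]

theorem leadPart_shift_append_onesBlock_le (v : List (ℕ × Bool)) (k : ℕ) (u : Bool) :
    leadPart (shift v ++ onesBlock k u) ≤ leadPart v + 1 := by
  cases v with
  | nil => exact leadPart_onesBlock_le k u
  | cons p v => simp [shift]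

theorem isOverpartition_onesBlock (k : ℕ) (u : Bool) : IsOverpartition (onesBlock k u) := by
  induction k with
  | zero => cases u <;> simp [onesBlock, isOverpartition_cons, isOverpartition_nil]
  | succ k ih =>
    rw [onesBlock, List.replicate_succ, List.cons_append, isOverpartition_cons]
    exact ⟨Nat.one_pos, leadPart_onesBlock_le k u, nofun, ih⟩

theorem _root_.IsOverpartition.shift_append_onesBlock {v : List (ℕ × Bool)} (hv : IsOverpartition v)
    (k : ℕ) (u : Bool) : IsOverpartition (shift v ++ onesBlock k u) := by
  induction v with
  | nil => exact isOverpartition_onesBlock k u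
  | cons p v ih =>
    obtain ⟨a, o⟩ := p
    obtain ⟨ha, hle, hlt, hv⟩ := isOverpartition_cons.1 hv
    have hlead := leadPart_shift_append_onesBlock_le v k u
    change IsOverpartition ((a + 1, o) :: (shift v ++ onesBlock k u))
    exact isOverpartition_cons.2 ⟨a.succ_pos, by omega, fun ho => by have := hlt ho; omega, ih hv⟩

theorem exists_onesBlock_eq_cons_one {d : Bool} {k : ℕ} {u : Bool}
    (h : IsOverpartition ((1, d) :: onesBlock k u)) :
    ∃ k' u', (1, d) :: onesBlock k u = onesBlock k' u' := by
  cases d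
  · exact ⟨k + 1, u, by simp [onesBlock, List.replicate_succ]⟩
  · have hlt := (isOverpartition_cons.1 h).2.2.1 rfl
    have hnil : onesBlock k u = [] := by
      by_contra hne
      rw [leadPart_onesBlock hne] at hlt
      omega
    have hlen := congrArg List.length hnil
    simp only [length_onesBlock, List.length_nil, Nat.add_eq_zero_iff] at hlen
    obtain ⟨rfl, hu⟩ := hlen
    obtain rfl : u = false := by simpa using hu
    exact ⟨0, true, rfl⟩

theorem _root_.IsOverpartition.exists_eq_shift_append_onesBlock {τ : List (ℕ × Bool)}
    (hτ : IsOverpartition τ) : ∃ v k u, IsOverpartition v ∧ τ = shift v ++ onesBlock k u := by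
  induction τ with
  | nil => exact ⟨[], 0, false, isOverpartition_nil, rfl⟩
  | cons p τ ih =>
    obtain ⟨c, d⟩ := p
    obtain ⟨hc, hle, hlt, hτ'⟩ := isOverpartition_cons.1 hτ
    obtain ⟨v, k, u, hv, rfl⟩ := ih hτ'
    have hlead : v ≠ [] → leadPart (shift v ++ onesBlock k u) = leadPart v + 1 := fun hv0 =>
      leadPart_shift_append_onesBlock (by simp [shift, hv0])
    rcases Nat.lt_or_ge 1 c with hc2 | hc1
    · have hv_le : leadPart v + 1 ≤ c ∧ (d = true → leadPart v + 1 < c) := by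
        rcases eq_or_ne v [] with rfl | hv0
        · exact ⟨hc, fun _ => hc2⟩
        · rw [← hlead hv0]; exact ⟨hle, hlt⟩
      refine ⟨(c - 1, d) :: v, k, u, isOverpartition_cons.2 ⟨by omega, by omega,
        fun hd => by have := hv_le.2 hd; omega, hv⟩, ?_⟩
      show _ = ((c - 1 + 1, d) :: shift v) ++ onesBlock k u
      rw [Nat.sub_add_cancel hc]
      rfl
    · obtain rfl : v = [] := by
        rcases v with _ | ⟨q, v⟩
        · rfl
        · have hq := hlead (List.cons_ne_nil _ _)
          have := hv.2.1 q List.mem_cons_self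
          simp only [leadPart_cons] at hq
          omega
      obtain rfl : c = 1 := by omega
      obtain ⟨k', u', h⟩ := exists_onesBlock_eq_cons_one hτ
      exact ⟨[], k', u', isOverpartition_nil, h⟩

theorem filter_shift_append_onesBlock {v : List (ℕ × Bool)} (hv : ∀ p ∈ v, 0 < p.1) (k : ℕ)
    (u : Bool) : (shift v ++ onesBlock k u).filter (fun p => 2 ≤ p.1) = shift v := by
  rw [List.filter_append, List.filter_eq_self.2, List.filter_eq_nil_iff.2, List.append_nil]
  · intro p hp
    simp [fst_eq_one_of_mem_onesBlock hp]
  · intro p hp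
    obtain ⟨q, hq, rfl⟩ := List.mem_map.1 hp
    simpa [Nat.one_le_iff_ne_zero, Nat.pos_iff_ne_zero] using hv q hq

theorem shift_injective : Function.Injective shift :=
  List.map_injective_iff.2 fun p q h => by
    simp only [Prod.mk.injEq, Nat.add_right_cancel_iff] at h
    exact Prod.ext h.1 h.2

theorem shift_append_onesBlock_inj {v v' : List (ℕ × Bool)} {k k' : ℕ} {u u' : Bool}
    (hv : ∀ p ∈ v, 0 < p.1) (hv' : ∀ p ∈ v', 0 < p.1)
    (h : shift v ++ onesBlock k u = shift v' ++ onesBlock k' u') : v = v' ∧ k = k' ∧ u = u' := by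
  have hshift : shift v = shift v' := by
    rw [← filter_shift_append_onesBlock hv k u, ← filter_shift_append_onesBlock hv' k' u', h]
  obtain rfl := shift_injective hshift
  exact ⟨rfl, onesBlock_injective (List.append_cancel_left h)⟩

-- The truncated subtraction is exact on strict overpartitions, see `ofSchmidt_cons_cons`.
def ofSchmidt : List (ℕ × Bool) → List (ℕ × Bool)
  | [] => []
  | [p] => [p]
  | (x, o) :: (y, u) :: rest =>
    let v := ofSchmidt rest
    (x - y + leadPart v, o) :: (shift v ++ onesBlock (y - leadPart v - v.length - u.toNat) u)

theorem eq_nil_of_ofSchmidt_eq_nil {l : List (ℕ × Bool)} (h : ofSchmidt l = []) :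
    l = [] := by
  rcases l with _ | ⟨_, _ | ⟨_, _⟩⟩
  · rfl
  all_goals simp [ofSchmidt] at h

-- `hrest` is `leadPart_add_length_ofSchmidt` for `rest`: the two are proved by joint recursion.
theorem leadPart_add_length_ofSchmidt_add_le {y : ℕ} {u : Bool} {rest : List (ℕ × Bool)}
    (h : IsStrictOverpartition ((y, u) :: rest))
    (hrest : rest ≠ [] → leadPart (ofSchmidt rest) + (ofSchmidt rest).length =
      leadPart rest + 1) :
    leadPart (ofSchmidt rest) + (ofSchmidt rest).length + u.toNat ≤ y := by
  obtain ⟨hlt, hu, -⟩ := isStrictOverpartition_cons.1 h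
  rcases eq_or_ne rest [] with rfl | hne
  · have := Bool.toNat_le u
    change 0 + 0 + u.toNat ≤ y
    rw [leadPart_nil] at hlt
    omega
  · have := hrest hne
    cases u
    · simp only [Bool.toNat_false]; omega
    · have := hu rfl hne; simp only [Bool.toNat_true]; omega

-- The first part of `l` is the hook length of the corner cell of `ofSchmidt l`.
theorem leadPart_add_length_ofSchmidt :
    ∀ {l : List (ℕ × Bool)}, IsStrictOverpartition l → l ≠ [] →
      leadPart (ofSchmidt l) + (ofSchmidt l).length = leadPart l + 1
  | [_], _, _ => rfl
  | (x, o) :: (y, u) :: rest, h, _ => by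
    have hxy := (isStrictOverpartition_cons.1 h).1
    have := leadPart_add_length_ofSchmidt_add_le h.of_cons
      (leadPart_add_length_ofSchmidt h.of_cons.of_cons)
    simp only [leadPart_cons] at hxy
    simp only [ofSchmidt, leadPart_cons, List.length_cons, List.length_append, length_shift,
      length_onesBlock]
    omega

theorem isStrictOverpartition_cons_of_le {y : ℕ} {u : Bool} {rest : List (ℕ × Bool)}
    (hrest : IsStrictOverpartition rest) (hy : 0 < y)
    (hle : leadPart (ofSchmidt rest) + (ofSchmidt rest).length + u.toNat ≤ y) :
    IsStrictOverpartition ((y, u) :: rest) := by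
  rcases eq_or_ne rest [] with rfl | hne
  · exact isStrictOverpartition_cons.2 ⟨hy, fun _ h => absurd rfl h, hrest⟩
  · have := leadPart_add_length_ofSchmidt hrest hne
    refine isStrictOverpartition_cons.2 ⟨by omega, fun hu _ => ?_, hrest⟩
    subst hu
    simp only [Bool.toNat_true] at hle
    omega

theorem ofSchmidt_cons_cons {x y : ℕ} {o u : Bool} {rest : List (ℕ × Bool)}
    (h : IsStrictOverpartition ((x, o) :: (y, u) :: rest)) :
    ∃ k, y = leadPart (ofSchmidt rest) + (ofSchmidt rest).length + k + u.toNat ∧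
      ofSchmidt ((x, o) :: (y, u) :: rest) = (x - y + leadPart (ofSchmidt rest), o) ::
        (shift (ofSchmidt rest) ++ onesBlock k u) := by
  have := leadPart_add_length_ofSchmidt_add_le h.of_cons
    (leadPart_add_length_ofSchmidt h.of_cons.of_cons)
  exact ⟨_, by omega, rfl⟩

theorem _root_.IsStrictOverpartition.isOverpartition_ofSchmidt :
    ∀ {l : List (ℕ × Bool)}, IsStrictOverpartition l → IsOverpartition (ofSchmidt l)
  | [], _ => isOverpartition_nil
  | [(x, o)], h => by
    have := (isStrictOverpartition_cons.1 h).1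
    exact isOverpartition_cons.2 ⟨this, Nat.zero_le _, fun _ => this, isOverpartition_nil⟩
  | (x, o) :: (y, u) :: rest, h => by
    obtain ⟨k, -, hG⟩ := ofSchmidt_cons_cons h
    obtain ⟨hxy, ho, -⟩ := isStrictOverpartition_cons.1 h
    have hlead := leadPart_shift_append_onesBlock_le (ofSchmidt rest) k u
    simp only [leadPart_cons] at hxy ho
    rw [hG, isOverpartition_cons]
    exact ⟨by omega, by omega, fun hot => by have := ho hot (List.cons_ne_nil _ _); omega,
      h.of_cons.of_cons.isOverpartition_ofSchmidt.shift_append_onesBlock k u⟩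

theorem sum_ofSchmidt :
    ∀ {l : List (ℕ × Bool)}, IsStrictOverpartition l →
      ((ofSchmidt l).map Prod.fst).sum = schmidtSum 2 (l.map Prod.fst)
  | [], _ => rfl
  | [_], _ => by simp [ofSchmidt]
  | (x, o) :: (y, u) :: rest, h => by
    obtain ⟨k, hy, hG⟩ := ofSchmidt_cons_cons h
    have hxy := (isStrictOverpartition_cons.1 h).1
    have ih := sum_ofSchmidt h.of_cons.of_cons
    simp only [leadPart_cons] at hxy
    simp only [hG, List.map_cons, List.map_append, List.sum_cons, List.sum_append, sum_shift,
      sum_onesBlock, schmidtSum_two_cons_cons, ih]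
    omega

theorem countP_ofSchmidt :
    ∀ l : List (ℕ × Bool),
      (ofSchmidt l).countP (fun p => p.2) = l.countP (fun p => p.2)
  | [] => rfl
  | [_] => rfl
  | (x, o) :: (y, u) :: rest => by
    simp only [ofSchmidt, List.countP_cons, List.countP_append, countP_shift,
      countP_onesBlock, countP_ofSchmidt rest]
    cases u <;> simp

theorem ofSchmidt_cons_cons_ne_singleton {x y : ℕ} {o u : Bool} {rest : List (ℕ × Bool)}
    (h : IsStrictOverpartition ((x, o) :: (y, u) :: rest)) (p : ℕ × Bool) :
    ofSchmidt ((x, o) :: (y, u) :: rest) ≠ [p] := by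
  obtain ⟨k, hy, hG⟩ := ofSchmidt_cons_cons h
  have hy0 := (isStrictOverpartition_cons.1 h.of_cons).1
  rw [hG]
  intro hp
  have hlen := congrArg List.length hp
  simp only [List.length_cons, List.length_append, length_shift, length_onesBlock,
    List.length_nil] at hlen
  have hnil : ofSchmidt rest = [] := List.eq_nil_of_length_eq_zero (by omega)
  simp only [hnil, leadPart_nil, List.length_nil] at hy
  omega

theorem ofSchmidt_inj :
    ∀ {l l' : List (ℕ × Bool)}, IsStrictOverpartition l → IsStrictOverpartition l' →
      ofSchmidt l = ofSchmidt l' → l = l'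
  | [], _, _, _, h => (eq_nil_of_ofSchmidt_eq_nil h.symm).symm
  | _, [], _, _, h => eq_nil_of_ofSchmidt_eq_nil h
  | [_], [_], _, _, h => h
  | [p], _ :: _ :: _, _, h', h => absurd h.symm (ofSchmidt_cons_cons_ne_singleton h' p)
  | _ :: _ :: _, [p], h, _, h' => absurd h' (ofSchmidt_cons_cons_ne_singleton h p)
  | (x, o) :: (y, u) :: rest, (x', o') :: (y', u') :: rest', h, h', hG => by
    obtain ⟨k, hy, hG₁⟩ := ofSchmidt_cons_cons h
    obtain ⟨k', hy', hG₂⟩ := ofSchmidt_cons_cons h'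
    have hxy := (isStrictOverpartition_cons.1 h).1
    have hxy' := (isStrictOverpartition_cons.1 h').1
    have hrest := h.of_cons.of_cons
    have hrest' := h'.of_cons.of_cons
    rw [hG₁, hG₂, List.cons.injEq, Prod.mk.injEq] at hG
    obtain ⟨⟨hx, rfl⟩, htail⟩ := hG
    obtain ⟨hv, rfl, rfl⟩ := shift_append_onesBlock_inj hrest.isOverpartition_ofSchmidt.2.1
      hrest'.isOverpartition_ofSchmidt.2.1 htail
    obtain rfl := ofSchmidt_inj hrest hrest' hv
    obtain rfl : y = y' := by omega
    simp only [leadPart_cons] at hxy hxy'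
    obtain rfl : x = x' := by omega
    rfl

theorem exists_ofSchmidt_eq :
    ∀ {μ : List (ℕ × Bool)}, IsOverpartition μ →
      ∃ l, IsStrictOverpartition l ∧ ofSchmidt l = μ
  | [], _ => ⟨[], isStrictOverpartition_nil, rfl⟩
  | (a, o) :: τ, hμ => by
    obtain ⟨ha, hle, hlt, hτ⟩ := isOverpartition_cons.1 hμ
    obtain ⟨v, k, u, hv, hτv⟩ := hτ.exists_eq_shift_append_onesBlock
    have : v.length < ((a, o) :: τ).length := by simp [hτv]
    subst hτv
    rcases eq_or_ne (shift v ++ onesBlock k u) [] with hnil | hne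
    · exact ⟨[(a, o)], isStrictOverpartition_cons.2 ⟨ha, nofun, isStrictOverpartition_nil⟩,
        by rw [hnil]; rfl⟩
    have hlen : 0 < v.length + k + u.toNat := by
      simpa [Nat.add_assoc] using List.length_pos_of_ne_nil hne
    have hlead := leadPart_shift_append_onesBlock hne
    obtain ⟨rest, hrest, rfl⟩ := exists_ofSchmidt_eq hv
    set t := leadPart (ofSchmidt rest)
    set y := t + (ofSchmidt rest).length + k + u.toNat
    have hstrict : IsStrictOverpartition ((a - t + y, o) :: (y, u) :: rest) :=
      isStrictOverpartition_cons.2 ⟨by rw [leadPart_cons]; omega,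
        fun ho _ => by have := hlt ho; rw [leadPart_cons]; omega,
        isStrictOverpartition_cons_of_le hrest (by omega) (by omega)⟩
    obtain ⟨k', hy', hG⟩ := ofSchmidt_cons_cons hstrict
    obtain rfl : k' = k := by omega
    refine ⟨_, hstrict, ?_⟩
    rw [hG]
    congr 2
    omega
termination_by μ => μ.length

end Overpartition

open Overpartition

/-- Overpartitions of `n` with `s` overlined parts are equinumerous with Schmidt
2-overpartitions of `n` with `s` overlined parts. -/
theorem overpartition_schmidt_two (n s : ℕ) :
    Nat.card {l : List (ℕ × Bool) // IsOverpartition l ∧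
        (l.map Prod.fst).sum = n ∧ l.countP (fun x => x.2) = s} =
      Nat.card {l : List (ℕ × Bool) // IsStrictOverpartition l ∧
        schmidtSum 2 (l.map Prod.fst) = n ∧ l.countP (fun x => x.2) = s} := by
  refine (Nat.card_eq_of_bijective
    (fun l => ⟨ofSchmidt l.1, l.2.1.isOverpartition_ofSchmidt,
      (sum_ofSchmidt l.2.1).trans l.2.2.1, (countP_ofSchmidt l.1).trans l.2.2.2⟩)
    ⟨fun l l' h => ?_, fun μ => ?_⟩).symm
  · exact Subtype.ext (ofSchmidt_inj l.2.1 l'.2.1 (congrArg Subtype.val h))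
  · obtain ⟨l, hl, hμ⟩ := exists_ofSchmidt_eq μ.2.1
    refine ⟨⟨l, hl, ?_, ?_⟩, Subtype.ext hμ⟩
    · rw [← sum_ofSchmidt hl, hμ, μ.2.2.1]
    · rw [← countP_ofSchmidt, hμ, μ.2.2.2]
end
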